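/- arXiv:1803.07931 — 7 statements merged into one kernel-verified Lean document; each statement's English description precedes it below -/
import Mathlib

section
/- Let p be an odd prime and n an odd positive integer, and let λ : ℤ/p^nℤ × ℤ/p^nℤ → ℚ/ℤ be a non-degenerate bilinear pairing. Then λ(x,x) = 0 in ℚ/ℤ for every element x of the subgroup of ℤ/p^nℤ of order p^{(n-1)/2}, while λ(x₀,x₀) ≠ 0 in ℚ/ℤ for x₀ the class of p^{(n-1)/2} (a generator of the subgroup of order p^{(n+1)/2}); in particular the associated diagonal map x ↦ λ(x,x) vanishes identically on the subgroup of order p^{(n-1)/2} but not on the subgroup of order p^{(n+1)/2}. -/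
/-- Lemma `linking`: for `p` an odd prime and `n` odd, any non-degenerate bilinear
pairing `λ` on `ℤ/p^nℤ` has associated quadratic form `x ↦ λ(x,x)` vanishing
identically on the subgroup of order `p^((n-1)/2)` (generated by the class of
`p^((n+1)/2)`), but not on the subgroup of order `p^((n+1)/2)` (it is nonzero on
the generator `p^((n-1)/2)`). -/
theorem stmt_0 (p n : ℕ) (hp : p.Prime) (hp2 : p ≠ 2) (hn : Odd n) (hn0 : 0 < n)
    (lam : ZMod (p ^ n) → ZMod (p ^ n) → AddCircle (1 : ℚ))
    (hbl : ∀ x y z : ZMod (p ^ n), lam (x + y) z = lam x z + lam y z)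
    (hbr : ∀ x y z : ZMod (p ^ n), lam x (y + z) = lam x y + lam x z)
    (hnd : ∀ x : ZMod (p ^ n), (∀ y : ZMod (p ^ n), lam x y = 0) → x = 0) :
    (∀ x ∈ AddSubgroup.zmultiples ((p : ZMod (p ^ n)) ^ ((n + 1) / 2)), lam x x = 0) ∧
      lam ((p : ZMod (p ^ n)) ^ ((n - 1) / 2)) ((p : ZMod (p ^ n)) ^ ((n - 1) / 2)) ≠ 0 := by
  obtain ⟨m, rfl⟩ : ∃ m, n = 2 * m + 1 := hn
  have hpn : 1 < p ^ (2 * m + 1) := Nat.one_lt_pow (by omega) hp.one_lt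
  haveI : NeZero (p ^ (2 * m + 1)) := ⟨by omega⟩
  have h0l : ∀ z, lam 0 z = 0 := by
    intro z
    have h := hbl 0 0 z
    rw [add_zero] at h
    exact (left_eq_add.mp h)
  have h0r : ∀ z, lam z 0 = 0 := by
    intro z
    have h := hbr z 0 0
    rw [add_zero] at h
    exact (left_eq_add.mp h)
  have hsl : ∀ (k : ℕ) (x y : ZMod (p ^ (2 * m + 1))), lam (k • x) y = k • lam x y := by
    intro k x y
    induction k with
    | zero => simpa using h0l y
    | succ j ih => rw [succ_nsmul, hbl, ih, succ_nsmul]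
  have hsr : ∀ (k : ℕ) (x y : ZMod (p ^ (2 * m + 1))), lam x (k • y) = k • lam x y := by
    intro k x y
    induction k with
    | zero => simpa using h0r x
    | succ j ih => rw [succ_nsmul, hbr, ih, succ_nsmul]
  have hnegl : ∀ x y : ZMod (p ^ (2 * m + 1)), lam (-x) y = - lam x y := by
    intro x y
    have h := hbl x (-x) y
    rw [add_neg_cancel, h0l] at h
    exact (eq_neg_of_add_eq_zero_right h.symm)
  have hnegr : ∀ x y : ZMod (p ^ (2 * m + 1)), lam x (-y) = - lam x y := by
    intro x y
    have h := hbr x y (-y)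
    rw [add_neg_cancel, h0r] at h
    exact (eq_neg_of_add_eq_zero_right h.symm)
  have hzl : ∀ (k : ℤ) (x y : ZMod (p ^ (2 * m + 1))), lam (k • x) y = k • lam x y := by
    intro k x y
    induction k using Int.rec with
    | ofNat j => simpa [Int.ofNat_eq_natCast, natCast_zsmul] using hsl j x y
    | negSucc j => rw [negSucc_zsmul, hnegl, hsl, ← negSucc_zsmul]
  have hzr : ∀ (k : ℤ) (x y : ZMod (p ^ (2 * m + 1))), lam x (k • y) = k • lam x y := by
    intro k x y
    induction k using Int.rec with
    | ofNat j => simpa [Int.ofNat_eq_natCast, natCast_zsmul] using hsr j x y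
    | negSucc j => rw [negSucc_zsmul, hnegr, hsr, ← negSucc_zsmul]
  have hcast : ∀ a b : ℕ, lam (a : ZMod (p ^ (2 * m + 1))) (b : ZMod (p ^ (2 * m + 1)))
      = (a * b) • lam 1 1 := by
    intro a b
    have ha : (a : ZMod (p ^ (2 * m + 1))) = a • 1 := by simp
    have hb : (b : ZMod (p ^ (2 * m + 1))) = b • 1 := by simp
    rw [ha, hb, hsl, hsr, mul_smul]
  set c : AddCircle (1 : ℚ) := lam 1 1 with hc
  have hcn : (p ^ (2 * m + 1)) • c = 0 := by
    have h := hcast (p ^ (2 * m + 1)) 1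
    rw [ZMod.natCast_self, h0l] at h
    simpa using h.symm
  constructor
  · intro x hx
    obtain ⟨k, rfl⟩ := AddSubgroup.mem_zmultiples_iff.mp hx
    rw [hzl, hzr]
    have he : ((p : ZMod (p ^ (2 * m + 1))) ^ ((2 * m + 1 + 1) / 2))
        = ((p ^ (m + 1) : ℕ) : ZMod (p ^ (2 * m + 1))) := by
      have : (2 * m + 1 + 1) / 2 = m + 1 := by omega
      rw [this]; push_cast; ring
    rw [he, hcast]
    have : p ^ (m + 1) * p ^ (m + 1) = p * p ^ (2 * m + 1) := by ring
    rw [this, mul_smul, hcn, smul_zero, smul_zero, smul_zero]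
  · have he : ((p : ZMod (p ^ (2 * m + 1))) ^ ((2 * m + 1 - 1) / 2))
        = ((p ^ m : ℕ) : ZMod (p ^ (2 * m + 1))) := by
      have : (2 * m + 1 - 1) / 2 = m := by omega
      rw [this]; push_cast; ring
    rw [he, hcast]
    intro hcontra
    have h2m : (p ^ (2 * m)) • c = 0 := by
      have hpp : p ^ m * p ^ m = p ^ (2 * m) := by rw [two_mul, pow_add]
      rwa [hpp] at hcontra
    have hx0 : ((p ^ (2 * m) : ℕ) : ZMod (p ^ (2 * m + 1))) = 0 := by
      apply hnd
      intro y
      have hy : y = ((y.val : ℕ) : ZMod (p ^ (2 * m + 1))) := (ZMod.natCast_rightInverse y).symm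
      rw [hy, hcast, mul_comm, mul_smul, h2m, smul_zero]
    rw [ZMod.natCast_eq_zero_iff] at hx0
    have hle := Nat.le_of_dvd (Nat.pow_pos (n := 2 * m) hp.pos) hx0
    have hlt : p ^ (2 * m) < p ^ (2 * m + 1) := Nat.pow_lt_pow_succ hp.one_lt
    omega
end

section
/- Let p be a prime with p ≡ 3 (mod 4), let n be an odd positive integer, and let m be a positive integer. Let G = (ℤ/p^nℤ)^{2m}, let λ : G × G → ℚ/ℤ be a non-degenerate symmetric bilinear pairing, and let M be a metabolizer for (G, λ). Let f : ℤ/p^nℤ → ℚ be a function with f(0) = 0 and f(-g) = f(g) for all g, and define f^{(2m)} : G → ℚ by f^{(2m)}(g₁,…,g_{2m}) = f(g₁) + ⋯ + f(g_{2m}). Assume λ is compatible with f in the sense that for every (g₁,…,g_{2m}) ∈ G the class of f^{(2m)}(g₁,…,g_{2m}) in ℚ/ℤ equals λ(g₁,g₁) + ⋯ + λ(g_{2m},g_{2m}). If f^{(2m)} vanishes identically on M, then f vanishes identically on the subgroup of ℤ/p^nℤ generated by p^{(n-1)/2} (the subgroup of order p^{(n+1)/2}). -/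
set_option maxHeartbeats 1000000
set_option synthInstance.maxHeartbeats 400000
open scoped Classical

namespace Stmt2Aux

open AddSubgroup

local notation "D" => AddCircle (1 : ℚ)

/-! ### Generic cardinality lemmas -/

lemma card_eq_card_ker_mul_card_range {A B : Type*} [AddCommGroup A] [AddCommGroup B]
    (φ : A →+ B) : Nat.card A = Nat.card φ.ker * Nat.card φ.range := by
  have h1 := AddSubgroup.card_eq_card_quotient_mul_card_addSubgroup φ.ker
  have h2 : Nat.card (A ⧸ φ.ker) = Nat.card φ.range :=
    Nat.card_congr (QuotientAddGroup.quotientKerEquivRange φ).toEquiv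
  rw [h1, h2, mul_comm]

lemma card_sup_mul_card_inf {G : Type*} [AddCommGroup G] (H K : AddSubgroup G) :
    Nat.card ↥(H ⊔ K) * Nat.card ↥(H ⊓ K) = Nat.card ↥H * Nat.card ↥K := by
  classical
  let φ : ↥H × ↥K →+ G :=
    (H.subtype.comp (AddMonoidHom.fst _ _)) + (K.subtype.comp (AddMonoidHom.snd _ _))
  have hφ : ∀ x : ↥H × ↥K, φ x = (x.1 : G) + (x.2 : G) := fun x => rfl
  have hrange : φ.range = H ⊔ K := by
    ext g
    simp only [AddMonoidHom.mem_range, AddSubgroup.mem_sup]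
    constructor
    · rintro ⟨x, rfl⟩
      exact ⟨x.1, x.1.2, x.2, x.2.2, (hφ x).symm⟩
    · rintro ⟨y, hy, z, hz, rfl⟩
      exact ⟨(⟨y, hy⟩, ⟨z, hz⟩), rfl⟩
  have hker : Nat.card φ.ker = Nat.card ↥(H ⊓ K) := by
    apply Nat.card_congr
    have mem1 : ∀ x : ↥φ.ker, ((x : ↥H × ↥K).1 : G) ∈ H ⊓ K := by
      intro x
      have hx : ((x : ↥H × ↥K).1 : G) + ((x : ↥H × ↥K).2 : G) = 0 := x.2
      refine AddSubgroup.mem_inf.mpr ⟨(x : ↥H × ↥K).1.2, ?_⟩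
      have h2 : ((x : ↥H × ↥K).1 : G) = -((x : ↥H × ↥K).2 : G) := eq_neg_of_add_eq_zero_left hx
      rw [h2]
      exact neg_mem (x : ↥H × ↥K).2.2
    refine ⟨fun x => ⟨_, mem1 x⟩, fun y =>
      ⟨(⟨(y : G), (AddSubgroup.mem_inf.mp y.2).1⟩,
        ⟨-(y : G), neg_mem (AddSubgroup.mem_inf.mp y.2).2⟩), add_neg_cancel _⟩, ?_, ?_⟩
    · rintro ⟨⟨a, b⟩, hab⟩
      have hab' : (a : G) + (b : G) = 0 := hab
      have hb : (b : G) = -(a : G) := eq_neg_of_add_eq_zero_right hab'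
      apply Subtype.ext
      apply Prod.ext
      · rfl
      · apply Subtype.ext
        simp [hb]
    · rintro ⟨y, hy⟩
      rfl
  have hcard := card_eq_card_ker_mul_card_range φ
  rw [hker, hrange, Nat.card_prod] at hcard
  rw [mul_comm (Nat.card ↥(H ⊔ K))]
  exact hcard.symm

/-! ### AddCircle basics -/

lemma mkD_eq_mkD_iff {a b : ℚ} : (a : D) = (b : D) ↔ ∃ z : ℤ, (z : ℚ) = a - b := by
  constructor
  · intro h
    have h2 : ((a - b : ℚ) : D) = 0 := by
      rw [QuotientAddGroup.mk_sub, h, sub_self]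
    rw [AddCircle.coe_eq_zero_iff] at h2
    obtain ⟨z, hz⟩ := h2
    exact ⟨z, by simpa using hz⟩
  · rintro ⟨z, hz⟩
    have h2 : ((a - b : ℚ) : D) = 0 := by
      rw [AddCircle.coe_eq_zero_iff]
      exact ⟨z, by simpa using hz⟩
    have h3 : ((a - b : ℚ) : D) = (a : D) - (b : D) := QuotientAddGroup.mk_sub _ _ _
    rw [h3] at h2
    exact sub_eq_zero.mp h2

lemma card_torsion_addCircle (q : ℕ) (hq : q ≠ 0) :
    Nat.card {x : D // (q : ℤ) • x = 0} = q := by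
  have hq' : (0 : ℚ) < q := by exact_mod_cast Nat.pos_of_ne_zero hq
  have key : ∀ z : ℤ, (q : ℤ) • ((((z : ℚ) / q) : ℚ) : D) = 0 := by
    intro z
    rw [← QuotientAddGroup.mk_zsmul, AddCircle.coe_eq_zero_iff]
    refine ⟨z, ?_⟩
    rw [zsmul_eq_mul, zsmul_eq_mul, mul_one]
    field_simp
    simp
  let g : Fin q → {x : D // (q : ℤ) • x = 0} := fun k => ⟨_, key ((k : ℕ) : ℤ)⟩
  have hginj : Function.Injective g := by
    intro a b hab
    have h1 : (((((a : ℕ) : ℤ) : ℚ) / q : ℚ) : D) = (((((b : ℕ) : ℤ) : ℚ) / q : ℚ) : D) :=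
      congrArg Subtype.val hab
    obtain ⟨z, hz⟩ := mkD_eq_mkD_iff.mp h1
    have hz' : (z : ℚ) * q = ((a : ℕ) : ℚ) - ((b : ℕ) : ℚ) := by
      have h3 : (z : ℚ) = (((a : ℕ) : ℚ)) / q - (((b : ℕ) : ℚ)) / q := by
        rw [hz]; push_cast; ring
      field_simp at h3
      linarith
    have ha' : ((a : ℕ) : ℚ) < q := by exact_mod_cast a.2
    have hb' : ((b : ℕ) : ℚ) < q := by exact_mod_cast b.2
    have ha0 : (0 : ℚ) ≤ ((a : ℕ) : ℚ) := by positivity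
    have hb0 : (0 : ℚ) ≤ ((b : ℕ) : ℚ) := by positivity
    have hz0 : z = 0 := by
      by_contra hzne
      rcases lt_or_gt_of_ne hzne with h | h
      · have hle : (z : ℚ) ≤ -1 := by exact_mod_cast (by omega : z ≤ -1)
        nlinarith
      · have hle : (1 : ℚ) ≤ z := by exact_mod_cast (by omega : 1 ≤ z)
        nlinarith
    rw [hz0] at hz'
    have : ((a : ℕ) : ℚ) = ((b : ℕ) : ℚ) := by push_cast at hz' ⊢; linarith
    exact Fin.ext (by exact_mod_cast this)
  have hgsurj : Function.Surjective g := by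
    rintro ⟨x, hx⟩
    obtain ⟨r, rfl⟩ := QuotientAddGroup.mk_surjective x
    rw [← QuotientAddGroup.mk_zsmul, AddCircle.coe_eq_zero_iff] at hx
    obtain ⟨z, hz⟩ := hx
    have hr : r = (z : ℚ) / q := by
      have h3 : (z : ℚ) = (q : ℚ) * r := by
        have h4 := hz
        rw [zsmul_eq_mul, mul_one, zsmul_eq_mul] at h4
        push_cast at h4
        linarith
      field_simp
      linarith
    have hq0 : 0 < (q : ℤ) := by exact_mod_cast Nat.pos_of_ne_zero hq
    have h1 : 0 ≤ z % q := Int.emod_nonneg z (ne_of_gt hq0)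
    have h2 : z % q < q := Int.emod_lt_of_pos z hq0
    refine ⟨⟨(z % q).toNat, by omega⟩, ?_⟩
    apply Subtype.ext
    show ((_ : ℚ) : D) = (r : D)
    rw [hr]
    apply mkD_eq_mkD_iff.mpr
    refine ⟨-(z / q), ?_⟩
    have hcoe : (((((⟨(z % q).toNat, by omega⟩ : Fin q) : ℕ) : ℤ)) : ℚ) = ((z % q : ℤ) : ℚ) := by
      norm_cast
      simp [Int.toNat_of_nonneg h1]
    have hmod : ((z % q : ℤ) : ℚ) = (z : ℚ) - q * ((z / q : ℤ) : ℚ) := by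
      push_cast [Int.emod_def]
      ring
    push_cast [hcoe, hmod]
    field_simp
    ring
  have hb := Nat.card_eq_of_bijective g ⟨hginj, hgsurj⟩
  rw [Nat.card_eq_fintype_card, Fintype.card_fin] at hb
  exact hb.symm

lemma card_hom_zmod (q : ℕ) (hq : q ≠ 0) : Nat.card (ZMod q →+ D) = q := by
  have e2 : {f : ℤ →+ D // f ((q : ℕ) : ℤ) = 0} ≃ {x : D // (q : ℤ) • x = 0} := by
    refine ⟨fun f => ⟨f.1 1, ?_⟩, fun x => ⟨zmultiplesHom D x.1, ?_⟩, ?_, ?_⟩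
    · rw [← AddMonoidHom.map_zsmul]
      have h5 : (q : ℤ) • (1 : ℤ) = ((q : ℕ) : ℤ) := by simp
      rw [h5]
      exact f.2
    · show ((q : ℕ) : ℤ) • x.1 = 0
      exact x.2
    · intro f
      apply Subtype.ext
      apply AddMonoidHom.ext_int
      simp
    · intro x
      apply Subtype.ext
      simp
  have h6 : Nat.card (ZMod q →+ D) = Nat.card {f : ℤ →+ D // f ((q : ℕ) : ℤ) = 0} :=
    Nat.card_congr (ZMod.lift q (A := D)).symm
  rw [h6, Nat.card_congr e2, card_torsion_addCircle q hq]

lemma card_hom_eq (X : Type*) [AddCommGroup X] [Finite X] :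
    Nat.card (X →+ D) = Nat.card X := by
  classical
  obtain ⟨ι, hι, nn, h1, ⟨e⟩⟩ := AddCommGroup.equiv_directSum_zmod_of_finite' X
  have e1 : (X →+ D) ≃ ((DirectSum ι fun i => ZMod (nn i)) →+ D) :=
    { toFun := fun φ => φ.comp e.symm.toAddMonoidHom
      invFun := fun φ => φ.comp e.toAddMonoidHom
      left_inv := fun φ => by ext x; simp
      right_inv := fun φ => by ext x; simp }
  have e2 : ((DirectSum ι fun i => ZMod (nn i)) →+ D) ≃ (∀ i, ZMod (nn i) →+ D) :=
    (DFinsupp.liftAddHom (β := fun i => ZMod (nn i)) (γ := D)).symm.toEquiv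
  have eX : X ≃ (∀ i, ZMod (nn i)) := e.toEquiv.trans DFinsupp.equivFunOnFintype
  rw [Nat.card_congr (e1.trans e2), Nat.card_congr eX, Nat.card_pi, Nat.card_pi]
  refine Finset.prod_congr rfl fun i _ => ?_
  have hne : nn i ≠ 0 := by have := h1 i; omega
  rw [card_hom_zmod (nn i) hne, Nat.card_zmod]

/-! ### Perp subgroups for a nondegenerate pairing -/

section Pairing

variable {G : Type*} [AddCommGroup G] [Finite G]
variable (lam : G → G → D)

def perp (hbr : ∀ x y z, lam x (y + z) = lam x y + lam x z) (H : AddSubgroup G) :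
    AddSubgroup G where
  carrier := {x | ∀ h ∈ H, lam h x = 0}
  zero_mem' := by
    intro h hh
    have h0 : lam h 0 = lam h 0 + lam h 0 := by
      have := hbr h 0 0
      simpa using this
    exact (left_eq_add.mp h0)
  add_mem' := by
    intro a b ha hb h hh
    have := hbr h a b
    rw [ha h hh, hb h hh, add_zero] at this
    exact this
  neg_mem' := by
    intro x hx h hh
    have h0 : lam h 0 = lam h 0 + lam h 0 := by
      have := hbr h 0 0
      simpa using this
    have hz : lam h 0 = 0 := left_eq_add.mp h0
    have := hbr h x (-x)
    rw [add_neg_cancel, hz, hx h hh, zero_add] at this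
    exact this.symm

lemma mem_perp (hbr : ∀ x y z, lam x (y + z) = lam x y + lam x z) (H : AddSubgroup G) (x : G) :
    x ∈ perp lam hbr H ↔ ∀ h ∈ H, lam h x = 0 := Iff.rfl

lemma card_perp
    (hbl : ∀ x y z, lam (x + y) z = lam x z + lam y z)
    (hbr : ∀ x y z, lam x (y + z) = lam x y + lam x z)
    (hsymm : ∀ x y, lam x y = lam y x)
    (hnd : ∀ x, (∀ y, lam x y = 0) → x = 0)
    (H : AddSubgroup G) :
    Nat.card ↥(perp lam hbr H) * Nat.card ↥H = Nat.card G := by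
  classical
  let lamHom : G → (G →+ D) := fun x => AddMonoidHom.mk' (fun y => lam y x)
    (fun a b => hbl a b x)
  let Xi : G →+ (G →+ D) := AddMonoidHom.mk' lamHom (by
    intro a b
    ext y
    exact hbr y a b)
  have XiInj : Function.Injective Xi := by
    apply (injective_iff_map_eq_zero Xi).mpr
    intro x hx
    apply hnd
    intro y
    rw [hsymm]
    exact DFunLike.congr_fun hx y
  have hcards : Nat.card (G →+ D) = Nat.card G := card_hom_eq G
  haveI : Finite (G →+ D) := by
    have hpos : 0 < Nat.card (G →+ D) := by
      rw [hcards]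
      exact Nat.card_pos
    exact (Nat.card_pos_iff.mp hpos).2
  have XiSurj : Function.Surjective Xi := by
    have := (Nat.bijective_iff_injective_and_card Xi).mpr ⟨XiInj, hcards.symm⟩
    exact this.2
  have hres : Function.Surjective (fun φ : G →+ D => φ.comp H.subtype) := by
    intro ψ
    obtain ⟨φ, hφ⟩ := CharacterModule.dual_surjective_of_injective (R := ℤ)
      (H.subtype.toIntLinearMap) (Subtype.coe_injective) ψ
    exact ⟨φ, by
      ext h
      exact DFunLike.congr_fun hφ h⟩
  let Phi : G →+ (↥H →+ D) := AddMonoidHom.mk' (fun x => (Xi x).comp H.subtype) (by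
    intro a b
    ext h
    exact hbr (h : G) a b)
  have PhiSurj : Function.Surjective Phi := by
    intro ψ
    obtain ⟨φ, hφ⟩ := hres ψ
    obtain ⟨x, hx⟩ := XiSurj φ
    refine ⟨x, ?_⟩
    have h1 : Phi x = (Xi x).comp H.subtype := rfl
    rw [h1, hx]
    exact hφ
  have hker : Phi.ker = perp lam hbr H := by
    ext x
    constructor
    · intro hx h hh
      have := DFunLike.congr_fun (AddMonoidHom.mem_ker.mp hx) (⟨h, hh⟩ : ↥H)
      exact this
    · intro hx
      apply AddMonoidHom.mem_ker.mpr
      ext h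
      exact hx h h.2
  have hrange : Nat.card Phi.range = Nat.card (↥H →+ D) := by
    have : Phi.range = ⊤ := AddMonoidHom.range_eq_top.mpr PhiSurj
    rw [this]
    exact Nat.card_congr AddSubgroup.topEquiv.toEquiv
  have := card_eq_card_ker_mul_card_range Phi
  rw [hker, hrange, card_hom_eq ↥H] at this
  exact this.symm

end Pairing

/-! ### Subgroups of ZMod (p^n) -/

section ZModFacts

variable (p n : ℕ)

/-- The subgroup `p^t · ZMod (p^n)`. -/
def Zt (t : ℕ) : AddSubgroup (ZMod (p ^ n)) :=
  AddSubgroup.zmultiples ((p : ZMod (p ^ n)) ^ t)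

variable {p n}

lemma mem_Zt_iff {t : ℕ} {a : ZMod (p ^ n)} :
    a ∈ Zt p n t ↔ ∃ b : ZMod (p ^ n), a = (p : ZMod (p ^ n)) ^ t * b := by
  constructor
  · intro ha
    obtain ⟨k, hk⟩ := AddSubgroup.mem_zmultiples_iff.mp ha
    exact ⟨(k : ZMod (p ^ n)), by rw [← hk, zsmul_eq_mul]; ring⟩
  · rintro ⟨b, rfl⟩
    obtain ⟨k, hk⟩ := ZMod.intCast_surjective b
    apply AddSubgroup.mem_zmultiples_iff.mpr
    exact ⟨k, by rw [zsmul_eq_mul, hk]; ring⟩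

lemma Zt_mul_mem {t : ℕ} (b : ZMod (p ^ n)) : (p : ZMod (p ^ n)) ^ t * b ∈ Zt p n t :=
  mem_Zt_iff.mpr ⟨b, rfl⟩

lemma Zt_antitone {s t : ℕ} (hst : s ≤ t) : Zt p n t ≤ Zt p n s := by
  intro a ha
  obtain ⟨b, rfl⟩ := mem_Zt_iff.mp ha
  apply mem_Zt_iff.mpr
  exact ⟨(p : ZMod (p ^ n)) ^ (t - s) * b, by rw [← mul_assoc, ← pow_add]; congr 2; omega⟩

lemma natCast_pow_self (hn0 : 0 < n) : ((p : ZMod (p ^ n)) ^ n) = 0 := by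
  have : ((p ^ n : ℕ) : ZMod (p ^ n)) = 0 := ZMod.natCast_self _
  push_cast at this
  exact this

lemma mem_Zt_n_iff (hn0 : 0 < n) {a : ZMod (p ^ n)} : a ∈ Zt p n n ↔ a = 0 := by
  rw [mem_Zt_iff]
  constructor
  · rintro ⟨b, rfl⟩
    rw [natCast_pow_self hn0, zero_mul]
  · rintro rfl
    exact ⟨0, by rw [mul_zero]⟩

lemma natCast_pow_ne_zero (hp : p.Prime) {t : ℕ} (ht : t < n) : ((p : ZMod (p ^ n)) ^ t) ≠ 0 := by
  intro h
  have h2 : ((p ^ t : ℕ) : ZMod (p ^ n)) = 0 := by push_cast; exact h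
  rw [ZMod.natCast_eq_zero_iff] at h2
  have := (Nat.pow_dvd_pow_iff_le_right hp.one_lt).mp h2
  omega

lemma pval_eq_of_cast {a : ZMod (p ^ n)} (hp : p.Prime) (hn0 : 0 < n) :
    a = ((a.val : ℕ) : ZMod (p ^ n)) := by
  haveI : NeZero (p ^ n) := ⟨pow_ne_zero n hp.ne_zero⟩
  exact (ZMod.natCast_rightInverse a).symm

lemma torsion_iff_mem_Zt (hp : p.Prime) (hn0 : 0 < n) {j : ℕ} (hj : j ≤ n) (a : ZMod (p ^ n)) :
    (p : ZMod (p ^ n)) ^ j * a = 0 ↔ a ∈ Zt p n (n - j) := by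
  haveI : NeZero (p ^ n) := ⟨pow_ne_zero n hp.ne_zero⟩
  constructor
  · intro h
    have hval : ((p ^ j * a.val : ℕ) : ZMod (p ^ n)) = 0 := by
      push_cast
      rw [← pval_eq_of_cast hp hn0]
      exact h
    rw [ZMod.natCast_eq_zero_iff] at hval
    have hdvd : p ^ (n - j) ∣ a.val := by
      have h2 : p ^ j * p ^ (n - j) ∣ p ^ j * a.val := by
        rw [← pow_add]
        have : j + (n - j) = n := by omega
        rw [this]
        exact hval
      exact (mul_dvd_mul_iff_left (pow_ne_zero j hp.ne_zero)).mp h2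
    obtain ⟨c, hc⟩ := hdvd
    apply mem_Zt_iff.mpr
    refine ⟨(c : ZMod (p ^ n)), ?_⟩
    rw [pval_eq_of_cast hp hn0 (a := a), hc]
    push_cast
    ring
  · intro h
    obtain ⟨b, rfl⟩ := mem_Zt_iff.mp h
    rw [← mul_assoc, ← pow_add]
    have : j + (n - j) = n := by omega
    rw [this, natCast_pow_self hn0, zero_mul]

lemma card_Zt (hp : p.Prime) {t : ℕ} (ht : t ≤ n) :
    Nat.card (Zt p n t) = p ^ (n - t) := by
  have hq : p ^ n ≠ 0 := pow_ne_zero n hp.ne_zero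
  have h1 : ((p : ZMod (p ^ n)) ^ t) = ((p ^ t : ℕ) : ZMod (p ^ n)) := by push_cast; rfl
  rw [Zt, h1, Nat.card_zmultiples, ZMod.addOrderOf_coe _ hq]
  rw [Nat.gcd_eq_right (Nat.pow_dvd_pow p ht)]
  exact Nat.pow_div ht hp.pos

lemma card_addsubgroup_mono {A : Type*} [AddGroup A] [Finite A] {H K : AddSubgroup A}
    (h : H ≤ K) : Nat.card H ≤ Nat.card K :=
  Nat.card_le_card_of_injective (fun x => ⟨x.1, h x.2⟩) (fun a b hab => by
    apply Subtype.ext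
    have := congrArg Subtype.val hab
    simpa using this)

lemma unit_decomp (hp : p.Prime) (hn0 : 0 < n) {a : ZMod (p ^ n)} (ha : a ≠ 0) :
    ∃ t, t < n ∧ ∃ u : (ZMod (p ^ n))ˣ, a = (p : ZMod (p ^ n)) ^ t * u := by
  haveI : NeZero (p ^ n) := ⟨pow_ne_zero n hp.ne_zero⟩
  set v := a.val with hv
  have hvne : v ≠ 0 := by
    intro h
    apply ha
    rw [pval_eq_of_cast hp hn0 (a := a), ← hv, h]
    simp
  set t := v.factorization p with htdef
  have hdvd : p ^ t ∣ v := Nat.ordProj_dvd v p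
  set c := v / p ^ t with hcdef
  have hvc : v = p ^ t * c := (Nat.ordProj_mul_ordCompl_eq_self v p).symm
  have hpc : ¬ p ∣ c := Nat.not_dvd_ordCompl hp hvne
  have htn : t < n := by
    have h1 : p ^ t ≤ v := Nat.le_of_dvd (Nat.pos_of_ne_zero hvne) hdvd
    have h2 : v < p ^ n := ZMod.val_lt a
    have := lt_of_le_of_lt h1 h2
    exact (Nat.pow_lt_pow_iff_right hp.one_lt).mp this
  have hcop : Nat.Coprime c (p ^ n) := by
    apply Nat.Coprime.pow_right
    exact Nat.Coprime.symm ((Nat.Prime.coprime_iff_not_dvd hp).mpr hpc)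
  refine ⟨t, htn, ZMod.unitOfCoprime c hcop, ?_⟩
  rw [pval_eq_of_cast hp hn0 (a := a), ← hv, hvc]
  push_cast
  rw [ZMod.coe_unitOfCoprime]

lemma Zt_le_zmultiples (hp : p.Prime) (hn0 : 0 < n) {t : ℕ} {a : ZMod (p ^ n)}
    (hmem : a ∈ Zt p n t) (hnot : a ∉ Zt p n (t + 1)) :
    Zt p n t ≤ AddSubgroup.zmultiples a := by
  have ha : a ≠ 0 := by
    intro h
    exact hnot (h ▸ (Zt p n (t+1)).zero_mem)
  obtain ⟨s, hsn, u, hu⟩ := unit_decomp hp hn0 ha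
  have hts : t ≤ s := by
    by_contra hcon
    push_neg at hcon
    obtain ⟨b, hb⟩ := mem_Zt_iff.mp hmem
    have h1 : (p : ZMod (p ^ n)) ^ (n - 1) * (u : ZMod (p ^ n)) = 0 := by
      have h2 : (p : ZMod (p ^ n)) ^ (n - s - 1) * a = (p : ZMod (p ^ n)) ^ (n - s - 1) * a := rfl
      calc (p : ZMod (p ^ n)) ^ (n - 1) * (u : ZMod (p ^ n))
          = (p : ZMod (p ^ n)) ^ (n - s - 1) * ((p : ZMod (p ^ n)) ^ s * u) := by
            rw [← mul_assoc, ← pow_add]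
            congr 2
            omega
        _ = (p : ZMod (p ^ n)) ^ (n - s - 1) * ((p : ZMod (p ^ n)) ^ t * b) := by rw [← hu, hb]
        _ = (p : ZMod (p ^ n)) ^ (n - s - 1 + t) * b := by rw [← mul_assoc, ← pow_add]
        _ = 0 := by
            have hge : n ≤ n - s - 1 + t := by omega
            have : (p : ZMod (p ^ n)) ^ (n - s - 1 + t) =
                (p : ZMod (p ^ n)) ^ n * (p : ZMod (p ^ n)) ^ (n - s - 1 + t - n) := by
              rw [← pow_add]; congr 1; omega
            rw [this, natCast_pow_self hn0]
            ring
    have h3 : (p : ZMod (p ^ n)) ^ (n - 1) = 0 := by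
      have := congrArg (fun x => x * ((u⁻¹ : (ZMod (p ^ n))ˣ) : ZMod (p ^ n))) h1
      simpa [mul_assoc] using this
    exact natCast_pow_ne_zero hp (by omega) h3
  have hst : s ≤ t := by
    by_contra hcon
    push_neg at hcon
    apply hnot
    apply Zt_antitone (show t + 1 ≤ s by omega)
    rw [hu]
    exact Zt_mul_mem _
  have hs : s = t := le_antisymm hst hts
  intro x hx
  obtain ⟨b, rfl⟩ := mem_Zt_iff.mp hx
  obtain ⟨k, hk⟩ := ZMod.intCast_surjective (((u⁻¹ : (ZMod (p ^ n))ˣ) : ZMod (p ^ n)) * b)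
  apply AddSubgroup.mem_zmultiples_iff.mpr
  refine ⟨k, ?_⟩
  rw [zsmul_eq_mul, hk, hu, hs]
  have hu1 : ((u⁻¹ : (ZMod (p ^ n))ˣ) : ZMod (p ^ n)) * u = 1 := Units.inv_mul u
  linear_combination ((p : ZMod (p ^ n)) ^ t * b) * hu1

lemma pow_unit_not_mem (hp : p.Prime) (hn0 : 0 < n) {s : ℕ} (hs : s < n)
    (u : (ZMod (p ^ n))ˣ) : (p : ZMod (p ^ n)) ^ s * u ∉ Zt p n (s + 1) := by
  intro hmem
  obtain ⟨b, hb⟩ := mem_Zt_iff.mp hmem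
  have h1 : (p : ZMod (p ^ n)) ^ (n - 1) * (u : ZMod (p ^ n)) = 0 := by
    calc (p : ZMod (p ^ n)) ^ (n - 1) * (u : ZMod (p ^ n))
        = (p : ZMod (p ^ n)) ^ (n - s - 1) * ((p : ZMod (p ^ n)) ^ s * u) := by
          rw [← mul_assoc, ← pow_add]
          congr 2
          omega
      _ = (p : ZMod (p ^ n)) ^ (n - s - 1) * ((p : ZMod (p ^ n)) ^ (s + 1) * b) := by rw [← hb]
      _ = (p : ZMod (p ^ n)) ^ (n - s - 1 + (s + 1)) * b := by rw [← mul_assoc, ← pow_add]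
      _ = 0 := by
          have he : n - s - 1 + (s + 1) = n := by omega
          rw [he, natCast_pow_self hn0, zero_mul]
  have h3 : (p : ZMod (p ^ n)) ^ (n - 1) = 0 := by
    have h2 := congrArg (fun x => x * ((u⁻¹ : (ZMod (p ^ n))ˣ) : ZMod (p ^ n))) h1
    simpa [mul_assoc] using h2
  exact natCast_pow_ne_zero hp (by omega) h3

lemma unit_or_mem_Zt_one (hp : p.Prime) (hn0 : 0 < n) (c : ZMod (p ^ n)) :
    IsUnit c ∨ c ∈ Zt p n 1 := by
  by_cases hc : c = 0
  · right
    rw [hc]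
    exact zero_mem _
  · obtain ⟨s, hsn, u, hu⟩ := unit_decomp hp hn0 hc
    rcases Nat.eq_zero_or_pos s with hs0 | hs1
    · left
      rw [hu, hs0, pow_zero, one_mul]
      exact u.isUnit
    · right
      rw [hu]
      apply Zt_antitone hs1
      exact mem_Zt_iff.mpr ⟨u, rfl⟩

lemma mem_Zt_le_of_unit (hp : p.Prime) (hn0 : 0 < n) {s e : ℕ} (hs : s < n)
    (u : (ZMod (p ^ n))ˣ) (hmem : (p : ZMod (p ^ n)) ^ s * u ∈ Zt p n e) : e ≤ s := by
  by_contra hcon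
  push_neg at hcon
  exact pow_unit_not_mem hp hn0 hs u (Zt_antitone hcon hmem)

lemma Zt_not_le_succ (hp : p.Prime) (hn0 : 0 < n) {e : ℕ} (he : e < n) :
    ¬ (Zt p n e ≤ Zt p n (e + 1)) := by
  intro hle
  have h1 : (p : ZMod (p ^ n)) ^ e * (1 : (ZMod (p ^ n))ˣ) ∈ Zt p n (e + 1) := by
    apply hle
    exact mem_Zt_iff.mpr ⟨((1 : (ZMod (p ^ n))ˣ) : ZMod (p ^ n)), rfl⟩
  exact pow_unit_not_mem hp hn0 he 1 h1

lemma Zt_nsmul_shift {e l : ℕ} {y : ZMod (p ^ n)} (hy : y ∈ Zt p n e) :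
    (p ^ l : ℕ) • y ∈ Zt p n (e + l) := by
  obtain ⟨b, rfl⟩ := mem_Zt_iff.mp hy
  apply mem_Zt_iff.mpr
  refine ⟨b, ?_⟩
  rw [nsmul_eq_mul, pow_add]
  push_cast
  ring

end ZModFacts

/-! ### Summation utilities -/

section Sums

variable {A B : Type*} [AddCommGroup A] [AddCommGroup B] [Fintype A] [Fintype B]

lemma card_fiber_eq_card_ker (φ : A →+ B) (b : B) (hb : ∃ a, φ a = b) :
    Nat.card {a : A // φ a = b} = Nat.card φ.ker := by
  obtain ⟨a₀, ha₀⟩ := hb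
  apply Nat.card_congr
  refine ⟨fun x => ⟨x.1 - a₀, ?_⟩, fun y => ⟨y.1 + a₀, ?_⟩, ?_, ?_⟩
  · rw [AddMonoidHom.mem_ker, map_sub, x.2, ha₀, sub_self]
  · show φ _ = (b : B)
    rw [map_add, AddMonoidHom.mem_ker.mp y.2, zero_add, ha₀]
  · intro x
    apply Subtype.ext
    show x.1 - a₀ + a₀ = x.1
    abel
  · intro y
    apply Subtype.ext
    show y.1 + a₀ - a₀ = y.1
    abel

lemma sum_comp_hom (φ : A →+ B) (F : B → ℚ) (W : AddSubgroup B)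
    (hW : ∀ b, b ∈ W ↔ ∃ a, φ a = b) :
    ∑ a : A, F (φ a) = (Nat.card φ.ker : ℚ) * ∑ b : ↥W, F (b : B) := by
  classical
  let g : A → ↥W := fun a => ⟨φ a, (hW _).mpr ⟨a, rfl⟩⟩
  have h1 : ∑ a : A, F (φ a) = ∑ b : ↥W, ∑ a : {a : A // g a = b}, F (φ (a : A)) :=
    (Fintype.sum_fiberwise g (fun a => F (φ a))).symm
  rw [h1, Finset.mul_sum]
  refine Finset.sum_congr rfl fun b _ => ?_
  have h2 : ∀ a : {a : A // g a = b}, F (φ (a : A)) = F (b : B) := by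
    rintro ⟨a, ha⟩
    have : φ a = (b : B) := congrArg Subtype.val ha
    rw [this]
  rw [Finset.sum_congr rfl (fun a _ => h2 a), Finset.sum_const]
  have h3 : Nat.card {a : A // g a = b} = Nat.card φ.ker := by
    have he : ∀ a : A, (g a = b) ↔ (φ a = (b : B)) := by
      intro a
      constructor
      · intro h; exact congrArg Subtype.val h
      · intro h; exact Subtype.ext h
    rw [Nat.card_congr (Equiv.subtypeEquivRight he),
      card_fiber_eq_card_ker φ (b : B) ((hW _).mp b.2)]
  rw [← h3]
  have h4 : (Finset.univ : Finset {a : A // g a = b}).card = Nat.card {a : A // g a = b} := by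
    rw [Nat.card_eq_fintype_card, Finset.card_univ]
  rw [h4]
  push_cast
  ring

lemma sum_shift_subgroup (V : AddSubgroup A) (F : A → ℚ) {d : A} (hd : d ∈ V) (x : A) :
    ∑ w : ↥V, F ((x + d) + ↑w) = ∑ w : ↥V, F (x + ↑w) := by
  rw [← Equiv.sum_comp (Equiv.addLeft (⟨d, hd⟩ : ↥V)) (fun w => F (x + ↑w))]
  refine Finset.sum_congr rfl fun w _ => ?_
  show F (x + d + ↑w) = F (x + ↑(⟨d, hd⟩ + w))
  rw [AddSubgroup.coe_add]
  rw [add_assoc]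

lemma coset_split {V W : AddSubgroup A} (hVW : V ≤ W)
    (F : A → ℚ) (c : A) (h : ∀ w : ↥W, ∑ v : ↥V, F ((c + ↑w) + ↑v) = 0) :
    ∑ w : ↥W, F (c + ↑w) = 0 := by
  have key : (Nat.card ↥V : ℚ) * ∑ w : ↥W, F (c + ↑w) = 0 := by
    calc (Nat.card ↥V : ℚ) * ∑ w : ↥W, F (c + ↑w)
        = ∑ _v : ↥V, ∑ w : ↥W, F (c + ↑w) := by
          rw [Finset.sum_const, Finset.card_univ, nsmul_eq_mul, Nat.card_eq_fintype_card]
      _ = ∑ v : ↥V, ∑ w : ↥W, F ((c + ↑w) + ↑v) := by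
          refine Finset.sum_congr rfl fun v _ => ?_
          rw [← Equiv.sum_comp (Equiv.addRight (⟨↑v, hVW v.2⟩ : ↥W))
            (fun w => F (c + ↑w))]
          refine Finset.sum_congr rfl fun w _ => ?_
          show F (c + ↑(w + ⟨↑v, hVW v.2⟩)) = F ((c + ↑w) + ↑v)
          rw [AddSubgroup.coe_add, ← add_assoc]
      _ = ∑ w : ↥W, ∑ v : ↥V, F ((c + ↑w) + ↑v) := Finset.sum_comm
      _ = 0 := by
          rw [Finset.sum_congr rfl (fun w _ => h w)]
          simp
  have hne : (Nat.card ↥V : ℚ) ≠ 0 := by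
    have : 0 < Nat.card ↥V := Nat.card_pos
    exact_mod_cast ne_of_gt this
  exact (mul_eq_zero.mp key).resolve_left hne

end Sums

/-! ### Main setting -/

section Main

variable (p n m : ℕ)

/-- coordinatewise `Zt` subgroup of `(ZMod (p^n))^(2m)`. -/
def Pt (t : ℕ) : AddSubgroup (Fin (2 * m) → ZMod (p ^ n)) :=
  AddSubgroup.pi Set.univ (fun _ => Zt p n t)

variable {p n m}

lemma mem_Pt_iff {t : ℕ} {x : Fin (2 * m) → ZMod (p ^ n)} :
    x ∈ Pt p n m t ↔ ∀ i, x i ∈ Zt p n t := by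
  constructor
  · intro h i
    exact h i (Set.mem_univ i)
  · intro h i _
    exact h i

lemma Pt_antitone {s t : ℕ} (hst : s ≤ t) : Pt p n m t ≤ Pt p n m s := by
  intro x hx
  rw [mem_Pt_iff] at hx ⊢
  exact fun i => Zt_antitone hst (hx i)

variable [NeZero (p ^ n)]

lemma card_Pt (hp : p.Prime) {t : ℕ} (ht : t ≤ n) :
    Nat.card ↥(Pt p n m t) = p ^ ((n - t) * (2 * m)) := by
  have e : ↥(Pt p n m t) ≃ ∀ _i : Fin (2 * m), ↥(Zt p n t) := by
    refine ⟨fun x => fun i => ⟨x.1 i, x.2 i (Set.mem_univ i)⟩,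
      fun y => ⟨fun i => (y i).1, fun i _ => (y i).2⟩, ?_, ?_⟩
    · intro x; rfl
    · intro y; rfl
  rw [Nat.card_congr e, Nat.card_pi]
  rw [Finset.prod_congr rfl (fun i _ => card_Zt hp ht)]
  rw [Finset.prod_const, Finset.card_univ, Fintype.card_fin, ← pow_mul]

lemma card_G : Nat.card (Fin (2 * m) → ZMod (p ^ n)) = p ^ (n * (2 * m)) := by
  rw [Nat.card_pi]
  rw [Finset.prod_congr rfl (fun i _ => Nat.card_zmod _)]
  rw [Finset.prod_const, Finset.card_univ, Fintype.card_fin, ← pow_mul]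

section WithPairing

variable (lam : (Fin (2 * m) → ZMod (p ^ n)) → (Fin (2 * m) → ZMod (p ^ n)) → D)

lemma lam_nsmul_left (hbl : ∀ x y z, lam (x + y) z = lam x z + lam y z)
    (k : ℕ) (x y : Fin (2 * m) → ZMod (p ^ n)) :
    lam (k • x) y = k • lam x y :=
  (AddMonoidHom.mk' (fun a => lam a y) (fun a b => hbl a b y)).map_nsmul k x

lemma lam_nsmul_right (hbr : ∀ x y z, lam x (y + z) = lam x y + lam x z)
    (k : ℕ) (x y : Fin (2 * m) → ZMod (p ^ n)) :
    lam x (k • y) = k • lam x y :=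
  (AddMonoidHom.mk' (fun b => lam x b) (fun a b => hbr x a b)).map_nsmul k y

lemma perp_M_eq (hbr : ∀ x y z, lam x (y + z) = lam x y + lam x z)
    (hsymm : ∀ x y, lam x y = lam y x)
    (M : AddSubgroup (Fin (2 * m) → ZMod (p ^ n)))
    (hM : ∀ x, x ∈ M ↔ ∀ y ∈ M, lam x y = 0) : perp lam hbr M = M := by
  ext x
  rw [mem_perp]
  rw [hM x]
  constructor
  · intro h y hy
    rw [hsymm]
    exact h y hy
  · intro h y hy
    rw [← hsymm]
    exact h y hy

lemma Pt_eq_smul_set (hp : p.Prime) (hn0 : 0 < n) {t : ℕ} {h : Fin (2 * m) → ZMod (p ^ n)}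
    (hh : h ∈ Pt p n m t) : ∃ y, h = (p ^ t : ℕ) • y := by
  rw [mem_Pt_iff] at hh
  have hy : ∀ i, ∃ b, h i = (p : ZMod (p ^ n)) ^ t * b := fun i => mem_Zt_iff.mp (hh i)
  choose y hy using hy
  refine ⟨y, funext fun i => ?_⟩
  rw [Pi.smul_apply, nsmul_eq_mul, hy i]
  push_cast
  ring

lemma smul_mem_Pt {t : ℕ} (y : Fin (2 * m) → ZMod (p ^ n)) :
    (p ^ t : ℕ) • y ∈ Pt p n m t := by
  rw [mem_Pt_iff]
  intro i
  rw [Pi.smul_apply, nsmul_eq_mul]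
  apply mem_Zt_iff.mpr
  exact ⟨y i, by push_cast; ring⟩

lemma smul_eq_zero_iff_mem_Pt (hp : p.Prime) (hn0 : 0 < n) {t : ℕ} (ht : t ≤ n)
    (x : Fin (2 * m) → ZMod (p ^ n)) :
    (p ^ t : ℕ) • x = 0 ↔ x ∈ Pt p n m (n - t) := by
  rw [mem_Pt_iff]
  constructor
  · intro h i
    have hi : (p : ZMod (p ^ n)) ^ t * x i = 0 := by
      have := congrFun h i
      rw [Pi.smul_apply, nsmul_eq_mul] at this
      push_cast at this
      exact this
    exact (torsion_iff_mem_Zt hp hn0 ht (x i)).mp hi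
  · intro h
    funext i
    have := (torsion_iff_mem_Zt hp hn0 ht (x i)).mpr (h i)
    rw [Pi.smul_apply, nsmul_eq_mul]
    push_cast
    rw [this]
    rfl

lemma perp_Pt (hbl : ∀ x y z, lam (x + y) z = lam x z + lam y z)
    (hbr : ∀ x y z, lam x (y + z) = lam x y + lam x z)
    (hsymm : ∀ x y, lam x y = lam y x)
    (hnd : ∀ x, (∀ y, lam x y = 0) → x = 0)
    (hp : p.Prime) (hn0 : 0 < n) {t : ℕ} (ht : t ≤ n) :
    perp lam hbr (Pt p n m t) = Pt p n m (n - t) := by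
  ext x
  rw [mem_perp]
  constructor
  · intro h
    rw [← smul_eq_zero_iff_mem_Pt hp hn0 ht]
    apply hnd
    intro y
    have h2 : lam ((p ^ t : ℕ) • y) x = 0 := h _ (smul_mem_Pt y)
    rw [lam_nsmul_left lam hbl] at h2
    rw [← lam_nsmul_right lam hbr] at h2
    rw [hsymm] at h2
    exact h2
  · intro h g hg
    obtain ⟨y, rfl⟩ := Pt_eq_smul_set hp hn0 hg
    rw [lam_nsmul_left lam hbl, ← lam_nsmul_right lam hbr]
    have h2 : (p ^ t : ℕ) • x = 0 := (smul_eq_zero_iff_mem_Pt hp hn0 ht x).mpr h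
    rw [h2]
    have h3 : lam y 0 = lam y 0 + lam y 0 := by
      have := hbr y 0 0
      simpa using this
    exact left_eq_add.mp h3

lemma perp_sup (hbl : ∀ x y z, lam (x + y) z = lam x z + lam y z)
    (hbr : ∀ x y z, lam x (y + z) = lam x y + lam x z)
    (H K : AddSubgroup (Fin (2 * m) → ZMod (p ^ n))) :
    perp lam hbr (H ⊔ K) = perp lam hbr H ⊓ perp lam hbr K := by
  ext x
  rw [AddSubgroup.mem_inf, mem_perp, mem_perp, mem_perp]
  constructor
  · intro h
    exact ⟨fun a ha => h a (AddSubgroup.mem_sup_left ha),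
      fun b hb => h b (AddSubgroup.mem_sup_right hb)⟩
  · rintro ⟨h1, h2⟩ g hg
    obtain ⟨a, ha, b, hb, rfl⟩ := AddSubgroup.mem_sup.mp hg
    rw [hbl]
    rw [h1 a ha, h2 b hb, add_zero]

lemma card_M (hbl : ∀ x y z, lam (x + y) z = lam x z + lam y z)
    (hbr : ∀ x y z, lam x (y + z) = lam x y + lam x z)
    (hsymm : ∀ x y, lam x y = lam y x)
    (hnd : ∀ x, (∀ y, lam x y = 0) → x = 0)
    (M : AddSubgroup (Fin (2 * m) → ZMod (p ^ n)))
    (hM : ∀ x, x ∈ M ↔ ∀ y ∈ M, lam x y = 0)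
    (hp : p.Prime) : Nat.card ↥M = p ^ (n * m) := by
  have h1 := card_perp lam hbl hbr hsymm hnd M
  rw [perp_M_eq lam hbr hsymm M hM, card_G] at h1
  have h2 : p ^ (n * (2 * m)) = p ^ (n * m) * p ^ (n * m) := by
    rw [← pow_add]
    congr 1
    ring
  rw [h2] at h1
  exact Nat.mul_self_inj.mp h1

end WithPairing

variable (p n m) in
/-- multiplication by `c` as a group hom. -/
def psmulHom (c : ℕ) : (Fin (2 * m) → ZMod (p ^ n)) →+ (Fin (2 * m) → ZMod (p ^ n)) :=
  AddMonoidHom.mk' (fun x => c • x) (fun a b => smul_add c a b)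

lemma psmulHom_apply (c : ℕ) (x : Fin (2 * m) → ZMod (p ^ n)) :
    psmulHom p n m c x = c • x := rfl

variable (p n m) in
def Wsub (M : AddSubgroup (Fin (2 * m) → ZMod (p ^ n))) (j : ℕ) :
    AddSubgroup (Fin (2 * m) → ZMod (p ^ n)) :=
  (M ⊓ Pt p n m (n - j)).map (psmulHom p n m (p ^ (j - 1)))

section RankLemma

variable (lam : (Fin (2 * m) → ZMod (p ^ n)) → (Fin (2 * m) → ZMod (p ^ n)) → D)

lemma rank_lemma
    (hbl : ∀ x y z, lam (x + y) z = lam x z + lam y z)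
    (hbr : ∀ x y z, lam x (y + z) = lam x y + lam x z)
    (hsymm : ∀ x y, lam x y = lam y x)
    (hnd : ∀ x, (∀ y, lam x y = 0) → x = 0)
    (M : AddSubgroup (Fin (2 * m) → ZMod (p ^ n)))
    (hM : ∀ x, x ∈ M ↔ ∀ y ∈ M, lam x y = 0)
    (hp : p.Prime) (hn0 : 0 < n) {j : ℕ}
    (hj1 : 1 ≤ j) (hj2 : 2 * j ≤ n + 1) :
    p ^ m ≤ Nat.card ↥(Wsub p n m M j) := by
  classical
  set Dj : ℕ → ℕ := fun t => Nat.card ↥(M ⊓ Pt p n m (n - t)) with hDj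
  set tj : ℕ → ℕ := fun t => Nat.card ↥(Wsub p n m M t) with htj
  have hDpos : ∀ t, 0 < Dj t := fun t =>
    @Nat.card_pos _ ⟨⟨0, zero_mem _⟩⟩ _
  -- the duality equation
  have hE : ∀ t, t ≤ n → p ^ (n * m) * Dj t = p ^ (2 * m * t) * Dj (n - t) := by
    intro t ht
    have hperp : perp lam hbr (M ⊔ Pt p n m t) = M ⊓ Pt p n m (n - t) := by
      rw [perp_sup lam hbl hbr, perp_M_eq lam hbr hsymm M hM,
        perp_Pt lam hbl hbr hsymm hnd hp hn0 ht]
    have h1 : Dj t * Nat.card ↥(M ⊔ Pt p n m t) = p ^ (n * (2 * m)) := by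
      rw [hDj]
      simp only
      rw [← hperp, ← card_G (p := p) (n := n) (m := m)]
      exact card_perp lam hbl hbr hsymm hnd _
    have h2 : Nat.card ↥(M ⊔ Pt p n m t) * Nat.card ↥(M ⊓ Pt p n m t) =
        p ^ (n * m) * p ^ ((n - t) * (2 * m)) := by
      rw [card_sup_mul_card_inf, card_M lam hbl hbr hsymm hnd M hM hp, card_Pt hp ht]
    have h3 : M ⊓ Pt p n m t = M ⊓ Pt p n m (n - (n - t)) := by
      congr 1
      congr 1
      omega
    -- cast to ℚ and manipulate
    have hq1 : (Dj t : ℚ) * (Nat.card ↥(M ⊔ Pt p n m t) : ℚ) = (p : ℚ) ^ (n * (2 * m)) := by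
      exact_mod_cast congrArg (Nat.cast : ℕ → ℚ) h1
    have hq2 : (Nat.card ↥(M ⊔ Pt p n m t) : ℚ) * (Dj (n - t) : ℚ) =
        (p : ℚ) ^ (n * m) * (p : ℚ) ^ ((n - t) * (2 * m)) := by
      have := congrArg (Nat.cast : ℕ → ℚ) h2
      push_cast at this ⊢
      rw [hDj]
      simp only
      rw [← h3]
      exact this
    have hp0 : (0 : ℚ) < (p : ℚ) := by exact_mod_cast hp.pos
    haveI : Nonempty ↥(M ⊔ Pt p n m t) := ⟨⟨0, zero_mem _⟩⟩
    have hsup0 : (0 : ℚ) < (Nat.card ↥(M ⊔ Pt p n m t) : ℚ) := by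
      exact_mod_cast (Nat.card_pos : 0 < Nat.card ↥(M ⊔ Pt p n m t))
    have hPQ : (p:ℚ)^(n*m) * (p:ℚ)^(n*(2*m)) =
        (p:ℚ)^(2*m*t) * ((p:ℚ)^(n*m) * (p:ℚ)^((n-t)*(2*m))) := by
      rw [← pow_add, ← pow_add, ← pow_add]
      congr 1
      obtain ⟨s, hs⟩ := Nat.le.dest ht
      subst hs
      rw [Nat.add_sub_cancel_left]
      ring
    have key : (p:ℚ)^(n*m) * (Dj t:ℚ) * (Nat.card ↥(M ⊔ Pt p n m t) : ℚ) =
        ((p:ℚ)^(2*m*t) * (Dj (n-t):ℚ)) * (Nat.card ↥(M ⊔ Pt p n m t) : ℚ) := by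
      calc (p:ℚ)^(n*m) * (Dj t:ℚ) * (Nat.card ↥(M ⊔ Pt p n m t) : ℚ)
          = (p:ℚ)^(n*m) * ((Dj t:ℚ) * (Nat.card ↥(M ⊔ Pt p n m t) : ℚ)) := by ring
        _ = (p:ℚ)^(n*m) * (p:ℚ)^(n*(2*m)) := by rw [hq1]
        _ = (p:ℚ)^(2*m*t) * ((p:ℚ)^(n*m) * (p:ℚ)^((n-t)*(2*m))) := hPQ
        _ = (p:ℚ)^(2*m*t) * ((Nat.card ↥(M ⊔ Pt p n m t) : ℚ) * (Dj (n-t):ℚ)) := by rw [← hq2]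
        _ = ((p:ℚ)^(2*m*t) * (Dj (n-t):ℚ)) * (Nat.card ↥(M ⊔ Pt p n m t) : ℚ) := by ring
    have key2 := mul_right_cancel₀ (ne_of_gt hsup0) key
    exact_mod_cast key2
  -- tj t * Dj (t-1) = Dj t
  have hT1 : ∀ t, 1 ≤ t → t ≤ n → tj t * Dj (t - 1) = Dj t := by
    intro t ht1 htn
    set ψ : ↥(M ⊓ Pt p n m (n - t)) →+ (Fin (2 * m) → ZMod (p ^ n)) :=
      (psmulHom p n m (p ^ (t - 1))).comp (M ⊓ Pt p n m (n - t)).subtype with hψ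
    have hrange : ψ.range = Wsub p n m M t := by
      ext y
      simp only [AddMonoidHom.mem_range, Wsub, AddSubgroup.mem_map]
      constructor
      · rintro ⟨x, rfl⟩
        exact ⟨x.1, x.2, rfl⟩
      · rintro ⟨x, hx, rfl⟩
        exact ⟨⟨x, hx⟩, rfl⟩
    have hker : Nat.card ψ.ker = Dj (t - 1) := by
      apply Nat.card_congr
      have hmem : ∀ x : ↥(M ⊓ Pt p n m (n - t)), x ∈ ψ.ker ↔
          (x : Fin (2 * m) → ZMod (p ^ n)) ∈ M ⊓ Pt p n m (n - (t - 1)) := by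
        intro x
        rw [AddMonoidHom.mem_ker]
        have h1 : ψ x = (p ^ (t - 1) : ℕ) • (x : Fin (2 * m) → ZMod (p ^ n)) := rfl
        rw [h1, smul_eq_zero_iff_mem_Pt hp hn0 (by omega : t - 1 ≤ n)]
        constructor
        · intro h
          exact AddSubgroup.mem_inf.mpr ⟨(AddSubgroup.mem_inf.mp x.2).1, h⟩
        · intro h
          exact (AddSubgroup.mem_inf.mp h).2
      refine ⟨fun x => ⟨x.1.1, (hmem x.1).mp x.2⟩,
        fun y => ⟨⟨y.1, AddSubgroup.mem_inf.mpr ⟨(AddSubgroup.mem_inf.mp y.2).1,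
          Pt_antitone (by omega) ((AddSubgroup.mem_inf.mp y.2).2)⟩⟩, ?_⟩, ?_, ?_⟩
      · rw [hmem]
        exact y.2
      · intro x
        apply Subtype.ext
        apply Subtype.ext
        rfl
      · intro y
        apply Subtype.ext
        rfl
    have := card_eq_card_ker_mul_card_range ψ
    rw [hker, hrange] at this
    rw [hDj]
    simp only
    rw [htj]
    simp only
    rw [mul_comm]
    exact this.symm
  -- monotonicity
  have hmono : ∀ t, 1 ≤ t → t + 1 ≤ n → tj (t + 1) ≤ tj t := by
    intro t ht1 htn
    apply card_addsubgroup_mono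
    intro y hy
    obtain ⟨g, hg, rfl⟩ := AddSubgroup.mem_map.mp hy
    apply AddSubgroup.mem_map.mpr
    refine ⟨p • g, ?_, ?_⟩
    · apply AddSubgroup.mem_inf.mpr
      refine ⟨AddSubgroup.nsmul_mem _ (AddSubgroup.mem_inf.mp hg).1 p, ?_⟩
      rw [mem_Pt_iff]
      intro i
      have hgi := mem_Pt_iff.mp (AddSubgroup.mem_inf.mp hg).2 i
      obtain ⟨b, hb⟩ := mem_Zt_iff.mp hgi
      apply mem_Zt_iff.mpr
      refine ⟨b, ?_⟩
      rw [Pi.smul_apply, hb, nsmul_eq_mul]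
      have : n - t = 1 + (n - (t + 1)) := by omega
      rw [this, pow_add]
      push_cast
      ring
    · rw [psmulHom_apply, psmulHom_apply, smul_smul]
      congr 1
      have h1 : (t + 1 - 1) = t := by omega
      have h2 : p ^ (t + 1 - 1) = p ^ (t - 1) * p := by
        rw [h1]
        have : t = (t - 1) + 1 := by omega
        nth_rewrite 1 [this]
        rw [pow_succ]
      rw [h2, mul_comm]
  have hchain : ∀ a b, 1 ≤ a → a ≤ b → b ≤ n → tj b ≤ tj a := by
    intro a b ha hab hbn
    induction b with
    | zero => omega
    | succ k ih =>
      rcases Nat.eq_or_lt_of_le hab with h | h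
      · rw [h]
      · have hk : a ≤ k := by omega
        exact le_trans (hmono k (by omega) (by omega)) (ih hk (by omega))
  -- product formula
  have hT3 : ∀ t, 1 ≤ t → t ≤ n → tj t * tj (n + 1 - t) = p ^ (2 * m) := by
    intro t ht1 htn
    have ha := hDpos (t - 1)
    have hc := hDpos (n - t)
    have hi := hE t htn
    have hii := hE (t - 1) (by omega)
    have hiii := hT1 t ht1 htn
    have hiv := hT1 (n + 1 - t) (by omega) (by omega)
    have harith : n + 1 - t - 1 = n - t := by omega
    rw [harith] at hiv
    have harith2 : n - (t - 1) = n + 1 - t := by omega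
    rw [harith2] at hii
    -- cast to ℚ
    have hp0 : (0 : ℚ) < (p : ℚ) := by exact_mod_cast hp.pos
    have qi : (p:ℚ) ^ (n*m) * (Dj t : ℚ) = (p:ℚ) ^ (2*m*t) * (Dj (n - t) : ℚ) := by
      exact_mod_cast congrArg (Nat.cast : ℕ → ℚ) hi
    have qii : (p:ℚ) ^ (n*m) * (Dj (t-1) : ℚ) = (p:ℚ) ^ (2*m*(t-1)) * (Dj (n+1-t) : ℚ) := by
      exact_mod_cast congrArg (Nat.cast : ℕ → ℚ) hii
    have qiii : (tj t : ℚ) * (Dj (t-1) : ℚ) = (Dj t : ℚ) := by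
      exact_mod_cast congrArg (Nat.cast : ℕ → ℚ) hiii
    have qiv : (tj (n+1-t) : ℚ) * (Dj (n-t) : ℚ) = (Dj (n+1-t) : ℚ) := by
      exact_mod_cast congrArg (Nat.cast : ℕ → ℚ) hiv
    have hsplit : (p:ℚ) ^ (2*m*t) = (p:ℚ) ^ (2*m) * (p:ℚ) ^ (2*m*(t-1)) := by
      rw [← pow_add]
      congr 1
      have h9 : 2*m + 2*m*(t-1) = 2*m*(1 + (t-1)) := by ring
      rw [h9]
      congr 1
      omega
    have key : ((tj t : ℚ) * (tj (n+1-t) : ℚ)) * ((p:ℚ)^(n*m) * (Dj (t-1):ℚ) * (Dj (n-t):ℚ)) =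
        ((p:ℚ)^(2*m)) * ((p:ℚ)^(n*m) * (Dj (t-1):ℚ) * (Dj (n-t):ℚ)) := by
      calc ((tj t : ℚ) * (tj (n+1-t) : ℚ)) * ((p:ℚ)^(n*m) * (Dj (t-1):ℚ) * (Dj (n-t):ℚ))
          = (tj (n+1-t) : ℚ) * (Dj (n-t):ℚ) * ((p:ℚ)^(n*m) * ((tj t : ℚ) * (Dj (t-1):ℚ))) := by
            ring
        _ = (Dj (n+1-t) : ℚ) * ((p:ℚ)^(n*m) * (Dj t : ℚ)) := by rw [qiv, qiii]
        _ = (Dj (n+1-t) : ℚ) * ((p:ℚ) ^ (2*m*t) * (Dj (n - t) : ℚ)) := by rw [qi]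
        _ = ((p:ℚ)^(2*m)) * ((p:ℚ) ^ (2*m*(t-1)) * (Dj (n+1-t) : ℚ)) * (Dj (n-t) : ℚ) := by
            rw [hsplit]; ring
        _ = ((p:ℚ)^(2*m)) * ((p:ℚ)^(n*m) * (Dj (t-1):ℚ)) * (Dj (n-t) : ℚ) := by rw [← qii]
        _ = ((p:ℚ)^(2*m)) * ((p:ℚ)^(n*m) * (Dj (t-1):ℚ) * (Dj (n-t):ℚ)) := by ring
    have hne : ((p:ℚ)^(n*m) * (Dj (t-1):ℚ) * (Dj (n-t):ℚ)) ≠ 0 := by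
      apply mul_ne_zero
      apply mul_ne_zero
      · positivity
      · exact_mod_cast ha.ne'
      · exact_mod_cast hc.ne'
    have := mul_right_cancel₀ hne key
    exact_mod_cast this
  -- conclude
  have hprod := hT3 j hj1 (by omega)
  have hle : tj (n + 1 - j) ≤ tj j := hchain j (n + 1 - j) hj1 (by omega) (by omega)
  by_contra hcon
  push_neg at hcon
  have h1 : tj j * tj (n + 1 - j) ≤ tj j * tj j := Nat.mul_le_mul_left _ hle
  have h2 : tj j * tj j < p ^ m * p ^ m := Nat.mul_lt_mul'' hcon hcon
  rw [hprod] at h1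
  have h3 : p ^ (2 * m) = p ^ m * p ^ m := by rw [← pow_add]; congr 1; ring
  omega

end RankLemma

lemma Zt_mul_left {t : ℕ} (r : ZMod (p ^ n)) {x : ZMod (p ^ n)} (hx : x ∈ Zt p n t) :
    r * x ∈ Zt p n t := by
  obtain ⟨b, rfl⟩ := mem_Zt_iff.mp hx
  exact mem_Zt_iff.mpr ⟨r * b, by ring⟩

lemma not_four_dvd (hp4 : p % 4 = 3) (k : ℕ) : ¬ (4 ∣ p ^ k * (p - 1)) := by
  intro hdvd
  have hodd : Odd p := by
    rcases Nat.even_or_odd p with h | h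
    · exfalso
      obtain ⟨t, ht⟩ := h
      omega
    · exact h
  have hoddpow : Odd (p ^ k) := hodd.pow
  obtain ⟨c, hc⟩ : ∃ c, p - 1 = 2 * c := ⟨(p-1)/2, by omega⟩
  have hcodd : Odd c := by
    rcases Nat.even_or_odd c with h | h
    · exfalso
      obtain ⟨t, ht⟩ := h
      omega
    · exact h
  have h2 : p ^ k * (p - 1) = 2 * (p ^ k * c) := by rw [hc]; ring
  rw [h2] at hdvd
  have h3 : 2 ∣ p ^ k * c := by omega
  have h4 : Odd (p ^ k * c) := hoddpow.mul hcodd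
  rw [Nat.odd_iff] at h4
  omega

lemma endgame (hp : p.Prime) (hp4 : p % 4 = 3) (hn0 : 0 < n) {a l : ℕ} (hl : 1 ≤ l)
    (hln : l ≤ n)
    (ω : ZMod (p ^ n) → ℚ)
    (heven : ∀ x ∈ Zt p n a, ω (-x) = ω x)
    (hcong : ∀ x ∈ Zt p n a, ∀ d : ZMod (p ^ n), d ∈ Zt p n (a + l) → ω (x + d) = ω x)
    (c₀ c₁ : ℕ) (hc₀ : 0 < c₀) (hc₁ : 0 < c₁)
    (γ : ZMod (p ^ n)) (hγ : IsUnit γ)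
    (hrel : ∀ x ∈ Zt p n a, (c₀ : ℚ) * ω x + (c₁ : ℚ) * ω (γ * x) = 0) :
    ∀ x ∈ Zt p n a, ω x = 0 := by
  haveI : NeZero (p ^ n) := ⟨pow_ne_zero n hp.ne_zero⟩
  haveI : NeZero (p ^ l) := ⟨pow_ne_zero l hp.ne_zero⟩
  haveI : Fact (p.Prime) := ⟨hp⟩
  -- coprimality of the lift
  have hγv : ((γ.val : ℕ) : ZMod (p ^ n)) = γ := (pval_eq_of_cast hp hn0).symm
  have hcopn : (γ.val).Coprime (p ^ n) := by
    rw [← ZMod.isUnit_iff_coprime]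
    rw [hγv]
    exact hγ
  have hcopl : (γ.val).Coprime (p ^ l) :=
    Nat.Coprime.coprime_dvd_right (pow_dvd_pow p hln) hcopn
  set u : (ZMod (p ^ l))ˣ := ZMod.unitOfCoprime γ.val hcopl with hu
  set d := orderOf u with hd
  have hd1 : 0 < d := orderOf_pos u
  -- modular facts
  have hmod : ∀ k : ℕ, (u ^ k = 1) → ∀ x ∈ Zt p n a, ω (γ ^ k * x) = ω x := by
    intro k hk x hx
    have h1 : ((γ.val ^ k : ℕ) : ZMod (p ^ l)) = ((1 : ℕ) : ZMod (p ^ l)) := by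
      have := congrArg (Units.val) hk
      push_cast [ZMod.coe_unitOfCoprime] at this
      push_cast
      exact this
    rw [ZMod.natCast_eq_natCast_iff] at h1
    have h2 : (p ^ l : ℤ) ∣ ((γ.val ^ k : ℕ) : ℤ) - 1 := by
      have := (Nat.modEq_iff_dvd (n := p ^ l) (a := 1) (b := γ.val ^ k)).mp h1.symm
      simpa using this      
    obtain ⟨e, he⟩ := h2
    have h3 : (γ ^ k : ZMod (p ^ n)) - 1 = (p : ZMod (p ^ n)) ^ l * (e : ZMod (p ^ n)) := by
      have hcast := congrArg (fun z : ℤ => (z : ZMod (p ^ n))) he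
      push_cast at hcast
      rw [hγv] at hcast
      rw [hcast]
    have h4 : γ ^ k * x - x ∈ Zt p n (a + l) := by
      have h5 : γ ^ k * x - x = (γ ^ k - 1) * x := by ring
      rw [h5, h3]
      obtain ⟨b, rfl⟩ := mem_Zt_iff.mp hx
      apply mem_Zt_iff.mpr
      refine ⟨(e : ZMod (p ^ n)) * b, ?_⟩
      rw [pow_add]
      ring
    have := hcong x hx (γ ^ k * x - x) h4
    rw [add_sub_cancel] at this
    exact this
  -- iteration
  have hXclosed : ∀ k : ℕ, ∀ x ∈ Zt p n a, γ ^ k * x ∈ Zt p n a := fun k x hx =>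
    Zt_mul_left _ hx
  have hiter : ∀ k : ℕ, ∀ x ∈ Zt p n a,
      (c₀ : ℚ) ^ k * ω x = (-(c₁ : ℚ)) ^ k * ω (γ ^ k * x) := by
    intro k
    induction k with
    | zero => intro x hx; simp
    | succ k IHk =>
      intro x hx
      have h1 := IHk x hx
      have h2 := hrel (γ ^ k * x) (hXclosed k x hx)
      have h3 : (c₀ : ℚ) * ω (γ ^ k * x) = -((c₁ : ℚ) * ω (γ * (γ ^ k * x))) := by linarith
      have h4 : γ * (γ ^ k * x) = γ ^ (k + 1) * x := by ring
      rw [h4] at h3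
      calc (c₀ : ℚ) ^ (k+1) * ω x = (c₀ : ℚ) ^ k * ω x * c₀ := by ring
        _ = (-(c₁:ℚ)) ^ k * ω (γ ^ k * x) * c₀ := by rw [h1]
        _ = (-(c₁:ℚ)) ^ k * ((c₀:ℚ) * ω (γ ^ k * x)) := by ring
        _ = (-(c₁:ℚ)) ^ k * (-((c₁ : ℚ) * ω (γ ^ (k+1) * x))) := by rw [h3]
        _ = (-(c₁:ℚ)) ^ (k+1) * ω (γ ^ (k+1) * x) := by ring
  intro x hx
  have hit := hiter d x hx
  rw [hmod d (pow_orderOf_eq_one u) x hx] at hit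
  by_cases hcase : (c₀ : ℚ) ^ d = (-(c₁ : ℚ)) ^ d
  swap
  · -- coefficients differ: done
    have : ((c₀ : ℚ) ^ d - (-(c₁ : ℚ)) ^ d) * ω x = 0 := by linarith
    rcases mul_eq_zero.mp this with h | h
    · exfalso; apply hcase; linarith
    · exact h
  -- equal coefficients: d even and c₀ = c₁
  have hdeven : Even d := by
    by_contra hodd
    rw [Nat.not_even_iff_odd] at hodd
    rw [hodd.neg_pow] at hcase
    have h1 : (0:ℚ) < (c₀:ℚ)^d := by positivity
    have h2 : (0:ℚ) < (c₁:ℚ)^d := by positivity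
    linarith
  have hceq : c₀ = c₁ := by
    rw [hdeven.neg_pow] at hcase
    have : (c₀ : ℚ) ^ d = (c₁ : ℚ) ^ d := hcase
    have h2 : c₀ ^ d = c₁ ^ d := by exact_mod_cast this
    exact Nat.pow_left_injective hd1.ne' h2
  subst hceq
  obtain ⟨h, hh⟩ := hdeven
  have hhd : d = 2 * h := by omega
  have hhpos : 0 < h := by omega
  have hhlt : h < d := by omega
  -- γ^h ≡ -1 mod p^l
  have hA : (p ^ l : ℤ) ∣ ((γ.val ^ h : ℕ) : ℤ) + 1 := by
    set A : ℤ := ((γ.val ^ h : ℕ) : ℤ) with hA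
    have hsq : (p ^ l : ℤ) ∣ (A - 1) * (A + 1) := by
      have h1 : u ^ d = 1 := pow_orderOf_eq_one u
      have h2 : ((γ.val ^ d : ℕ) : ZMod (p ^ l)) = ((1:ℕ) : ZMod (p ^ l)) := by
        have := congrArg (Units.val) h1
        push_cast [ZMod.coe_unitOfCoprime] at this
        push_cast
        exact this
      rw [ZMod.natCast_eq_natCast_iff] at h2
      have h3 : (p ^ l : ℤ) ∣ ((γ.val ^ d : ℕ) : ℤ) - 1 := by
        have := (Nat.modEq_iff_dvd (n := p ^ l) (a := 1) (b := γ.val ^ d)).mp h2.symm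
        simpa using this
      have h4 : ((γ.val ^ d : ℕ) : ℤ) - 1 = (A - 1) * (A + 1) := by
        rw [hA]
        push_cast
        rw [hhd]
        ring
      rw [← h4]
      exact h3
    have hnot1 : ¬ ((p ^ l : ℤ) ∣ (A - 1)) := by
      intro hdvd
      have h5 : ((γ.val ^ h : ℕ) : ZMod (p ^ l)) = ((1:ℕ) : ZMod (p ^ l)) := by
        rw [ZMod.natCast_eq_natCast_iff]
        apply (Nat.modEq_iff_dvd (n := p ^ l) (a := γ.val ^ h) (b := 1)).mpr
        have heq : ((1:ℕ) : ℤ) - ((γ.val ^ h : ℕ) : ℤ) = -(A - 1) := by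
          rw [hA]
          push_cast
          ring
        rw [heq]
        apply dvd_neg.mpr
        push_cast
        push_cast at hdvd
        exact hdvd
      have h6 : u ^ h = 1 := by
        apply Units.ext
        have hval : ((u : ZMod (p ^ l))) = ((γ.val : ℕ) : ZMod (p ^ l)) :=
          ZMod.coe_unitOfCoprime _ _
        have hpow : ((u ^ h : (ZMod (p ^ l))ˣ) : ZMod (p ^ l)) =
            ((γ.val ^ h : ℕ) : ZMod (p ^ l)) := by
          rw [Units.val_pow_eq_pow_val, hval]
          push_cast
          ring
        rw [hpow, h5]
        simp
      have := orderOf_le_of_pow_eq_one hhpos h6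
      omega
    have hprimeZ : Prime (p : ℤ) := Nat.prime_iff_prime_int.mp hp
    have hp3 : 3 ≤ p := by omega
    by_cases hp1 : (p : ℤ) ∣ (A - 1)
    · by_cases hp2 : (p : ℤ) ∣ (A + 1)
      · exfalso
        have hdvd2 : (p : ℤ) ∣ 2 := by
          have := dvd_sub hp2 hp1
          simpa using this
        have hp2' : (p : ℤ) ≤ 2 := Int.le_of_dvd (by norm_num) hdvd2
        have : (3 : ℤ) ≤ (p : ℤ) := by exact_mod_cast hp3
        omega
      · exfalso
        apply hnot1
        have := hprimeZ.pow_dvd_of_dvd_mul_right l hp2 (by push_cast at hsq ⊢; exact hsq)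
        push_cast at this ⊢
        exact this
    · have := hprimeZ.pow_dvd_of_dvd_mul_left l hp1 (by push_cast at hsq ⊢; exact hsq)
      push_cast at this ⊢
      exact this
  -- use it
  have hmodneg : ω (γ ^ h * x) = ω x := by
    obtain ⟨e, he⟩ := hA
    have h3 : (γ ^ h : ZMod (p ^ n)) + 1 = (p : ZMod (p ^ n)) ^ l * (e : ZMod (p ^ n)) := by
      have hcast := congrArg (fun z : ℤ => (z : ZMod (p ^ n))) he
      push_cast at hcast
      rw [hγv] at hcast
      rw [hcast]
    have h4 : γ ^ h * x - (-x) ∈ Zt p n (a + l) := by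
      have h5 : γ ^ h * x - (-x) = (γ ^ h + 1) * x := by ring
      rw [h5, h3]
      obtain ⟨b, rfl⟩ := mem_Zt_iff.mp hx
      apply mem_Zt_iff.mpr
      exact ⟨(e : ZMod (p ^ n)) * b, by rw [pow_add]; ring⟩
    have h6 := hcong (-x) (neg_mem hx) (γ ^ h * x - (-x)) h4
    rw [add_sub_cancel] at h6
    rw [h6]
    exact heven x hx
  have hith := hiter h x hx
  rw [hmodneg] at hith
  -- ω x = (-1)^h ω x
  rcases Nat.even_or_odd h with hhe | hho
  · -- h even: 4 ∣ d: contradiction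
    exfalso
    have h4d : 4 ∣ d := by
      obtain ⟨r, hr⟩ := hhe
      omega
    have hdvd : d ∣ p ^ (l - 1) * (p - 1) := by
      have h1 : d ∣ Fintype.card (ZMod (p ^ l))ˣ := orderOf_dvd_card
      rw [ZMod.card_units_eq_totient, Nat.totient_prime_pow hp (by omega : 0 < l)] at h1
      exact h1
    exact not_four_dvd hp4 (l - 1) (dvd_trans h4d hdvd)
  · -- h odd: ω x = -ω x
    rw [hho.neg_pow] at hith
    have hc0 : (0:ℚ) < (c₀:ℚ) ^ h := by positivity
    nlinarith [hith]

section Stage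

variable (lam : (Fin (2 * m) → ZMod (p ^ n)) → (Fin (2 * m) → ZMod (p ^ n)) → D)

lemma stage
    (hbl : ∀ x y z, lam (x + y) z = lam x z + lam y z)
    (hbr : ∀ x y z, lam x (y + z) = lam x y + lam x z)
    (hsymm : ∀ x y, lam x y = lam y x)
    (hnd : ∀ x, (∀ y, lam x y = 0) → x = 0)
    (M : AddSubgroup (Fin (2 * m) → ZMod (p ^ n)))
    (hM : ∀ x, x ∈ M ↔ ∀ y ∈ M, lam x y = 0)
    (f : ZMod (p ^ n) → ℚ) (hfneg : ∀ g, f (-g) = f g)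
    (hvan : ∀ g ∈ M, ∑ i, f (g i) = 0)
    (hp : p.Prime) (hp4 : p % 4 = 3) (hn0 : 0 < n) (hm : 0 < m)
    {j : ℕ} (hj1 : 1 ≤ j) (hj2 : 2 * j ≤ n + 1)
    (HP : ∀ x ∈ Zt p n (n - j + 1), f x = 0) :
    ∀ x ∈ Zt p n (n - j), f x = 0 := by
  classical
  have hjn : j ≤ n := by omega
  set S : AddSubgroup (Fin (2 * m) → ZMod (p ^ n)) := M ⊓ Pt p n m (n - j) with hSdef
  have hSM : ∀ g ∈ S, g ∈ M := fun g hg => (AddSubgroup.mem_inf.mp hg).1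
  have hScoord : ∀ g ∈ S, ∀ i, g i ∈ Zt p n (n - j) := fun g hg i =>
    mem_Pt_iff.mp (AddSubgroup.mem_inf.mp hg).2 i
  set ev : Fin (2 * m) → ((Fin (2 * m) → ZMod (p ^ n)) →+ ZMod (p ^ n)) :=
    fun i => Pi.evalAddMonoidHom (fun _ => ZMod (p ^ n)) i with hev
  have hmaple : ∀ i, S.map (ev i) ≤ Zt p n (n - j) := by
    intro i y hy
    obtain ⟨g, hg, rfl⟩ := AddSubgroup.mem_map.mp hy
    exact hScoord g hg i
  have hdich : ∀ i, S.map (ev i) = Zt p n (n - j) ∨ S.map (ev i) ≤ Zt p n (n - j + 1) := by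
    intro i
    by_cases hfl : S.map (ev i) ≤ Zt p n (n - j + 1)
    · exact Or.inr hfl
    · left
      obtain ⟨a, ha, hna⟩ := SetLike.not_le_iff_exists.mp hfl
      refine le_antisymm (hmaple i) (le_trans (Zt_le_zmultiples hp hn0 (hmaple i ha) hna) ?_)
      exact (AddSubgroup.zmultiples_le).mpr ha
  have hrank := rank_lemma lam hbl hbr hsymm hnd M hM hp hn0 hj1 hj2
  -- vanishing of p^(j-1)-multiples of deep coordinates
  have hdeep0 : ∀ y ∈ Zt p n (n - j + 1), (p ^ (j-1) : ℕ) • y = 0 := by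
    intro y hy
    have h2 := Zt_nsmul_shift (l := j - 1) hy
    have harith : (n - j + 1) + (j - 1) = n := by omega
    rw [harith] at h2
    exact (mem_Zt_n_iff hn0).mp h2
  -- existence of a full coordinate
  have hfull_exists : ∃ i, S.map (ev i) = Zt p n (n - j) := by
    have hpm : 1 < p ^ m := by
      have := hp.one_lt
      calc 1 < p := this
        _ = p ^ 1 := (pow_one p).symm
        _ ≤ p ^ m := Nat.pow_le_pow_right hp.pos hm
    have hgt1 : 1 < Nat.card ↥(Wsub p n m M j) := lt_of_lt_of_le hpm hrank
    have hnontriv : ∃ w, w ∈ Wsub p n m M j ∧ w ≠ 0 := by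
      by_contra hcon
      push_neg at hcon
      have hbot : Wsub p n m M j = ⊥ := by
        ext y
        simp only [AddSubgroup.mem_bot]
        exact ⟨fun hy => hcon y hy, fun hy => hy ▸ (Wsub p n m M j).zero_mem⟩
      rw [hbot, Nat.card_eq_fintype_card] at hgt1
      simp at hgt1
    obtain ⟨w, hwW, hw0⟩ := hnontriv
    obtain ⟨g, hgS, hgw⟩ := AddSubgroup.mem_map.mp hwW
    obtain ⟨i, hi⟩ : ∃ i, w i ≠ 0 := by
      by_contra hcon
      push_neg at hcon
      exact hw0 (funext hcon)
    refine ⟨i, ?_⟩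
    rcases hdich i with h | h
    · exact h
    · exfalso
      apply hi
      have h2 : g i ∈ Zt p n (n - j + 1) := h (AddSubgroup.mem_map.mpr ⟨g, hgS, rfl⟩)
      have h3 : w i = (p ^ (j-1) : ℕ) • (g i) := by
        rw [← hgw]
        rfl
      rw [h3]
      exact hdeep0 _ h2
  -- main sub-induction
  have QQ : ∀ l x, l ≤ j → x ∈ Zt p n (n - j) →
      (∑ w : ↥(Zt p n (n - j + l)), f (x + ↑w)) = 0 := by
    intro l
    induction l using Nat.strong_induction_on with
    | _ l IH =>
    intro x₀ hlj hx₀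
    set t := n - j + l with htdef
    have htn : t ≤ n := by omega
    -- the kernel subgroup for a base coordinate
    set K : Fin (2 * m) → AddSubgroup (Fin (2 * m) → ZMod (p ^ n)) :=
      fun i₀ => S ⊓ (Zt p n t).comap (ev i₀) with hK
    have hKS : ∀ i₀, K i₀ ≤ S := fun i₀ => inf_le_left
    -- collinearity predicate
    set Coll : Fin (2 * m) → Fin (2 * m) → Prop := fun i i' =>
      ∃ β : ZMod (p ^ n), IsUnit β ∧ ∀ g ∈ S, g i' - β * g i ∈ Zt p n t with hColl
    have hCrefl : ∀ i, Coll i i := by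
      intro i
      refine ⟨1, isUnit_one, fun g hg => ?_⟩
      rw [one_mul, sub_self]
      exact zero_mem _
    have hCsymm : ∀ i i', Coll i i' → Coll i' i := by
      rintro i i' ⟨β, hβu, hβ⟩
      obtain ⟨v, hv⟩ := hβu
      refine ⟨((v⁻¹ : (ZMod (p ^ n))ˣ) : ZMod (p ^ n)), (v⁻¹).isUnit, fun g hg => ?_⟩
      have h1 := hβ g hg
      have h2 : g i - ((v⁻¹ : (ZMod (p ^ n))ˣ) : ZMod (p ^ n)) * g i' =
          -(((v⁻¹ : (ZMod (p ^ n))ˣ) : ZMod (p ^ n)) * (g i' - β * g i)) := by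
        have hvv : ((v⁻¹ : (ZMod (p ^ n))ˣ) : ZMod (p ^ n)) * ((v : ZMod (p ^ n))) = 1 := by
          exact_mod_cast v.inv_mul
        rw [← hv]
        linear_combination (-(g i)) * hvv
      rw [h2]
      exact neg_mem (Zt_mul_left _ h1)
    have hCtrans : ∀ a b c, Coll a b → Coll b c → Coll a c := by
      rintro a b c ⟨β₁, hu₁, h₁⟩ ⟨β₂, hu₂, h₂⟩
      refine ⟨β₂ * β₁, hu₂.mul hu₁, fun g hg => ?_⟩
      have h3 : g c - β₂ * β₁ * g a = (g c - β₂ * g b) + β₂ * (g b - β₁ * g a) := by ring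
      rw [h3]
      exact add_mem (h₂ g hg) (Zt_mul_left _ (h₁ g hg))
    -- Full finset
    set FullF : Finset (Fin (2 * m)) :=
      Finset.univ.filter (fun i => S.map (ev i) = Zt p n (n - j)) with hFullF
    set Ifin : Fin (2 * m) → Finset (Fin (2 * m)) :=
      fun i₀ => FullF.filter (fun i => Coll i₀ i) with hIfin
    -- Coll implies the K-map bound
    have hColl_to_K : ∀ i₀ i, Coll i₀ i → (K i₀).map (ev i) ≤ Zt p n t := by
      rintro i₀ i ⟨β, hβu, hβ⟩ y hy
      obtain ⟨g, hg, rfl⟩ := AddSubgroup.mem_map.mp hy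
      have hgS : g ∈ S := hKS i₀ hg
      have h1 : g i₀ ∈ Zt p n t := (AddSubgroup.mem_inf.mp hg).2
      have h2 := hβ g hgS
      have h3 : (ev i) g = (g i - β * g i₀) + β * g i₀ := by
        show g i = _
        ring
      rw [h3]
      exact add_mem h2 (Zt_mul_left _ h1)
    -- K-map bound implies Coll (the collinearity construction)
    have hK_to_Coll : ∀ i₀ ∈ FullF, ∀ i ∈ FullF,
        (K i₀).map (ev i) ≤ Zt p n t → Coll i₀ i := by
      intro i₀ hi₀ i hi hKle
      rcases Nat.eq_zero_or_pos l with hl0 | hl1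
      · refine ⟨1, isUnit_one, fun g hg => ?_⟩
        rw [one_mul]
        have h1 : g i ∈ Zt p n (n - j) := hScoord g hg i
        have h2 : g i₀ ∈ Zt p n (n - j) := hScoord g hg i₀
        have ht0 : t = n - j := by omega
        rw [ht0]
        exact sub_mem h1 h2
      · -- find s* with s* i₀ = p^(n-j)
        have hfl₀ : S.map (ev i₀) = Zt p n (n - j) := (Finset.mem_filter.mp hi₀).2
        have hfl : S.map (ev i) = Zt p n (n - j) := (Finset.mem_filter.mp hi).2
        have hmem : (p : ZMod (p ^ n)) ^ (n - j) ∈ S.map (ev i₀) := by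
          rw [hfl₀]
          exact mem_Zt_iff.mpr ⟨1, (mul_one _).symm⟩
        obtain ⟨sstar, hsS, hsi₀⟩ := AddSubgroup.mem_map.mp hmem
        have hsi₀' : sstar i₀ = (p : ZMod (p ^ n)) ^ (n - j) := hsi₀
        obtain ⟨c, hc⟩ := mem_Zt_iff.mp (hScoord sstar hsS i)
        -- the congruence with β = c
        have hcong : ∀ g ∈ S, g i - c * g i₀ ∈ Zt p n t := by
          intro g hg
          obtain ⟨b, hb⟩ := mem_Zt_iff.mp (hScoord g hg i₀)
          obtain ⟨k, hk⟩ := ZMod.intCast_surjective b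
          have hgK : g - k • sstar ∈ K i₀ := by
            apply AddSubgroup.mem_inf.mpr
            constructor
            · exact sub_mem hg (zsmul_mem hsS k)
            · show (ev i₀) (g - k • sstar) ∈ Zt p n t
              have h4 : (ev i₀) (g - k • sstar) = g i₀ - (k : ZMod (p ^ n)) * sstar i₀ := by
                show (g - k • sstar) i₀ = _
                rw [Pi.sub_apply, Pi.smul_apply, zsmul_eq_mul]
              rw [h4, hsi₀', hb, hk]
              have h5 : (p:ZMod (p^n)) ^ (n-j) * b - b * (p:ZMod (p^n)) ^ (n-j) = 0 := by ring
              rw [h5]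
              exact zero_mem _
          have h6 : (g - k • sstar) i ∈ Zt p n t :=
            hKle (AddSubgroup.mem_map.mpr ⟨_, hgK, rfl⟩)
          have h7 : (g - k • sstar) i = g i - c * g i₀ := by
            rw [Pi.sub_apply, Pi.smul_apply, zsmul_eq_mul, hk, hc, hb]
            ring
          rw [h7] at h6
          exact h6
        -- c is a unit
        rcases unit_or_mem_Zt_one hp hn0 c with hcu | hc1
        · exact ⟨c, hcu, hcong⟩
        · exfalso
          obtain ⟨c', hc'⟩ := mem_Zt_iff.mp hc1
          have hSle : S.map (ev i) ≤ Zt p n (n - j + 1) := by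
            intro y hy
            obtain ⟨g, hg, rfl⟩ := AddSubgroup.mem_map.mp hy
            have h8 := hcong g hg
            have h9 : (ev i) g = (g i - c * g i₀) + c * g i₀ := by
              show g i = _
              ring
            rw [h9]
            apply add_mem
            · exact Zt_antitone (by omega) h8
            · obtain ⟨b, hb⟩ := mem_Zt_iff.mp (hScoord g hg i₀)
              rw [hb, hc']
              apply mem_Zt_iff.mpr
              refine ⟨c' * b, ?_⟩
              ring
          rw [hfl] at hSle
          exact Zt_not_le_succ hp hn0 (by omega) hSle
    -- the relation for a full base coordinate
    have REL : ∀ i₀ ∈ FullF, ∀ s ∈ S,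
        ∑ i ∈ Ifin i₀,
          (Nat.card ((ev i).comp (K i₀).subtype).ker : ℚ) *
            (∑ w : ↥(Zt p n t), f (s i + ↑w)) = 0 := by
      intro i₀ hi₀ s hs
      have h0 : ∑ k : ↥(K i₀), (∑ i, f ((s + (k : Fin (2*m) → ZMod (p^n))) i)) = 0 := by
        apply Finset.sum_eq_zero
        intro k _
        exact hvan _ (M.add_mem (hSM s hs) (hSM _ (hKS i₀ k.2)))
      have h1 : ∑ i, (∑ k : ↥(K i₀), f (s i + ((k : Fin (2*m) → ZMod (p^n))) i)) = 0 := by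
        rw [Finset.sum_comm]
        rw [← h0]
        exact Finset.sum_congr rfl fun k _ => Finset.sum_congr rfl fun i _ => rfl
      have hWiff : ∀ i, ∀ b, b ∈ (K i₀).map (ev i) ↔
          ∃ k : ↥(K i₀), ((ev i).comp (K i₀).subtype) k = b := by
        intro i b
        rw [AddSubgroup.mem_map]
        constructor
        · rintro ⟨g, hg, rfl⟩
          exact ⟨⟨g, hg⟩, rfl⟩
        · rintro ⟨k, rfl⟩
          exact ⟨k.1, k.2, rfl⟩
      have h2 : ∀ i, (∑ k : ↥(K i₀), f (s i + ((k : Fin (2*m) → ZMod (p^n))) i)) =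
          (Nat.card ((ev i).comp (K i₀).subtype).ker : ℚ) *
            ∑ b : ↥((K i₀).map (ev i)), f (s i + ↑b) :=
        fun i => sum_comp_hom ((ev i).comp (K i₀).subtype) (fun b => f (s i + b))
          ((K i₀).map (ev i)) (hWiff i)
      have h3 : ∀ i, i ∉ Ifin i₀ →
          (∑ b : ↥((K i₀).map (ev i)), f (s i + ↑b)) = 0 := by
        intro i hi
        by_cases hifull : S.map (ev i) = Zt p n (n - j)
        · have hiF : i ∈ FullF := Finset.mem_filter.mpr ⟨Finset.mem_univ _, hifull⟩
          have hnotColl : ¬ Coll i₀ i := fun hc => hi (Finset.mem_filter.mpr ⟨hiF, hc⟩)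
          have hnotle : ¬ ((K i₀).map (ev i) ≤ Zt p n t) := fun hle =>
            hnotColl (hK_to_Coll i₀ hi₀ i hiF hle)
          obtain ⟨a, ha, hna⟩ := SetLike.not_le_iff_exists.mp hnotle
          have hl1 : 1 ≤ l := by
            by_contra hl0
            push_neg at hl0
            have hl0' : l = 0 := by omega
            apply hna
            have ht0 : t = n - j := by omega
            rw [ht0]
            exact hmaple i (AddSubgroup.map_mono (hKS i₀) ha)
          have haZ : a ∈ Zt p n (n - j) := hmaple i (AddSubgroup.map_mono (hKS i₀) ha)
          have ha0 : a ≠ 0 := fun h => hna (h ▸ zero_mem _)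
          obtain ⟨sv, hsvn, u, hu⟩ := unit_decomp hp hn0 ha0
          have hsv1 : n - j ≤ sv := mem_Zt_le_of_unit hp hn0 hsvn u (hu ▸ haZ)
          have hsv2 : sv < t := by
            by_contra hcon
            push_neg at hcon
            apply hna
            rw [hu]
            exact Zt_antitone hcon (Zt_mul_mem _)
          have hVle : Zt p n (t - 1) ≤ (K i₀).map (ev i) := by
            calc Zt p n (t-1) ≤ Zt p n sv := Zt_antitone (by omega)
              _ ≤ AddSubgroup.zmultiples a := by
                  apply Zt_le_zmultiples hp hn0
                  · rw [hu]; exact Zt_mul_mem _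
                  · rw [hu]; exact pow_unit_not_mem hp hn0 hsvn u
              _ ≤ (K i₀).map (ev i) := (AddSubgroup.zmultiples_le).mpr ha
          apply coset_split hVle
          intro w
          have hsw : s i + ↑w ∈ Zt p n (n - j) := by
            apply add_mem (hScoord s hs i)
            exact hmaple i (AddSubgroup.map_mono (hKS i₀) w.2)
          have hIH := IH (l - 1) (by omega) (s i + ↑w) (by omega) hsw
          have harith : t - 1 = n - j + (l - 1) := by omega
          rw [harith]
          exact hIH
        · apply Finset.sum_eq_zero
          intro b _
          apply HP
          have h5 : S.map (ev i) ≤ Zt p n (n - j + 1) := (hdich i).resolve_left hifull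
          apply add_mem
          · exact h5 (AddSubgroup.mem_map.mpr ⟨s, hs, rfl⟩)
          · exact h5 (AddSubgroup.map_mono (hKS i₀) b.2)
      have h4 : ∀ i ∈ Ifin i₀, (K i₀).map (ev i) = Zt p n t := by
        intro i hi
        have hiF := (Finset.mem_filter.mp hi).1
        have hC := (Finset.mem_filter.mp hi).2
        apply le_antisymm (hColl_to_K i₀ i hC)
        intro z hz
        obtain ⟨b, rfl⟩ := mem_Zt_iff.mp hz
        have hfl : S.map (ev i) = Zt p n (n - j) := (Finset.mem_filter.mp hiF).2
        have h6 : (p : ZMod (p^n)) ^ (n - j) * b ∈ S.map (ev i) := by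
          rw [hfl]
          exact Zt_mul_mem b
        obtain ⟨g, hg, hgi⟩ := AddSubgroup.mem_map.mp h6
        have hgi' : g i = (p : ZMod (p^n)) ^ (n-j) * b := hgi
        refine AddSubgroup.mem_map.mpr ⟨(p ^ l : ℕ) • g, ?_, ?_⟩
        · refine AddSubgroup.mem_inf.mpr ⟨AddSubgroup.nsmul_mem _ hg _, ?_⟩
          show (ev i₀) ((p ^ l : ℕ) • g) ∈ Zt p n t
          rw [map_nsmul]
          have h7 := Zt_nsmul_shift (l := l) (hScoord g hg i₀)
          exact h7
        · show (ev i) ((p ^ l : ℕ) • g) = (p : ZMod (p^n)) ^ t * b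
          rw [map_nsmul]
          have h8 : (ev i) g = (p : ZMod (p^n)) ^ (n-j) * b := hgi'
          rw [h8, nsmul_eq_mul]
          have h9 : (p : ZMod (p^n)) ^ t = (p : ZMod (p^n)) ^ (n - j) * (p : ZMod (p^n)) ^ l := by
            rw [htdef, pow_add]
          rw [h9]
          push_cast
          ring
      -- assemble
      have h10 : ∑ i, (Nat.card ((ev i).comp (K i₀).subtype).ker : ℚ) *
          (∑ b : ↥((K i₀).map (ev i)), f (s i + ↑b)) = 0 := by
        rw [← h1]
        exact Finset.sum_congr rfl fun i _ => (h2 i).symm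
      have h11 : ∑ i ∈ Ifin i₀, (Nat.card ((ev i).comp (K i₀).subtype).ker : ℚ) *
          (∑ b : ↥((K i₀).map (ev i)), f (s i + ↑b)) = 0 := by
        rw [Finset.sum_subset (Finset.subset_univ (Ifin i₀))]
        · exact h10
        · intro i _ hi
          rw [h3 i hi, mul_zero]
      rw [← h11]
      refine Finset.sum_congr rfl fun i hi => ?_
      congr 1
      rw [h4 i hi]
    -- choose the collinearity coefficients
    set B : Fin (2*m) → Fin (2*m) → ZMod (p^n) := fun i₀ i =>
      if h : Coll i₀ i then Classical.choose h else 1 with hB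
    have hBu : ∀ i₀ i, Coll i₀ i → IsUnit (B i₀ i) := by
      intro i₀ i h
      rw [hB]
      simp only [dif_pos h]
      exact (Classical.choose_spec h).1
    have hBc : ∀ i₀ i, Coll i₀ i → ∀ g ∈ S, g i - (B i₀ i) * g i₀ ∈ Zt p n t := by
      intro i₀ i h
      rw [hB]
      simp only [dif_pos h]
      exact (Classical.choose_spec h).2
    -- positivity of the coefficients
    have hcpos : ∀ i₀ i, 0 < Nat.card ((ev i).comp (K i₀).subtype).ker := by
      intro i₀ i
      exact @Nat.card_pos _ ⟨⟨0, zero_mem _⟩⟩ _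
    -- relation in terms of x
    have RELX : ∀ i₀ ∈ FullF, ∀ x ∈ Zt p n (n - j),
        ∑ i ∈ Ifin i₀, (Nat.card ((ev i).comp (K i₀).subtype).ker : ℚ) *
          (∑ w : ↥(Zt p n t), f ((B i₀ i) * x + ↑w)) = 0 := by
      intro i₀ hi₀ x hx
      have hfl₀ : S.map (ev i₀) = Zt p n (n - j) := (Finset.mem_filter.mp hi₀).2
      have hxm : x ∈ S.map (ev i₀) := hfl₀ ▸ hx
      obtain ⟨s, hs, hsx⟩ := AddSubgroup.mem_map.mp hxm
      have hsx' : s i₀ = x := hsx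
      have h8 := REL i₀ hi₀ s hs
      rw [← h8]
      refine Finset.sum_congr rfl fun i hi => ?_
      congr 1
      have hC := (Finset.mem_filter.mp hi).2
      have hd : s i - (B i₀ i) * x ∈ Zt p n t := by
        rw [← hsx']
        exact hBc i₀ i hC s hs
      have h9 : s i = (B i₀ i) * x + (s i - B i₀ i * x) := by ring
      rw [h9]
      exact (sum_shift_subgroup (Zt p n t) f hd ((B i₀ i) * x)).symm
    rcases Nat.eq_zero_or_pos l with hl0 | hl1
    · -- level 0 : all terms coincide
      obtain ⟨i₀, hfl₀⟩ := hfull_exists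
      have hi₀F : i₀ ∈ FullF := Finset.mem_filter.mpr ⟨Finset.mem_univ _, hfl₀⟩
      have hR := RELX i₀ hi₀F x₀ hx₀
      have hsame : ∀ i ∈ Ifin i₀, (∑ w : ↥(Zt p n t), f ((B i₀ i) * x₀ + ↑w)) =
          (∑ w : ↥(Zt p n t), f (x₀ + ↑w)) := by
        intro i hi
        have hd : (B i₀ i) * x₀ - x₀ ∈ Zt p n t := by
          have h1 : (B i₀ i) * x₀ ∈ Zt p n (n-j) := Zt_mul_left _ hx₀
          have ht0 : t = n - j := by omega
          rw [ht0]
          exact sub_mem h1 hx₀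
        have h9 : (B i₀ i) * x₀ = x₀ + ((B i₀ i) * x₀ - x₀) := by ring
        rw [h9]
        exact sum_shift_subgroup (Zt p n t) f hd x₀
      rw [Finset.sum_congr rfl (fun i hi => by rw [hsame i hi])] at hR
      rw [← Finset.sum_mul] at hR
      rcases mul_eq_zero.mp hR with h | h
      · exfalso
        have hi₀I : i₀ ∈ Ifin i₀ := Finset.mem_filter.mpr ⟨hi₀F, hCrefl i₀⟩
        have hpos : (0:ℚ) < ∑ i ∈ Ifin i₀,
            (Nat.card ((ev i).comp (K i₀).subtype).ker : ℚ) := by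
          apply Finset.sum_pos
          · intro i _
            exact_mod_cast hcpos i₀ i
          · exact ⟨i₀, hi₀I⟩
        linarith
      · exact h
    -- level ≥ 1
    · have hclass : ∀ i₀ ∈ FullF, ∀ i ∈ Ifin i₀, Ifin i = Ifin i₀ := by
        intro i₀ hi₀ i hi
        have hC := (Finset.mem_filter.mp hi).2
        ext i'
        simp only [hIfin, Finset.mem_filter]
        constructor
        · rintro ⟨hF, hC'⟩
          exact ⟨hF, hCtrans _ _ _ hC hC'⟩
        · rintro ⟨hF, hC'⟩
          exact ⟨hF, hCtrans _ _ _ (hCsymm _ _ hC) hC'⟩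
      set reps : Finset (Finset (Fin (2*m))) := FullF.image Ifin with hreps
      have h2m : 0 < 2 * m := by omega
      set rep : Finset (Fin (2*m)) → Fin (2*m) := fun A =>
        if h : A.Nonempty then A.min' h else ⟨0, h2m⟩ with hrep
      have hrep_mem : ∀ (A : Finset (Fin (2*m))), A.Nonempty → rep A ∈ A := by
        intro A h
        rw [hrep]
        simp only [dif_pos h]
        exact A.min'_mem h
      have hrepColl : ∀ i ∈ FullF, Coll (rep (Ifin i)) i := by
        intro i hi
        have hme : i ∈ Ifin i := Finset.mem_filter.mpr ⟨hi, hCrefl i⟩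
        have hrm : rep (Ifin i) ∈ Ifin i := hrep_mem _ ⟨i, hme⟩
        exact hCsymm _ _ (Finset.mem_filter.mp hrm).2
      -- uniform coordinates of W elements
      have hWrep : ∀ w ∈ Wsub p n m M j, ∀ i ∈ FullF,
          w i = (B (rep (Ifin i)) i) * w (rep (Ifin i)) := by
        intro w hw i hi
        obtain ⟨g, hg, hgw⟩ := AddSubgroup.mem_map.mp hw
        have hgw' : ∀ i', w i' = (p^(j-1) : ℕ) • g i' := by
          intro i'
          rw [← hgw]
          rfl
        have hcong := hBc _ _ (hrepColl i hi) g hg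
        have h2 : (p^(j-1):ℕ) • (g i - (B (rep (Ifin i)) i) * g (rep (Ifin i))) = 0 := by
          have h3 := Zt_nsmul_shift (l := j-1) hcong
          have harith : n ≤ t + (j - 1) := by omega
          exact (mem_Zt_n_iff hn0).mp (Zt_antitone harith h3)
        have h4 : g i = (B (rep (Ifin i)) i) * g (rep (Ifin i)) +
            (g i - (B (rep (Ifin i)) i) * g (rep (Ifin i))) := by ring
        rw [hgw' i, hgw' (rep (Ifin i)), h4, smul_add, h2, add_zero, nsmul_eq_mul, nsmul_eq_mul]
        ring
      -- cardinality bound via injection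
      have hinj : Nat.card ↥(Wsub p n m M j) ≤ p ^ reps.card := by
        have hmapmem : ∀ w : ↥(Wsub p n m M j), ∀ A : {A // A ∈ reps},
            w.1 (rep A.1) ∈ Zt p n (n-1) := by
          intro w A
          obtain ⟨g, hg, hgw⟩ := AddSubgroup.mem_map.mp w.2
          have h5 : w.1 (rep A.1) = (p^(j-1):ℕ) • g (rep A.1) := by
            rw [← hgw]
            rfl
          rw [h5]
          have h6 := Zt_nsmul_shift (l := j-1) (hScoord g hg (rep A.1))
          have harith : (n - j) + (j-1) = n - 1 := by omega
          rwa [harith] at h6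
        set Φ : ↥(Wsub p n m M j) → ({A // A ∈ reps} → ↥(Zt p n (n-1))) :=
          fun w A => ⟨w.1 (rep A.1), hmapmem w A⟩ with hΦ
        have hΦinj : Function.Injective Φ := by
          intro w w' hww
          apply Subtype.ext
          funext i
          by_cases hiF : i ∈ FullF
          · have hA : Ifin i ∈ reps := Finset.mem_image.mpr ⟨i, hiF, rfl⟩
            have h6 := congrFun hww ⟨Ifin i, hA⟩
            have h7 : w.1 (rep (Ifin i)) = w'.1 (rep (Ifin i)) := congrArg Subtype.val h6
            rw [hWrep w.1 w.2 i hiF, hWrep w'.1 w'.2 i hiF, h7]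
          · have h8 : ∀ (v : ↥(Wsub p n m M j)), v.1 i = 0 := by
              intro v
              obtain ⟨g, hg, hgw⟩ := AddSubgroup.mem_map.mp v.2
              have h9 : v.1 i = (p^(j-1):ℕ) • g i := by
                rw [← hgw]
                rfl
              rw [h9]
              apply hdeep0
              have h10 : S.map (ev i) ≤ Zt p n (n-j+1) := by
                rcases hdich i with h | h
                · have h11 : i ∈ FullF := Finset.mem_filter.mpr ⟨Finset.mem_univ i, h⟩
                  exact absurd h11 hiF
                · exact h
              exact h10 (AddSubgroup.mem_map.mpr ⟨g, hg, rfl⟩)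
            rw [h8 w, h8 w']
        calc Nat.card ↥(Wsub p n m M j)
            ≤ Nat.card ({A // A ∈ reps} → ↥(Zt p n (n-1))) :=
              Nat.card_le_card_of_injective Φ hΦinj
          _ = p ^ reps.card := by
              rw [Nat.card_fun, card_Zt hp (by omega)]
              have h10 : n - (n-1) = 1 := by omega
              rw [h10, pow_one]
              congr 1
              rw [Nat.card_eq_fintype_card, Fintype.card_coe]
      have hrm : m ≤ reps.card :=
        (Nat.pow_le_pow_iff_right hp.one_lt).mp (le_trans hrank hinj)
      -- disjointness and pigeonhole
      have hdisj : ∀ A ∈ reps, ∀ A' ∈ reps, A ≠ A' → Disjoint A A' := by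
        intro A hA A' hA' hne
        obtain ⟨a₀, ha₀, rfl⟩ := Finset.mem_image.mp hA
        obtain ⟨b₀, hb₀, rfl⟩ := Finset.mem_image.mp hA'
        rw [Finset.disjoint_left]
        intro x hxA hxB
        exact hne (by rw [← hclass a₀ ha₀ x hxA, ← hclass b₀ hb₀ x hxB])
      have hsumcard : ∑ A ∈ reps, A.card ≤ 2 * m := by
        rw [← Finset.card_biUnion hdisj]
        calc (reps.biUnion id).card ≤ (Finset.univ : Finset (Fin (2*m))).card :=
              Finset.card_le_card (Finset.subset_univ _)
          _ = 2 * m := by rw [Finset.card_univ, Fintype.card_fin]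
      have hsmall : ∃ A ∈ reps, A.card ≤ 2 := by
        by_contra hcon
        push_neg at hcon
        have h12 : 3 * reps.card ≤ ∑ A ∈ reps, A.card := by
          calc 3 * reps.card = ∑ _A ∈ reps, 3 := by
                rw [Finset.sum_const, smul_eq_mul, mul_comm]
            _ ≤ ∑ A ∈ reps, A.card := Finset.sum_le_sum (fun A hA => hcon A hA)
        omega
      obtain ⟨A, hA, hAcard⟩ := hsmall
      obtain ⟨i₀, hi₀F, hAe⟩ := Finset.mem_image.mp hA
      have hi₀A : i₀ ∈ A := by
        rw [← hAe]
        exact Finset.mem_filter.mpr ⟨hi₀F, hCrefl i₀⟩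
      have hA1 : 1 ≤ A.card := Finset.card_pos.mpr ⟨i₀, hi₀A⟩
      have hstep : ∀ y ∈ Zt p n (n - j), (∑ w : ↥(Zt p n t), f (y + ↑w)) = 0 := by
        rcases (by omega : A.card = 1 ∨ A.card = 2) with h1 | h2
        · -- singleton class
          obtain ⟨a, hAeq⟩ := Finset.card_eq_one.mp h1
          intro y hy
          have haI : a ∈ Ifin i₀ := by
            rw [hAe, hAeq]
            exact Finset.mem_singleton_self a
          have hCa := (Finset.mem_filter.mp haI).2
          obtain ⟨v, hv⟩ := hBu i₀ a hCa
          have hxZ : ((v⁻¹ : (ZMod (p^n))ˣ) : ZMod (p^n)) * y ∈ Zt p n (n-j) :=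
            Zt_mul_left _ hy
          have hR := RELX i₀ hi₀F _ hxZ
          rw [hAe, hAeq, Finset.sum_singleton] at hR
          have hBx : (B i₀ a) * (((v⁻¹ : (ZMod (p^n))ˣ) : ZMod (p^n)) * y) = y := by
            rw [← hv, ← mul_assoc]
            have hvv : (v : ZMod (p^n)) * ((v⁻¹ : (ZMod (p^n))ˣ) : ZMod (p^n)) = 1 := by
              exact_mod_cast v.mul_inv
            rw [hvv, one_mul]
          rw [hBx] at hR
          rcases mul_eq_zero.mp hR with h | h
          · exfalso
            have h13 : (0:ℚ) < (Nat.card ((ev a).comp (K i₀).subtype).ker : ℚ) := by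
              exact_mod_cast hcpos i₀ a
            linarith
          · exact h
        · -- two-element class: endgame
          obtain ⟨a, b, hab, hAeq⟩ := Finset.card_eq_two.mp h2
          have haI : a ∈ Ifin i₀ := by
            rw [hAe, hAeq]
            simp
          have hbI : b ∈ Ifin i₀ := by
            rw [hAe, hAeq]
            simp
          have hCa := (Finset.mem_filter.mp haI).2
          have hCb := (Finset.mem_filter.mp hbI).2
          obtain ⟨va, hva⟩ := hBu i₀ a hCa
          have hγu : IsUnit ((B i₀ b) * ((va⁻¹ : (ZMod (p^n))ˣ) : ZMod (p^n))) :=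
            (hBu i₀ b hCb).mul (va⁻¹).isUnit
          have hrelE : ∀ y ∈ Zt p n (n - j),
              (Nat.card ((ev a).comp (K i₀).subtype).ker : ℚ) *
                (∑ w : ↥(Zt p n t), f (y + ↑w)) +
              (Nat.card ((ev b).comp (K i₀).subtype).ker : ℚ) *
                (∑ w : ↥(Zt p n t), f (((B i₀ b) * ((va⁻¹ : (ZMod (p^n))ˣ) : ZMod (p^n))) * y + ↑w)) = 0 := by
            intro y hy
            have hxZ : ((va⁻¹ : (ZMod (p^n))ˣ) : ZMod (p^n)) * y ∈ Zt p n (n-j) :=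
              Zt_mul_left _ hy
            have hR := RELX i₀ hi₀F _ hxZ
            rw [hAe, hAeq, Finset.sum_pair hab] at hR
            have hBx : (B i₀ a) * (((va⁻¹ : (ZMod (p^n))ˣ) : ZMod (p^n)) * y) = y := by
              rw [← hva, ← mul_assoc]
              have hvv : (va : ZMod (p^n)) * ((va⁻¹ : (ZMod (p^n))ˣ) : ZMod (p^n)) = 1 := by
                exact_mod_cast va.mul_inv
              rw [hvv, one_mul]
            have hBy : (B i₀ b) * (((va⁻¹ : (ZMod (p^n))ˣ) : ZMod (p^n)) * y) =
                ((B i₀ b) * ((va⁻¹ : (ZMod (p^n))ˣ) : ZMod (p^n))) * y := by ring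
            rw [hBx, hBy] at hR
            exact hR
          have hSZneg : ∀ x ∈ Zt p n (n - j),
              (∑ w : ↥(Zt p n t), f (-x + ↑w)) = ∑ w : ↥(Zt p n t), f (x + ↑w) := by
            intro x _
            rw [← Equiv.sum_comp (Equiv.neg ↥(Zt p n t)) (fun w => f (-x + ↑w))]
            refine Finset.sum_congr rfl fun w _ => ?_
            show f (-x + ↑(-w)) = f (x + ↑w)
            have hcoe : ((-w : ↥(Zt p n t)) : ZMod (p^n)) = -(w : ZMod (p^n)) := rfl
            rw [hcoe, show -x + -(w : ZMod (p^n)) = -(x + ↑w) by ring, hfneg]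
          have hSZcong : ∀ x ∈ Zt p n (n - j), ∀ d ∈ Zt p n ((n - j) + l),
              (∑ w : ↥(Zt p n t), f ((x + d) + ↑w)) = ∑ w : ↥(Zt p n t), f (x + ↑w) := by
            intro x _ d hd
            exact sum_shift_subgroup (Zt p n t) f hd x
          exact endgame hp hp4 hn0 hl1 (by omega)
            (fun y => ∑ w : ↥(Zt p n t), f (y + ↑w)) hSZneg hSZcong
            (Nat.card ((ev a).comp (K i₀).subtype).ker)
            (Nat.card ((ev b).comp (K i₀).subtype).ker)
            (hcpos i₀ a) (hcpos i₀ b) _ hγu hrelE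
      exact hstep x₀ hx₀
  -- conclude
  intro x hx
  have hQ := QQ j x le_rfl hx
  have harithn : n - j + j = n := by omega
  rw [harithn] at hQ
  have hone : ∀ w : ↥(Zt p n n), f (x + ↑w) = f x := by
    intro w
    rw [(mem_Zt_n_iff hn0).mp w.2, add_zero]
  rw [Finset.sum_congr rfl (fun w _ => hone w), Finset.sum_const] at hQ
  have hcard : (Finset.univ : Finset ↥(Zt p n n)).card = 1 := by
    rw [Finset.card_univ, ← Nat.card_eq_fintype_card, card_Zt hp le_rfl]
    simp
  rw [hcard, one_smul] at hQ
  exact hQ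

end Stage

end Main

end Stmt2Aux

/-- Proposition `metabolizers`: if `f : ℤ/p^nℤ → ℚ` (with `f 0 = 0`, `f(-g) = f(g)`)
has `f^(2m)` vanishing on a metabolizer of a compatible non-degenerate symmetric
bilinear pairing on `(ℤ/p^nℤ)^(2m)`, where `p ≡ 3 (mod 4)` and `n` is odd, then `f`
vanishes on the subgroup generated by `p^((n-1)/2)`. -/
theorem stmt_2 (p n m : ℕ) (hp : p.Prime) (hp4 : p % 4 = 3) (hn : Odd n) (hn0 : 0 < n)
    (hm : 0 < m)
    (lam : (Fin (2 * m) → ZMod (p ^ n)) → (Fin (2 * m) → ZMod (p ^ n)) → AddCircle (1 : ℚ))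
    (hbl : ∀ x y z, lam (x + y) z = lam x z + lam y z)
    (hbr : ∀ x y z, lam x (y + z) = lam x y + lam x z)
    (hsymm : ∀ x y, lam x y = lam y x)
    (hnd : ∀ x, (∀ y, lam x y = 0) → x = 0)
    (M : AddSubgroup (Fin (2 * m) → ZMod (p ^ n)))
    (hM : ∀ x, x ∈ M ↔ ∀ y ∈ M, lam x y = 0)
    (f : ZMod (p ^ n) → ℚ) (hf0 : f 0 = 0) (hfneg : ∀ g, f (-g) = f g)
    (hcompat : ∀ g : Fin (2 * m) → ZMod (p ^ n),
      ((∑ i, f (g i) : ℚ) : AddCircle (1 : ℚ)) =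
        ∑ i, lam (Pi.single i (g i)) (Pi.single i (g i)))
    (hvan : ∀ g ∈ M, ∑ i, f (g i) = 0) :
    ∀ x ∈ AddSubgroup.zmultiples ((p : ZMod (p ^ n)) ^ ((n - 1) / 2)), f x = 0 := by
  haveI : NeZero (p ^ n) := ⟨pow_ne_zero n hp.ne_zero⟩
  obtain ⟨ν, hν⟩ := hn
  have main : ∀ j, j ≤ ν + 1 → ∀ x ∈ Stmt2Aux.Zt p n (n - j), f x = 0 := by
    intro j
    induction j with
    | zero =>
      intro _ x hx
      have h0 : x = 0 := by
        apply (Stmt2Aux.mem_Zt_n_iff hn0).mp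
        simpa using hx
      rw [h0]
      exact hf0
    | succ j IHj =>
      intro hj x hx
      refine Stmt2Aux.stage lam hbl hbr hsymm hnd M hM f hfneg hvan hp hp4 hn0 hm
        (j := j + 1) (by omega) (by omega) ?_ x hx
      intro y hy
      apply IHj (by omega)
      have harith : n - (j + 1) + 1 = n - j := by omega
      rwa [harith] at hy
  intro x hx
  apply main (ν + 1) le_rfl
  have harith : n - (ν + 1) = (n - 1) / 2 := by omega
  rw [harith]
  exact hx
end

section
/- Let p be a prime, let n and N be positive integers, and let M be a subgroup of G = (ℤ/p^nℤ)^N. Then there exist a permutation σ of the N coordinates of G, a natural number ℓ ≤ N, a nondecreasing sequence of exponents 0 ≤ a₁ ≤ a₂ ≤ ⋯ ≤ a_ℓ ≤ n-1, and elements ω₁, …, ω_ℓ generating the image of M under the coordinate permutation induced by σ, such that for each 1 ≤ i ≤ ℓ: the j-th coordinate of ω_i is 0 for all j < i, the i-th coordinate of ω_i equals the class of p^{a_i}, and for every j > i the j-th coordinate of ω_i lies in the subgroup p^{a_i}·(ℤ/p^nℤ). -/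
lemma zmod_key (p n : ℕ) (hp : p.Prime) (x : ZMod (p ^ n)) (hx : x ≠ 0) :
    padicValNat p x.val < n ∧
    (∃ u : ZMod (p ^ n), IsUnit u ∧ x = (p : ZMod (p ^ n)) ^ (padicValNat p x.val) * u) ∧
    (∀ b ≤ n, ((p : ZMod (p ^ n)) ^ b ∣ x ↔ b ≤ padicValNat p x.val)) := by
  haveI : Fact p.Prime := ⟨hp⟩
  haveI : NeZero (p ^ n) := ⟨pow_ne_zero _ hp.pos.ne'⟩
  set m := x.val with hm
  have hm0 : m ≠ 0 := by
    intro h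
    exact hx ((ZMod.val_eq_zero x).mp h)
  have hmlt : m < p ^ n := ZMod.val_lt x
  set a := padicValNat p m with ha
  have hdvd : p ^ a ∣ m := pow_padicValNat_dvd
  -- a < n
  have haltn : a < n := by
    by_contra h
    push_neg at h
    have : p ^ n ∣ m := dvd_trans (pow_dvd_pow p h) hdvd
    exact absurd (Nat.le_of_dvd (Nat.pos_of_ne_zero hm0) this) (not_le.mpr hmlt)
  refine ⟨haltn, ?_, ?_⟩
  · obtain ⟨m', hm'⟩ := hdvd
    have hpm' : ¬ p ∣ m' := by
      intro ⟨c, hc⟩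
      have : p ^ (a + 1) ∣ m := ⟨c, by rw [hm', hc]; ring⟩
      rw [padicValNat_dvd_iff_le hm0] at this
      omega
    refine ⟨(m' : ZMod (p ^ n)), ?_, ?_⟩
    · rw [ZMod.isUnit_iff_coprime]
      exact Nat.Coprime.pow_right _ ((Nat.Prime.coprime_iff_not_dvd hp).mpr hpm').symm
    · have hxm : x = ((m : ℕ) : ZMod (p ^ n)) := by
        simp [hm, ZMod.natCast_val, ZMod.cast_id]
      rw [hxm, hm']
      push_cast
      ring
  · intro b hb
    constructor
    · rintro ⟨y, hy⟩
      -- show p^b ∣ m in ℕ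
      have hyy : (((p:ℕ) ^ b * y.val : ℕ) : ZMod (p ^ n)) = (m : ZMod (p ^ n)) := by
        push_cast
        rw [ZMod.natCast_val, ZMod.cast_id, ZMod.natCast_val, ZMod.cast_id, ← hy]
      rw [ZMod.natCast_eq_natCast_iff] at hyy
      have hint : ((p:ℤ) ^ n) ∣ ((m : ℤ) - (p:ℤ) ^ b * (y.val : ℤ)) := by
        have := hyy.dvd
        push_cast at this ⊢
        exact this
      have hbm : (p : ℤ) ^ b ∣ (m : ℤ) := by
        have h1 : (p:ℤ) ^ b ∣ (p:ℤ) ^ n := pow_dvd_pow _ hb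
        have h2 : (p:ℤ) ^ b ∣ (p:ℤ) ^ b * (y.val : ℤ) := dvd_mul_right _ _
        have := dvd_add (h1.trans hint) h2
        simpa using this
      have hnat : (p : ℕ) ^ b ∣ m := by
        have : ((p ^ b : ℕ) : ℤ) ∣ ((m : ℕ) : ℤ) := by push_cast; exact hbm
        exact_mod_cast this
      exact (padicValNat_dvd_iff_le hm0).mp hnat
    · intro hba
      obtain ⟨m', hm'⟩ : p ^ b ∣ m := dvd_trans (pow_dvd_pow p hba) hdvd
      refine ⟨(m' : ZMod (p ^ n)), ?_⟩
      have : x = ((m : ℕ) : ZMod (p ^ n)) := by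
        simp [hm, ZMod.natCast_val, ZMod.cast_id]
      rw [this, hm']
      push_cast
      ring

lemma zmod_pow_prop (p n : ℕ) (hp : p.Prime) {b : ℕ} (hb : b < n) :
    ((p : ZMod (p ^ n)) ^ b ≠ 0) ∧ padicValNat p ((p : ZMod (p ^ n)) ^ b).val = b := by
  haveI : Fact p.Prime := ⟨hp⟩
  haveI : NeZero (p ^ n) := ⟨pow_ne_zero _ hp.pos.ne'⟩
  have hcast : (p : ZMod (p ^ n)) ^ b = ((p ^ b : ℕ) : ZMod (p ^ n)) := by push_cast; ring
  have hval : ((p : ZMod (p ^ n)) ^ b).val = p ^ b := by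
    rw [hcast, ZMod.val_natCast, Nat.mod_eq_of_lt (Nat.pow_lt_pow_right hp.one_lt hb)]
  constructor
  · intro h
    have := (ZMod.val_eq_zero _).mpr h
    rw [hval] at this
    exact absurd this (pow_ne_zero _ hp.pos.ne')
  · rw [hval, padicValNat.prime_pow]

lemma zmod_pow_dvd_le (p n : ℕ) (hp : p.Prime) {b c : ℕ} (hb : b < n) (hc : c ≤ n)
    (h : (p : ZMod (p ^ n)) ^ c ∣ (p : ZMod (p ^ n)) ^ b) : c ≤ b := by
  obtain ⟨hne, hv⟩ := zmod_pow_prop p n hp hb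
  obtain ⟨-, -, hiff⟩ := zmod_key p n hp _ hne
  have := (hiff c hc).mp h
  rwa [hv] at this

private def consHom (N : ℕ) (R : Type*) [AddGroup R] : (Fin N → R) →+ (Fin (N + 1) → R) :=
  AddMonoidHom.mk' (fun t => Fin.cons 0 t) (by
    intro a b
    funext k
    refine Fin.cases ?_ (fun k' => ?_) k <;> simp)

lemma main_ind (p n : ℕ) (hp : p.Prime) (hn : 0 < n) :
    ∀ N (M : AddSubgroup (Fin N → ZMod (p ^ n))),
    ∃ (σ : Equiv.Perm (Fin N)) (ℓ : ℕ) (hℓ : ℓ ≤ N) (a : Fin ℓ → ℕ)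
      (ω : Fin ℓ → (Fin N → ZMod (p ^ n))),
      Monotone a ∧ (∀ i, a i ≤ n - 1) ∧
      AddSubgroup.closure (Set.range ω) =
        AddSubgroup.map (AddMonoidHom.mk' (fun x => x ∘ ⇑σ) (fun _ _ => rfl)) M ∧
      (∀ (i : Fin ℓ) (j : Fin N), (j : ℕ) < (i : ℕ) → ω i j = 0) ∧
      (∀ i : Fin ℓ, ω i (Fin.castLE hℓ i) = (p : ZMod (p ^ n)) ^ (a i)) ∧
      (∀ (i : Fin ℓ) (j : Fin N), (i : ℕ) < (j : ℕ) →
        ∃ y : ZMod (p ^ n), ω i j = (p : ZMod (p ^ n)) ^ (a i) * y) := by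
  haveI : Fact p.Prime := ⟨hp⟩
  haveI : NeZero (p ^ n) := ⟨pow_ne_zero _ hp.pos.ne'⟩
  set R := ZMod (p ^ n) with hR
  intro N
  induction N with
  | zero =>
    intro M
    refine ⟨1, 0, le_refl 0, Fin.elim0, Fin.elim0, fun i => i.elim0, fun i => i.elim0,
      Subsingleton.elim _ _, fun i => i.elim0, fun i => i.elim0, fun i => i.elim0⟩
  | succ N IH =>
    intro M
    by_cases hM : M = ⊥
    · refine ⟨1, 0, Nat.zero_le _, Fin.elim0, Fin.elim0, fun i => i.elim0 , fun i => i.elim0,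
        ?_, fun i => i.elim0, fun i => i.elim0, fun i => i.elim0⟩
      rw [hM, AddSubgroup.map_bot, Set.range_eq_empty, AddSubgroup.closure_empty]
    · -- M nontrivial
      obtain ⟨⟨x, hxM⟩, hx0⟩ := AddSubgroup.ne_bot_iff_exists_ne_zero.mp hM
      have hx : x ≠ 0 := by
        intro h
        exact hx0 (by ext k; exact congrFun h k)
      obtain ⟨j, hxj⟩ := Function.ne_iff.mp hx
      have hxj : x j ≠ 0 := by simpa using hxj
      set S : Set ℕ := {a | ∃ y ∈ M, ∃ k, y k ≠ 0 ∧ padicValNat p (y k).val = a} with hSdef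
      have hSne : S.Nonempty := ⟨_, x, hxM, j, hxj, rfl⟩
      set a₀ := sInf S with ha₀
      obtain ⟨y₀, hy₀M, k₀, hy₀k₀, hval₀⟩ := Nat.sInf_mem hSne
      have ha₀n : a₀ < n := by
        have := (zmod_key p n hp _ hy₀k₀).1
        rwa [hval₀] at this
      -- every coordinate of every element of M is divisible by p ^ a₀
      have hdivM : ∀ y ∈ M, ∀ k, (p : R) ^ a₀ ∣ y k := by
        intro y hy k
        by_cases h : y k = 0
        · exact ⟨0, by rw [h, mul_zero]⟩
        · obtain ⟨-, -, hiff⟩ := zmod_key p n hp _ h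
          exact (hiff a₀ ha₀n.le).mpr (Nat.sInf_le ⟨y, hy, k, h, rfl⟩)
      -- normalize y₀ so that its k₀ coordinate is exactly p ^ a₀
      obtain ⟨-, ⟨u, hu, huy⟩, -⟩ := zmod_key p n hp _ hy₀k₀
      rw [hval₀] at huy
      obtain ⟨U, hU⟩ := hu
      set c : R := ((U⁻¹ : Rˣ) : R) with hc
      set x' : Fin (N + 1) → R := (ZMod.val c) • y₀ with hx'
      have hx'M : x' ∈ M := AddSubgroup.nsmul_mem M hy₀M _
      have hx'eq : ∀ k, x' k = c * y₀ k := by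
        intro k
        rw [hx', Pi.smul_apply, nsmul_eq_mul, ZMod.natCast_val, ZMod.cast_id]
      have hx'k₀ : x' k₀ = (p : R) ^ a₀ := by
        rw [hx'eq, huy, ← hU, ← mul_assoc, mul_comm c, mul_assoc]
        rw [hc, Units.inv_mul, mul_one]
      -- move coordinate k₀ to position 0
      set σ₁ : Equiv.Perm (Fin (N + 1)) := Equiv.swap 0 k₀ with hσ₁
      set f₁ : (Fin (N + 1) → R) →+ (Fin (N + 1) → R) :=
        AddMonoidHom.mk' (fun x => x ∘ ⇑σ₁) (fun _ _ => rfl) with hf₁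
      set M₁ := M.map f₁ with hM₁
      have hmemM₁ : ∀ w, w ∈ M₁ ↔ ∃ y ∈ M, y ∘ ⇑σ₁ = w := by
        intro w
        simp [hM₁, AddSubgroup.mem_map, hf₁]
        exact Iff.rfl
      have hdiv₁ : ∀ w ∈ M₁, ∀ k, (p : R) ^ a₀ ∣ w k := by
        intro w hw k
        obtain ⟨y, hy, rfl⟩ := (hmemM₁ w).mp hw
        exact hdivM y hy _
      set ω₀ : Fin (N + 1) → R := x' ∘ ⇑σ₁ with hω₀
      have hω₀M₁ : ω₀ ∈ M₁ := (hmemM₁ ω₀).mpr ⟨x', hx'M, rfl⟩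
      have hω₀0 : ω₀ 0 = (p : R) ^ a₀ := by
        rw [hω₀]
        show x' (σ₁ 0) = _
        rw [hσ₁, Equiv.swap_apply_left, hx'k₀]
      -- the tail subgroup
      set M₂ : AddSubgroup (Fin N → R) := M₁.comap (consHom N R) with hM₂
      obtain ⟨σ', ℓ', hℓ', a', ω', hmono', hbound', hclos', hzero', hlead', hdiv'⟩ := IH M₂
      set σ₂ : Equiv.Perm (Fin (N + 1)) := Equiv.Perm.decomposeFin.symm (0, σ') with hσ₂
      have hσ₂0 : σ₂ 0 = 0 := Equiv.Perm.decomposeFin_symm_apply_zero 0 σ'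
      have hσ₂succ : ∀ k : Fin N, σ₂ k.succ = (σ' k).succ := by
        intro k
        rw [hσ₂, Equiv.Perm.decomposeFin_symm_apply_succ, Equiv.swap_self]
        rfl
      set f₂ : (Fin (N + 1) → R) →+ (Fin (N + 1) → R) :=
        AddMonoidHom.mk' (fun x => x ∘ ⇑σ₂) (fun _ _ => rfl) with hf₂
      set f' : (Fin N → R) →+ (Fin N → R) :=
        AddMonoidHom.mk' (fun x => x ∘ ⇑σ') (fun _ _ => rfl) with hf'
      -- key compatibility: cons 0 t ∘ σ₂ = cons 0 (t ∘ σ')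
      have hcons_comp : ∀ t : Fin N → R, (Fin.cons 0 t : Fin (N+1) → R) ∘ ⇑σ₂
          = Fin.cons 0 (t ∘ ⇑σ') := by
        intro t
        funext k
        refine Fin.cases ?_ (fun k' => ?_) k
        · show (Fin.cons 0 t : Fin (N+1) → R) (σ₂ 0) = _
          rw [hσ₂0]
          simp
        · show (Fin.cons 0 t : Fin (N+1) → R) (σ₂ k'.succ) = _
          rw [hσ₂succ]
          simp
      -- all exponents a' are at least a₀
      have ha'ge : ∀ i, a₀ ≤ a' i := by
        intro i
        have hωi : ω' i ∈ AddSubgroup.map f' M₂ := by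
          rw [← hclos']
          exact AddSubgroup.subset_closure (Set.mem_range_self i)
        obtain ⟨t, ht, hteq⟩ := hωi
        have h1 : (Fin.cons 0 t : Fin (N+1) → R) ∈ M₁ := ht
        have h2 := hdiv₁ _ h1 ((σ' (Fin.castLE hℓ' i)).succ)
        rw [Fin.cons_succ] at h2
        have h3 : t (σ' (Fin.castLE hℓ' i)) = (p : R) ^ a' i := by
          have h4 := hlead' i
          rw [← hteq] at h4
          exact h4
        rw [h3] at h2
        exact zmod_pow_dvd_le p n hp
          (lt_of_le_of_lt (hbound' i) (Nat.sub_lt hn one_pos)) ha₀n.le h2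
      set ωtop : Fin (N + 1) → R := ω₀ ∘ ⇑σ₂ with hωtop
      refine ⟨σ₂.trans σ₁, ℓ' + 1, Nat.succ_le_succ hℓ', Fin.cons a₀ a',
        Fin.cons ωtop (fun i => Fin.cons 0 (ω' i)), ?_, ?_, ?_, ?_, ?_, ?_⟩
      · -- monotone
        intro i j hij
        rcases Fin.eq_zero_or_eq_succ i with rfl | ⟨i', rfl⟩ <;>
          rcases Fin.eq_zero_or_eq_succ j with rfl | ⟨j', rfl⟩
        · exact le_refl _
        · simp only [Fin.cons_zero, Fin.cons_succ]
          exact ha'ge j'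
        · exfalso
          rw [Fin.le_def] at hij
          simp at hij
        · simp only [Fin.cons_succ]
          exact hmono' (Fin.succ_le_succ_iff.mp hij)
      · -- bound
        intro i
        rcases Fin.eq_zero_or_eq_succ i with rfl | ⟨i', rfl⟩
        · simpa using Nat.le_sub_one_of_lt ha₀n
        · simpa using hbound' i'
      · -- closure equality
        have hMfinal : AddSubgroup.map
            (AddMonoidHom.mk' (fun x => x ∘ ⇑(σ₂.trans σ₁)) (fun _ _ => rfl)) M
            = M₁.map f₂ := by
          rw [hM₁, AddSubgroup.map_map]
          rfl
        rw [hMfinal]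
        apply le_antisymm
        · rw [AddSubgroup.closure_le]
          rintro w ⟨i, rfl⟩
          refine Fin.cases ?_ (fun i' => ?_) i
          · simp only [Fin.cons_zero]
            exact AddSubgroup.mem_map.mpr ⟨ω₀, hω₀M₁, rfl⟩
          · simp only [Fin.cons_succ]
            have hωi : ω' i' ∈ AddSubgroup.map f' M₂ := by
              rw [← hclos']
              exact AddSubgroup.subset_closure (Set.mem_range_self i')
            obtain ⟨t, ht, hteq⟩ := hωi
            refine AddSubgroup.mem_map.mpr ⟨Fin.cons 0 t, ht, ?_⟩
            show (Fin.cons 0 t : Fin (N+1) → R) ∘ ⇑σ₂ = _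
            rw [hcons_comp t]
            exact congrArg _ hteq
        · rintro w hw
          obtain ⟨y, hy, rfl⟩ := AddSubgroup.mem_map.mp hw
          obtain ⟨z, hz⟩ := hdiv₁ y hy 0
          set y' : Fin (N + 1) → R := y - (ZMod.val z) • ω₀ with hy'
          have hy'M₁ : y' ∈ M₁ := sub_mem hy (AddSubgroup.nsmul_mem _ hω₀M₁ _)
          have hy'0 : y' 0 = 0 := by
            rw [hy', Pi.sub_apply, Pi.smul_apply, nsmul_eq_mul, ZMod.natCast_val,
              ZMod.cast_id, hω₀0, hz]
            ring
          have hconsy' : (Fin.cons 0 (Fin.tail y') : Fin (N+1) → R) = y' := by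
            funext k
            refine Fin.cases ?_ (fun k' => ?_) k
            · rw [Fin.cons_zero, hy'0]
            · rw [Fin.cons_succ]
              rfl
          have htM₂ : Fin.tail y' ∈ M₂ := by
            show (Fin.cons 0 (Fin.tail y') : Fin (N+1) → R) ∈ M₁
            rw [hconsy']
            exact hy'M₁
          have h1 : (Fin.tail y') ∘ ⇑σ' ∈ AddSubgroup.closure (Set.range ω') := by
            rw [hclos']
            exact AddSubgroup.mem_map.mpr ⟨Fin.tail y', htM₂, rfl⟩
          set ω : Fin (ℓ' + 1) → Fin (N + 1) → R :=
            Fin.cons ωtop (fun i => Fin.cons 0 (ω' i)) with hω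
          have h2 : (Fin.cons 0 ((Fin.tail y') ∘ ⇑σ') : Fin (N+1) → R) ∈
              AddSubgroup.closure (Set.range ω) := by
            have h3 : (consHom N R) ((Fin.tail y') ∘ ⇑σ') ∈
                (AddSubgroup.closure (Set.range ω')).map (consHom N R) :=
              AddSubgroup.mem_map_of_mem _ h1
            rw [AddMonoidHom.map_closure] at h3
            refine AddSubgroup.closure_mono ?_ h3
            rintro _ ⟨_, ⟨i, rfl⟩, rfl⟩
            exact ⟨i.succ, Fin.cons_succ _ _ i⟩
          have hysum : y = y' + (ZMod.val z) • ω₀ := by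
            rw [hy']
            abel
          have hw2 : (fun x => x ∘ ⇑σ₂) y = Fin.cons 0 ((Fin.tail y') ∘ ⇑σ')
              + (ZMod.val z) • ωtop := by
            rw [hysum]
            funext k
            simp only [Pi.add_apply, Pi.smul_apply, Function.comp_apply]
            rw [← hcons_comp (Fin.tail y'), hconsy']
            simp [hωtop]
          show (fun x => x ∘ ⇑σ₂) y ∈ _
          rw [hw2]
          refine AddSubgroup.add_mem _ h2 (AddSubgroup.nsmul_mem _ ?_ _)
          exact AddSubgroup.subset_closure ⟨0, Fin.cons_zero _ _⟩
      · -- zeros below the diagonal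
        intro i j hij
        rcases Fin.eq_zero_or_eq_succ i with rfl | ⟨i', rfl⟩
        · exact absurd hij (by simp)
        · simp only [Fin.cons_succ]
          rcases Fin.eq_zero_or_eq_succ j with rfl | ⟨j', rfl⟩
          · exact Fin.cons_zero _ _
          · rw [Fin.cons_succ]
            refine hzero' i' j' ?_
            have h1 : (j'.succ : ℕ) < (i'.succ : ℕ) := hij
            simp only [Fin.val_succ] at h1
            omega
      · -- leading coefficients
        intro i
        rcases Fin.eq_zero_or_eq_succ i with rfl | ⟨i', rfl⟩
        · have hc0 : Fin.castLE (Nat.succ_le_succ hℓ') (0 : Fin (ℓ' + 1)) = 0 := rfl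
          rw [hc0]
          simp only [Fin.cons_zero]
          show ω₀ (σ₂ 0) = _
          rw [hσ₂0, hω₀0]
        · have hcs : Fin.castLE (Nat.succ_le_succ hℓ') (Fin.succ i')
              = Fin.succ (Fin.castLE hℓ' i') := rfl
          rw [hcs]
          simp only [Fin.cons_succ]
          exact hlead' i'
      · -- divisibility above the diagonal
        intro i j hij
        rcases Fin.eq_zero_or_eq_succ i with rfl | ⟨i', rfl⟩
        · simp only [Fin.cons_zero]
          exact hdiv₁ ω₀ hω₀M₁ (σ₂ j)
        · rcases Fin.eq_zero_or_eq_succ j with rfl | ⟨j', rfl⟩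
          · exact absurd hij (by simp)
          · simp only [Fin.cons_succ]
            refine hdiv' i' j' ?_
            have h1 : (i'.succ : ℕ) < (j'.succ : ℕ) := hij
            simp only [Fin.val_succ] at h1
            omega

/-- Lemma `generating set`: after permuting coordinates, any subgroup `M` of
`(ℤ/p^nℤ)^N` is generated by `ℓ ≤ N` elements `ω_i` in echelon form: `ω_i` has
zeros in the first `i-1` coordinates, leading coordinate `p^(a_i)` with the
exponents `a_i` nondecreasing, and all later coordinates divisible by `p^(a_i)`. -/
theorem stmt_4 (p n N : ℕ) (hp : p.Prime) (hn : 0 < n) (hN : 0 < N)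
    (M : AddSubgroup (Fin N → ZMod (p ^ n))) :
    ∃ (σ : Equiv.Perm (Fin N)) (ℓ : ℕ) (hℓ : ℓ ≤ N) (a : Fin ℓ → ℕ)
      (ω : Fin ℓ → (Fin N → ZMod (p ^ n))),
      Monotone a ∧ (∀ i, a i ≤ n - 1) ∧
      AddSubgroup.closure (Set.range ω) =
        AddSubgroup.map (AddMonoidHom.mk' (fun x => x ∘ ⇑σ) (fun _ _ => rfl)) M ∧
      (∀ (i : Fin ℓ) (j : Fin N), (j : ℕ) < (i : ℕ) → ω i j = 0) ∧
      (∀ i : Fin ℓ, ω i (Fin.castLE hℓ i) = (p : ZMod (p ^ n)) ^ (a i)) ∧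
      (∀ (i : Fin ℓ) (j : Fin N), (i : ℕ) < (j : ℕ) →
        ∃ y : ZMod (p ^ n), ω i j = (p : ZMod (p ^ n)) ^ (a i) * y) := by
  exact main_ind p n hp hn N M
end

section
/- Let p be a prime, n and m positive integers, and G = (ℤ/p^nℤ)^{2m}. Let M be a subgroup of G that is isomorphic (as an abelian group) to the quotient G/M (as holds for any metabolizer of a non-degenerate symmetric bilinear pairing on G). Suppose M is generated by elements ω₁,…,ω_ℓ in echelon form: the j-th coordinate of ω_i is 0 for j < i, the i-th coordinate of ω_i is the class of p^{a_i} with 0 ≤ a₁ ≤ ⋯ ≤ a_ℓ ≤ n-1, and for j > i the j-th coordinate of ω_i is divisible by p^{a_i}. For 0 ≤ j ≤ n-1 let k_j be the number of indices i with a_i = j, and set k_n := k_0. Then k_j = k_{n-j} for all 0 ≤ j ≤ n, and 2m = ℓ + k_0, where ℓ = k_0 + k_1 + ⋯ + k_{n-1}. -/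
open AddSubgroup Finset

-- invariance of card of image of nsmul under AddEquiv
lemma aux_card_smul_image {A B : Type*} [AddCommMonoid A] [AddCommMonoid B] (e : A ≃+ B) (t : ℕ) :
    Nat.card ((t • ·) '' (Set.univ : Set A)) = Nat.card ((t • ·) '' (Set.univ : Set B)) := by
  have h1 : e '' ((t • ·) '' (Set.univ : Set A)) = (t • ·) '' (Set.univ : Set B) := by
    rw [Set.image_image]
    ext b
    simp only [Set.mem_image, Set.mem_univ, true_and]
    constructor
    · rintro ⟨x, rfl⟩; exact ⟨e x, (map_nsmul e t x).symm⟩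
    · rintro ⟨y, rfl⟩; exact ⟨e.symm y, by rw [map_nsmul e t, e.apply_symm_apply]⟩
  rw [← h1, Nat.card_image_of_injective e.injective]

-- card of image of nsmul on a subgroup subtype = card of image set in ambient group
lemma aux_card_smul_subtype {G : Type*} [AddCommGroup G] (S : AddSubgroup G) (t : ℕ) :
    Nat.card ((t • ·) '' (Set.univ : Set S)) = Nat.card ((t • ·) '' (S : Set G)) := by
  have h : (Subtype.val : S → G) '' ((t • ·) '' (Set.univ : Set S)) = (t • ·) '' (S : Set G) := by
    rw [Set.image_image]
    ext g
    simp only [Set.mem_image, Set.mem_univ, true_and]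
    constructor
    · rintro ⟨x, rfl⟩; exact ⟨x.1, x.2, rfl⟩
    · rintro ⟨y, hy, rfl⟩; exact ⟨⟨y, hy⟩, rfl⟩
  rw [← h, Nat.card_image_of_injective Subtype.val_injective]

lemma aux_card_pi {ι : Type*} [Fintype ι] {G : ι → Type*} [∀ i, AddGroup (G i)]
    (S : ∀ i, AddSubgroup (G i)) :
    Nat.card (AddSubgroup.pi Set.univ S) = ∏ i, Nat.card (S i) := by
  rw [← Nat.card_pi]
  exact Nat.card_congr
    ⟨fun x i => ⟨x.1 i, x.2 i (Set.mem_univ i)⟩,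
     fun y => ⟨fun i => (y i).1, fun i _ => (y i).2⟩,
     fun x => rfl, fun y => rfl⟩

lemma aux_mul_mem_zmultiples {N : ℕ} [NeZero N] (y z : ZMod N) : y * z ∈ zmultiples z := by
  refine ⟨(y.val : ℤ), ?_⟩
  show (y.val : ℤ) • z = y * z
  rw [natCast_zsmul, nsmul_eq_mul, ZMod.natCast_val, ZMod.cast_id]

lemma aux_sup_zmultiples {N : ℕ} [NeZero N] (x : ZMod N) (s k : ℕ) :
    zmultiples (x ^ s) ⊔ zmultiples (x ^ k) = zmultiples (x ^ (min s k)) := by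
  apply le_antisymm
  · apply sup_le
    · intro g hg
      obtain ⟨c, rfl⟩ := hg
      have : x ^ s = x ^ (s - min s k) * x ^ (min s k) := by
        rw [← pow_add]; congr 1; omega
      rw [this]
      exact zsmul_mem (aux_mul_mem_zmultiples _ _) c
    · intro g hg
      obtain ⟨c, rfl⟩ := hg
      have : x ^ k = x ^ (k - min s k) * x ^ (min s k) := by
        rw [← pow_add]; congr 1; omega
      rw [this]
      exact zsmul_mem (aux_mul_mem_zmultiples _ _) c
  · intro g hg
    obtain ⟨c, rfl⟩ := hg
    rcases min_cases s k with ⟨h1, _⟩ | ⟨h1, _⟩ <;> rw [h1]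
    · exact AddSubgroup.mem_sup_left (zsmul_mem (mem_zmultiples _) c)
    · exact AddSubgroup.mem_sup_right (zsmul_mem (mem_zmultiples _) c)

lemma aux_pi_sup {ι : Type*} {G : ι → Type*} [∀ i, AddCommGroup (G i)]
    (S T : ∀ i, AddSubgroup (G i)) :
    AddSubgroup.pi Set.univ S ⊔ AddSubgroup.pi Set.univ T
      = AddSubgroup.pi Set.univ (fun i => S i ⊔ T i) := by
  apply le_antisymm
  · apply sup_le
    · intro x hx i _
      exact AddSubgroup.mem_sup_left (hx i (Set.mem_univ i))
    · intro x hx i _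
      exact AddSubgroup.mem_sup_right (hx i (Set.mem_univ i))
  · intro x hx
    have := fun i => AddSubgroup.mem_sup.1 (hx i (Set.mem_univ i))
    choose s hs t ht hst using this
    exact AddSubgroup.mem_sup.2 ⟨s, fun i _ => hs i, t, fun i _ => ht i, funext hst⟩

lemma aux_card_zmultiples_pow {p : ℕ} (hp : p.Prime) (n k : ℕ) :
    Nat.card (zmultiples ((p : ZMod (p ^ n)) ^ k)) = p ^ (n - min n k) := by
  haveI : NeZero (p ^ n) := ⟨pow_ne_zero n hp.ne_zero⟩
  have hx : ((p : ZMod (p ^ n)) ^ k) = ((p ^ k : ℕ) : ZMod (p ^ n)) := by push_cast; ring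
  rw [hx, Nat.card_zmultiples, ZMod.addOrderOf_coe _ (pow_ne_zero n hp.ne_zero)]
  have hg : (p ^ n).gcd (p ^ k) = p ^ (min n k) := by
    rcases le_total n k with h | h
    · rw [Nat.gcd_eq_left (pow_dvd_pow p h), min_eq_left h]
    · rw [Nat.gcd_eq_right (pow_dvd_pow p h), min_eq_right h]
  rw [hg, Nat.pow_div (min_le_left n k) hp.pos]

lemma aux_mk_image_sup {G : Type*} [AddCommGroup G] (M T : AddSubgroup G) :
    (QuotientAddGroup.mk '' (T : Set G) : Set (G ⧸ M))
      = QuotientAddGroup.mk '' ((T ⊔ M : AddSubgroup G) : Set G) := by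
  ext q
  simp only [Set.mem_image, SetLike.mem_coe]
  constructor
  · rintro ⟨g, hg, rfl⟩; exact ⟨g, AddSubgroup.mem_sup_left hg, rfl⟩
  · rintro ⟨g, hg, rfl⟩
    obtain ⟨s, hs, u, hu, rfl⟩ := AddSubgroup.mem_sup.1 hg
    refine ⟨s, hs, ?_⟩
    have : (QuotientAddGroup.mk u : G ⧸ M) = 0 := (QuotientAddGroup.eq_zero_iff u).2 hu
    rw [QuotientAddGroup.mk_add, this, add_zero]

lemma aux_card_mk_image {G : Type*} [AddCommGroup G] (M W : AddSubgroup G) (h : M ≤ W) :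
    Nat.card (QuotientAddGroup.mk '' (W : Set G) : Set (G ⧸ M)) * Nat.card M = Nat.card W := by
  classical
  set f : W →+ G ⧸ M := (QuotientAddGroup.mk' M).comp W.subtype with hf
  have hrange : (f.range : Set (G ⧸ M)) = QuotientAddGroup.mk '' (W : Set G) := by
    ext q
    simp only [AddMonoidHom.mem_range, Set.mem_image, SetLike.mem_coe, hf,
      AddMonoidHom.comp_apply, QuotientAddGroup.mk'_apply, AddSubgroup.coe_subtype]
    constructor
    · rintro ⟨x, rfl⟩; exact ⟨x.1, x.2, rfl⟩
    · rintro ⟨g, hg, rfl⟩; exact ⟨⟨g, hg⟩, rfl⟩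
  have hker : Nat.card f.ker = Nat.card M := by
    have : f.ker = M.addSubgroupOf W := by
      ext x
      simp [hf, AddSubgroup.mem_addSubgroupOf, QuotientAddGroup.eq_zero_iff]
    rw [this]
    exact Nat.card_congr (AddSubgroup.addSubgroupOfEquivOfLe h).toEquiv
  have hcard := AddSubgroup.card_eq_card_quotient_mul_card_addSubgroup (α := W) f.ker
  have hq : Nat.card (W ⧸ f.ker) = Nat.card f.range :=
    Nat.card_congr (QuotientAddGroup.quotientKerEquivRange f).toEquiv
  have hr : Nat.card f.range = Nat.card (QuotientAddGroup.mk '' (W : Set G) : Set (G ⧸ M)) := by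
    rw [← SetLike.coe_sort_coe, hrange]
  rw [← hr, ← hq, ← hker]
  exact hcard.symm

open AddSubgroup Finset
set_option maxHeartbeats 1000000

/-- Lemma `k_j`: if `M ≤ (ℤ/p^nℤ)^(2m)` is isomorphic to `G/M` and is generated by
elements in echelon form with leading exponents `a_1 ≤ ⋯ ≤ a_ℓ`, and `k_j` counts the
generators with leading term `p^j` (with `k_n := k_0`), then `k_j = k_{n-j}` for all
`0 ≤ j ≤ n` and `2m = ℓ + k_0`. Here `k_j` is encoded as the count of `i` with
`a i = j % n`, which agrees with `k_j` for `0 ≤ j ≤ n - 1` and gives `k_n = k_0`. -/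
theorem stmt_5 (p n m ℓ : ℕ) (hp : p.Prime) (hn : 0 < n) (hm : 0 < m) (hℓ : ℓ ≤ 2 * m)
    (M : AddSubgroup (Fin (2 * m) → ZMod (p ^ n)))
    (hiso : Nonempty (M ≃+ ((Fin (2 * m) → ZMod (p ^ n)) ⧸ M)))
    (a : Fin ℓ → ℕ) (ha : Monotone a) (han : ∀ i, a i ≤ n - 1)
    (ω : Fin ℓ → (Fin (2 * m) → ZMod (p ^ n)))
    (hgen : AddSubgroup.closure (Set.range ω) = M)
    (hech1 : ∀ (i : Fin ℓ) (j : Fin (2 * m)), (j : ℕ) < (i : ℕ) → ω i j = 0)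
    (hech2 : ∀ i : Fin ℓ, ω i (Fin.castLE hℓ i) = (p : ZMod (p ^ n)) ^ (a i))
    (hech3 : ∀ (i : Fin ℓ) (j : Fin (2 * m)), (i : ℕ) < (j : ℕ) →
      ∃ y : ZMod (p ^ n), ω i j = (p : ZMod (p ^ n)) ^ (a i) * y) :
    (∀ j ≤ n,
      (Finset.univ.filter (fun i : Fin ℓ => a i = j % n)).card =
        (Finset.univ.filter (fun i : Fin ℓ => a i = (n - j) % n)).card) ∧
    2 * m = ℓ + (Finset.univ.filter (fun i : Fin ℓ => a i = 0)).card := by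
  classical
  haveI : NeZero (p ^ n) := ⟨pow_ne_zero n hp.ne_zero⟩
  -- choose the divisibility witnesses
  choose y hy using hech3
  -- columns of the change-of-basis matrix
  set ycl : Fin ℓ → Fin (2 * m) → ZMod (p ^ n) := fun i j =>
    if h : (i : ℕ) < (j : ℕ) then y i j h else 0 with hycldef
  have hyω : ∀ (i : Fin ℓ) (j : Fin (2 * m)), (i : ℕ) < (j : ℕ) →
      ω i j = (p : ZMod (p ^ n)) ^ (a i) * ycl i j := by
    intro i j h
    simp only [hycldef]
    rw [dif_pos h]
    exact hy i j h
  set col : Fin (2 * m) → (Fin (2 * m) → ZMod (p ^ n)) := fun i j =>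
    if h : (i : ℕ) < ℓ then
      (if (j : ℕ) < (i : ℕ) then 0
       else if (j : ℕ) = (i : ℕ) then 1
       else ycl ⟨(i : ℕ), h⟩ j)
    else (if j = i then 1 else 0) with hcoldef
  have hcol0 : ∀ i j : Fin (2 * m), (j : ℕ) < (i : ℕ) → col i j = 0 := by
    intro i j hji
    simp only [hcoldef]
    by_cases h : (i : ℕ) < ℓ
    · rw [dif_pos h, if_pos hji]
    · rw [dif_neg h, if_neg (fun hj => by rw [hj] at hji; omega)]
  have hcol1 : ∀ i : Fin (2 * m), col i i = 1 := by
    intro i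
    by_cases h : (i : ℕ) < ℓ <;> simp [hcoldef, h]
  have hcolω : ∀ (i : Fin ℓ) (j : Fin (2 * m)),
      (p : ZMod (p ^ n)) ^ (a i) * col (Fin.castLE hℓ i) j = ω i j := by
    intro i j
    have hi : ((Fin.castLE hℓ i : Fin (2 * m)) : ℕ) < ℓ := i.2
    rcases lt_trichotomy (j : ℕ) (i : ℕ) with hlt | heq | hgt
    · rw [hcol0 _ _ hlt, mul_zero, hech1 i j hlt]
    · have hji : j = Fin.castLE hℓ i := Fin.ext heq
      have h1 : col (Fin.castLE hℓ i) j = 1 := by rw [hji]; exact hcol1 _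
      rw [h1, mul_one, hji, hech2 i]
    · have hcc : ((Fin.castLE hℓ i : Fin (2 * m)) : ℕ) = (i : ℕ) := rfl
      have h1 : col (Fin.castLE hℓ i) j = ycl i j := by
        simp only [hcoldef]
        rw [dif_pos hi, if_neg (by omega), if_neg (by omega)]
        exact congrArg (fun z => ycl z j) (Fin.ext hcc)
      rw [h1]
      exact (hyω i j hgt).symm
  -- the change-of-basis homomorphism
  set σ : (Fin (2 * m) → ZMod (p ^ n)) →+ (Fin (2 * m) → ZMod (p ^ n)) :=
    { toFun := fun x j => ∑ i, x i * col i j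
      map_zero' := by funext j; simp
      map_add' := by
        intro u v; funext j
        simp [add_mul, Finset.sum_add_distrib] } with hσdef
  have hσapp : ∀ (x : (Fin (2 * m) → ZMod (p ^ n))) (j : Fin (2 * m)), σ x j = ∑ i, x i * col i j := fun _ _ => rfl
  have hinj : Function.Injective σ := by
    rw [injective_iff_map_eq_zero]
    intro x hx
    have key : ∀ k : ℕ, ∀ hk : k < 2 * m, x ⟨k, hk⟩ = 0 := by
      intro k
      induction k using Nat.strong_induction_on with
      | _ k IH =>
        intro hk
        have h0 : ∑ i, x i * col i ⟨k, hk⟩ = 0 := congrFun hx ⟨k, hk⟩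
        rw [Finset.sum_eq_single (⟨k, hk⟩ : Fin (2 * m))] at h0
        · rwa [hcol1, mul_one] at h0
        · intro i _ hne
          rcases lt_or_gt_of_ne (fun h : (i : ℕ) = k => hne (Fin.ext h)) with hlt | hgt
          · rw [IH (i : ℕ) hlt i.2, zero_mul]
          · rw [hcol0 i ⟨k, hk⟩ hgt, mul_zero]
        · intro h; exact absurd (Finset.mem_univ _) h
    funext j
    exact key j.1 j.2
  have hbij : Function.Bijective σ := Finite.injective_iff_bijective.1 hinj
  set eσ : (Fin (2 * m) → ZMod (p ^ n)) ≃+ (Fin (2 * m) → ZMod (p ^ n)) := AddEquiv.ofBijective σ hbij with heσdef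
  -- the diagonal exponents
  set c : Fin (2 * m) → ℕ := fun j => if h : (j : ℕ) < ℓ then a ⟨(j : ℕ), h⟩ else n with hcdef
  have hcn : ∀ j, c j ≤ n := by
    intro j
    simp only [hcdef]
    split
    · exact le_trans (han _) (Nat.sub_le n 1)
    · exact le_rfl
  have hpn0 : (p : ZMod (p ^ n)) ^ n = 0 := by
    rw [← Nat.cast_pow, ZMod.natCast_self]
  -- the standard subgroup
  set M₀ : AddSubgroup (Fin (2 * m) → ZMod (p ^ n)) :=
    AddSubgroup.pi Set.univ (fun j => zmultiples ((p : ZMod (p ^ n)) ^ (c j))) with hM₀def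
  -- smul computation helper
  have hsm : ∀ (s e : ℕ) (k : ℤ), (p ^ s : ℕ) • (k • (p : ZMod (p ^ n)) ^ e) = k • (p : ZMod (p ^ n)) ^ (s + e) := by
    intro s e k
    rw [smul_comm]
    congr 1
    rw [nsmul_eq_mul, Nat.cast_pow, ← pow_add]
  -- σ maps M₀ onto M
  have hMap : AddSubgroup.map σ M₀ = M := by
    apply le_antisymm
    · rintro _ ⟨x, hx, rfl⟩
      have hσx : σ x = ∑ i, (fun j => x i * col i j) := by
        funext j
        rw [hσapp, Finset.sum_apply]
      rw [hσx]
      apply AddSubgroup.sum_mem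
      intro i _
      by_cases hi : (i : ℕ) < ℓ
      · obtain ⟨k, hk⟩ := AddSubgroup.mem_zmultiples_iff.1 (hx i (Set.mem_univ i))
        have hfun : (fun j => x i * col i j) = fun j => k • ω ⟨(i : ℕ), hi⟩ j := by
          funext j
          have hci : c i = a ⟨(i : ℕ), hi⟩ := by simp only [hcdef, dif_pos hi]
          have hcast : Fin.castLE hℓ (⟨(i : ℕ), hi⟩ : Fin ℓ) = i := Fin.ext rfl
          rw [← hk, smul_mul_assoc, ← hcolω ⟨(i : ℕ), hi⟩ j, hcast, hci]
        rw [hfun]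
        have : (fun j => k • ω ⟨(i : ℕ), hi⟩ j) = k • ω ⟨(i : ℕ), hi⟩ := rfl
        rw [this]
        refine zsmul_mem ?_ k
        rw [← hgen]
        exact AddSubgroup.subset_closure ⟨⟨(i : ℕ), hi⟩, rfl⟩
      · obtain ⟨k, hk⟩ := AddSubgroup.mem_zmultiples_iff.1 (hx i (Set.mem_univ i))
        have hci : c i = n := by simp only [hcdef, dif_neg hi]
        have : x i = 0 := by rw [← hk, hci, hpn0, smul_zero]
        have hfun : (fun j => x i * col i j) = (0 : (Fin (2 * m) → ZMod (p ^ n))) := by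
          funext j; rw [this, zero_mul]; rfl
        rw [hfun]
        exact zero_mem M
    · rw [← hgen, AddSubgroup.closure_le]
      rintro _ ⟨i, rfl⟩
      refine ⟨Pi.single (Fin.castLE hℓ i) ((p : ZMod (p ^ n)) ^ (a i)), ?_, ?_⟩
      · rw [hM₀def]
        have hmem : ∀ j : Fin (2 * m),
            (Pi.single (Fin.castLE hℓ i) ((p : ZMod (p ^ n)) ^ (a i))
                : Fin (2 * m) → ZMod (p ^ n)) j
              ∈ zmultiples ((p : ZMod (p ^ n)) ^ (c j)) := by
          intro j
          by_cases hj : j = Fin.castLE hℓ i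
          · rw [hj, Pi.single_eq_same]
            have hcj : c (Fin.castLE hℓ i) = a i := by
              have hi : ((Fin.castLE hℓ i : Fin (2 * m)) : ℕ) < ℓ := i.2
              simp only [hcdef, dif_pos hi]
              exact congrArg a (Fin.ext rfl)
            rw [hcj]
            exact mem_zmultiples _
          · rw [Pi.single_eq_of_ne hj]
            exact zero_mem _
        exact fun j _ => hmem j
      · funext j
        rw [hσapp, Finset.sum_eq_single (Fin.castLE hℓ i)]
        · rw [Pi.single_eq_same, hcolω]
        · intro b _ hne
          rw [Pi.single_eq_of_ne hne, zero_mul]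
        · intro h; exact absurd (Finset.mem_univ _) h
  have hMapE : AddSubgroup.map (eσ : (Fin (2 * m) → ZMod (p ^ n)) →+ (Fin (2 * m) → ZMod (p ^ n))) M₀ = M := by
    have : (eσ : (Fin (2 * m) → ZMod (p ^ n)) →+ (Fin (2 * m) → ZMod (p ^ n))) = σ := by ext x; rfl
    rw [this, hMap]
  -- the isomorphisms
  have e3 : (M₀ : Type _) ≃+ M :=
    (eσ.addSubgroupMap M₀).trans (AddEquiv.addSubgroupCongr hMapE)
  have eQ : ((Fin (2 * m) → ZMod (p ^ n)) ⧸ M) ≃+ ((Fin (2 * m) → ZMod (p ^ n)) ⧸ M₀) := (QuotientAddGroup.congr M₀ M eσ hMapE).symm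
  -- master counting identity
  have masterE : ∀ t : ℕ, ∑ j, ((n - c j) - t) = ∑ j, (c j - t) := by
    intro t
    -- LHS: card of p^t-image of M
    have h1 : Nat.card (((p ^ t : ℕ) • ·) '' (Set.univ : Set M))
        = ∏ j, p ^ (n - min n (t + c j)) := by
      rw [aux_card_smul_image e3.symm (p ^ t), aux_card_smul_subtype M₀ (p ^ t)]
      have hset : ((p ^ t : ℕ) • ·) '' (M₀ : Set (Fin (2 * m) → ZMod (p ^ n)))
          = ↑(AddSubgroup.pi Set.univ (fun j => zmultiples ((p : ZMod (p ^ n)) ^ (t + c j)))) := by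
        ext x
        simp only [Set.mem_image, SetLike.mem_coe, AddSubgroup.mem_pi, Set.mem_univ,
          true_implies]
        constructor
        · rintro ⟨v, hv, rfl⟩ j
          obtain ⟨k, hk⟩ := AddSubgroup.mem_zmultiples_iff.1 (hv j (Set.mem_univ j))
          refine AddSubgroup.mem_zmultiples_iff.2 ⟨k, ?_⟩
          have : ((p ^ t : ℕ) • v) j = (p ^ t : ℕ) • v j := rfl
          rw [this, ← hk, hsm]
        · intro hx
          choose k hk using fun j => AddSubgroup.mem_zmultiples_iff.1 (hx j)
          refine ⟨fun j => k j • (p : ZMod (p ^ n)) ^ (c j), fun j _ => ⟨k j, rfl⟩, ?_⟩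
          funext j
          have : ((p ^ t : ℕ) • fun j => k j • (p : ZMod (p ^ n)) ^ (c j)) j
              = (p ^ t : ℕ) • (k j • (p : ZMod (p ^ n)) ^ (c j)) := rfl
          rw [this, hsm, hk]
      rw [hset, SetLike.coe_sort_coe, aux_card_pi]
      exact Finset.prod_congr rfl fun j _ => by
        rw [aux_card_zmultiples_pow hp n (t + c j)]
    -- RHS : card of p^t-image of (Fin (2 * m) → ZMod (p ^ n)) ⧸ M
    set T : AddSubgroup (Fin (2 * m) → ZMod (p ^ n)) := AddSubgroup.pi Set.univ (fun _ => zmultiples ((p : ZMod (p ^ n)) ^ t))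
      with hTdef
    have h2 : Nat.card (((p ^ t : ℕ) • ·) '' (Set.univ : Set ((Fin (2 * m) → ZMod (p ^ n)) ⧸ M)))
          * ∏ j, p ^ (n - min n (c j))
        = ∏ j, p ^ (n - min n (min t (c j))) := by
      rw [aux_card_smul_image eQ (p ^ t)]
      have hq : ((p ^ t : ℕ) • ·) '' (Set.univ : Set ((Fin (2 * m) → ZMod (p ^ n)) ⧸ M₀))
          = QuotientAddGroup.mk '' (((p ^ t : ℕ) • ·) '' (Set.univ : Set (Fin (2 * m) → ZMod (p ^ n)))) := by
        ext q
        simp only [Set.mem_image, Set.mem_univ, true_and]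
        constructor
        · rintro ⟨q', rfl⟩
          obtain ⟨v, rfl⟩ := QuotientAddGroup.mk_surjective q'
          exact ⟨(p ^ t : ℕ) • v, ⟨v, rfl⟩,
            (map_nsmul (QuotientAddGroup.mk' M₀) (p ^ t) v).symm ▸ rfl⟩
        · rintro ⟨x, ⟨v, rfl⟩, rfl⟩
          exact ⟨QuotientAddGroup.mk v,
            (map_nsmul (QuotientAddGroup.mk' M₀) (p ^ t) v).symm⟩
      have hV : ((p ^ t : ℕ) • ·) '' (Set.univ : Set (Fin (2 * m) → ZMod (p ^ n))) = (T : Set (Fin (2 * m) → ZMod (p ^ n))) := by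
        ext x
        simp only [Set.mem_image, Set.mem_univ, true_and, SetLike.mem_coe, hTdef,
          AddSubgroup.mem_pi, true_implies]
        constructor
        · rintro ⟨v, rfl⟩ j
          have : ((p ^ t : ℕ) • v) j = (p ^ t : ℕ) • v j := rfl
          rw [this, nsmul_eq_mul, Nat.cast_pow, mul_comm]
          exact aux_mul_mem_zmultiples _ _
        · intro hx
          choose k hk using fun j => AddSubgroup.mem_zmultiples_iff.1 (hx j)
          refine ⟨fun j => k j • (1 : ZMod (p ^ n)), ?_⟩
          funext j
          have : ((p ^ t : ℕ) • fun j => k j • (1 : ZMod (p ^ n))) j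
              = (p ^ t : ℕ) • (k j • ((p : ZMod (p ^ n)) ^ 0)) := by rw [pow_zero]; rfl
          rw [this, hsm, Nat.add_zero, hk]
      rw [hq, hV, aux_mk_image_sup M₀ T]
      have hsup : T ⊔ M₀
          = AddSubgroup.pi Set.univ (fun j => zmultiples ((p : ZMod (p ^ n)) ^ (min t (c j)))) := by
        rw [hTdef, hM₀def, aux_pi_sup]
        congr 1
        funext j
        exact aux_sup_zmultiples (p : ZMod (p ^ n)) t (c j)
      have hM₀card : Nat.card M₀ = ∏ j, p ^ (n - min n (c j)) := by
        rw [hM₀def, aux_card_pi]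
        exact Finset.prod_congr rfl fun j _ => aux_card_zmultiples_pow hp n (c j)
      have hsupcard : Nat.card (T ⊔ M₀ : AddSubgroup (Fin (2 * m) → ZMod (p ^ n)))
          = ∏ j, p ^ (n - min n (min t (c j))) := by
        rw [hsup, aux_card_pi]
        exact Finset.prod_congr rfl fun j _ => aux_card_zmultiples_pow hp n (min t (c j))
      rw [← hM₀card, ← hsupcard]
      exact aux_card_mk_image M₀ (T ⊔ M₀) le_sup_right
    have h0 : Nat.card (((p ^ t : ℕ) • ·) '' (Set.univ : Set M))
        = Nat.card (((p ^ t : ℕ) • ·) '' (Set.univ : Set ((Fin (2 * m) → ZMod (p ^ n)) ⧸ M))) :=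
      aux_card_smul_image hiso.some (p ^ t)
    have hmain : (∏ j, p ^ (n - min n (t + c j))) * ∏ j, p ^ (n - min n (c j))
        = ∏ j, p ^ (n - min n (min t (c j))) := by
      rw [← h1, h0, h2]
    rw [Finset.prod_pow_eq_pow_sum, Finset.prod_pow_eq_pow_sum, Finset.prod_pow_eq_pow_sum,
      ← pow_add] at hmain
    have hexp := Nat.pow_right_injective hp.two_le hmain
    have e1 : ∀ j : Fin (2 * m), n - min n (t + c j) = (n - c j) - t := by
      intro j; have := hcn j; omega
    have e2 : ∀ j : Fin (2 * m), n - min n (min t (c j)) = (c j - t) + (n - min n (c j)) := by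
      intro j; have := hcn j; omega
    rw [Finset.sum_congr rfl (fun j _ => e1 j), Finset.sum_congr rfl (fun j _ => e2 j),
      Finset.sum_add_distrib] at hexp
    omega
  -- threshold counts agree
  have hN : ∀ t : ℕ, (univ.filter (fun j : Fin (2 * m) => t < n - c j)).card
      = (univ.filter (fun j : Fin (2 * m) => t < c j)).card := by
    intro t
    have hsplit : ∀ f : Fin (2 * m) → ℕ, ∑ j, (f j - t)
        = (∑ j, (f j - (t + 1))) + (univ.filter (fun j => t < f j)).card := by
      intro f
      rw [Finset.card_filter, ← Finset.sum_add_distrib]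
      refine Finset.sum_congr rfl fun j _ => ?_
      by_cases h : t < f j <;> simp [h] <;> omega
    have h1 := masterE t
    have h2 := masterE (t + 1)
    have l1 := hsplit (fun j => n - c j)
    have l2 := hsplit (fun j => c j)
    omega
  -- exact counts agree
  have hEq : ∀ t : ℕ, (univ.filter (fun j : Fin (2 * m) => c j = t + 1)).card
      = (univ.filter (fun j : Fin (2 * m) => n - c j = t + 1)).card := by
    intro t
    have hsplit2 : ∀ f : Fin (2 * m) → ℕ,
        (univ.filter (fun j : Fin (2 * m) => t < f j)).card
        = (univ.filter (fun j => f j = t + 1)).card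
          + (univ.filter (fun j => t + 1 < f j)).card := by
      intro f
      rw [← Finset.card_union_of_disjoint, ← Finset.filter_or]
      · exact congrArg Finset.card (Finset.filter_congr fun j _ => by constructor <;> omega)
      · rw [Finset.disjoint_left]
        intro j hj1 hj2
        simp only [Finset.mem_filter] at hj1 hj2
        omega
    have h1 := hN t
    have h2 := hN (t + 1)
    have l1 := hsplit2 (fun j => c j)
    have l2 := hsplit2 (fun j => n - c j)
    omega
  -- transfer counts from c to a
  have htrans : ∀ v : ℕ, v < n →
      (univ.filter (fun j : Fin (2 * m) => c j = v)).card
        = (univ.filter (fun i : Fin ℓ => a i = v)).card := by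
    intro v hv
    refine Finset.card_bij' (fun j hj => (⟨(j : ℕ), ?_⟩ : Fin ℓ))
      (fun i _ => Fin.castLE hℓ i) ?_ ?_ ?_ ?_
    · rw [Finset.mem_filter] at hj
      by_contra hcon
      have : c j = n := by simp only [hcdef, dif_neg hcon]
      omega
    · intro j hj
      rw [Finset.mem_filter] at hj ⊢
      refine ⟨Finset.mem_univ _, ?_⟩
      have := hj.2
      simp only [hcdef] at this
      rcases (em ((j : ℕ) < ℓ)).symm with h | h
      · rw [dif_neg h] at this; omega
      · rw [dif_pos h] at this; exact this
    · intro i hi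
      rw [Finset.mem_filter] at hi ⊢
      refine ⟨Finset.mem_univ _, ?_⟩
      have hlt : ((Fin.castLE hℓ i : Fin (2 * m)) : ℕ) < ℓ := i.2
      simp only [hcdef, dif_pos hlt]
      have : (⟨((Fin.castLE hℓ i : Fin (2 * m)) : ℕ), hlt⟩ : Fin ℓ) = i := Fin.ext rfl
      rw [this]
      exact hi.2
    · intro j _; exact Fin.ext rfl
    · intro i _; exact Fin.ext rfl
  -- card of the pivot-free columns
  have hℓcard : (univ.filter (fun j : Fin (2 * m) => (j : ℕ) < ℓ)).card = ℓ := by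
    have h := Finset.card_bij' (s := univ.filter (fun j : Fin (2 * m) => (j : ℕ) < ℓ))
      (t := (univ : Finset (Fin ℓ)))
      (fun j hj => (⟨(j : ℕ), (Finset.mem_filter.1 hj).2⟩ : Fin ℓ))
      (fun i _ => Fin.castLE hℓ i)
      (fun j hj => Finset.mem_univ _)
      (fun i _ => Finset.mem_filter.2 ⟨Finset.mem_univ _, i.2⟩)
      (fun j hj => Fin.ext rfl) (fun i hi => Fin.ext rfl)
    rw [h, Finset.card_univ, Fintype.card_fin]
  have hcn_count : (univ.filter (fun j : Fin (2 * m) => c j = n)).card = 2 * m - ℓ := by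
    have hcongr : (univ.filter (fun j : Fin (2 * m) => c j = n))
        = (univ.filter (fun j : Fin (2 * m) => ¬ ((j : ℕ) < ℓ))) := by
      refine Finset.filter_congr fun j _ => ?_
      simp only [hcdef]
      constructor
      · intro hcj hlt
        rw [dif_pos hlt] at hcj
        have := han ⟨(j : ℕ), hlt⟩
        omega
      · intro hnl
        rw [dif_neg hnl]
    rw [hcongr]
    have := Finset.card_filter_add_card_filter_not
      (s := (univ : Finset (Fin (2 * m)))) (p := fun j : Fin (2 * m) => (j : ℕ) < ℓ)
    rw [Finset.card_univ, Fintype.card_fin] at this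
    omega
  -- conclusion part 2
  have part2 : 2 * m = ℓ + (univ.filter (fun i : Fin ℓ => a i = 0)).card := by
    have h1 : (univ.filter (fun j : Fin (2 * m) => c j = n)).card
        = (univ.filter (fun j : Fin (2 * m) => n - c j = n)).card := by
      have := hEq (n - 1)
      rwa [Nat.sub_add_cancel hn] at this
    have h2 : (univ.filter (fun j : Fin (2 * m) => n - c j = n))
        = (univ.filter (fun j : Fin (2 * m) => c j = 0)) := by
      refine Finset.filter_congr fun j _ => ?_
      have := hcn j
      constructor <;> omega
    rw [h2, htrans 0 hn, hcn_count] at h1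
    omega
  refine ⟨?_, part2⟩
  intro j hj
  rcases eq_or_ne j 0 with rfl | hj0
  · simp [Nat.mod_self]; congr
  rcases eq_or_ne j n with rfl | hjn
  · simp [Nat.mod_self]
  have hj1 : 1 ≤ j := Nat.one_le_iff_ne_zero.2 hj0
  have hjlt : j < n := lt_of_le_of_ne hj hjn
  have hjm : j % n = j := Nat.mod_eq_of_lt hjlt
  have hnjm : (n - j) % n = n - j := Nat.mod_eq_of_lt (by omega)
  rw [hjm, hnjm]
  have h1 : (univ.filter (fun j' : Fin (2 * m) => c j' = j)).card
      = (univ.filter (fun j' : Fin (2 * m) => n - c j' = j)).card := by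
    have := hEq (j - 1)
    rwa [Nat.sub_add_cancel hj1] at this
  have h2 : (univ.filter (fun j' : Fin (2 * m) => n - c j' = j))
      = (univ.filter (fun j' : Fin (2 * m) => c j' = n - j)) := by
    refine Finset.filter_congr fun j' _ => ?_
    have := hcn j'
    constructor <;> omega
  rw [h2, htrans j hjlt, htrans (n - j) (by omega)] at h1
  exact h1
end

section
/- Let q be an odd positive integer and let β₀, β₁, …, β_{q-1} be nonnegative rational numbers such that β₀ > 0 and β₁ + β₂ + ⋯ + β_{q-1} ≤ β₀. Then for every complex number ζ with ζ^q = 1, the sum β₀ + β₁ζ + β₂ζ² + ⋯ + β_{q-1}ζ^{q-1} is nonzero. Consequently, the polynomial β₀ + β₁t + ⋯ + β_{q-1}t^{q-1} has no root among the q-th roots of unity, and hence generates the unit ideal in ℚ[t]/(t^q − 1). -/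
/-- Key step of the polynomial argument: for `q` odd and nonnegative rationals
`β_0 > 0`, `β_1, …, β_{q-1}` with `β_1 + ⋯ + β_{q-1} ≤ β_0`, the value
`β_0 + β_1 ζ + ⋯ + β_{q-1} ζ^{q-1}` is nonzero for every `q`-th root of unity `ζ`. -/
theorem stmt_6 (q : ℕ) (hq : Odd q) (hq0 : 0 < q) (β : ℕ → ℚ)
    (hnn : ∀ i < q, 0 ≤ β i) (h0 : 0 < β 0)
    (hsum : ∑ i ∈ Finset.Ico 1 q, β i ≤ β 0) :
    ∀ ζ : ℂ, ζ ^ q = 1 → ∑ i ∈ Finset.range q, (β i : ℂ) * ζ ^ i ≠ 0 := by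
  intro ζ hζ hS
  have habs : ‖ζ‖ = 1 := by
    have h1 : ‖ζ‖ ^ q = 1 := by rw [← norm_pow, hζ, norm_one]
    rcases lt_trichotomy (‖ζ‖) 1 with h | h | h
    · have := pow_lt_one₀ (norm_nonneg ζ) h hq0.ne'
      linarith
    · exact h
    · have := one_lt_pow₀ h hq0.ne'
      linarith
  have habsi : ∀ i : ℕ, ‖ζ ^ i‖ = 1 := by
    intro i; rw [norm_pow, habs, one_pow]
  have hrege : ∀ i : ℕ, -1 ≤ (ζ ^ i).re := by
    intro i
    have := Complex.abs_re_le_norm (ζ ^ i)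
    rw [habsi i] at this
    linarith [(abs_le.mp this).1]
  -- real part of the sum
  have hre : ((β 0 : ℝ)) + ∑ i ∈ Finset.Ico 1 q, (β i : ℝ) * (ζ ^ i).re = 0 := by
    have h := congrArg Complex.re hS
    rw [Complex.re_sum] at h
    simp only [Complex.mul_re, Complex.ratCast_re, Complex.ratCast_im, zero_mul, sub_zero,
      Complex.zero_re] at h
    rw [Finset.range_eq_Ico, Finset.sum_eq_sum_Ico_succ_bot hq0] at h
    simpa using h
  -- each term of ∑ (β i * ((ζ^i).re + 1)) is nonneg, and the sum is ≤ 0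
  have hterm : ∀ i ∈ Finset.Ico 1 q, (0:ℝ) ≤ (β i : ℝ) * ((ζ ^ i).re + 1) := by
    intro i hi
    rw [Finset.mem_Ico] at hi
    have h1 : (0:ℝ) ≤ (β i : ℝ) := by exact_mod_cast hnn i hi.2
    have h2 := hrege i
    nlinarith
  have hsumR : ∑ i ∈ Finset.Ico 1 q, (β i : ℝ) ≤ (β 0 : ℝ) := by
    exact_mod_cast hsum
  have hzero : ∑ i ∈ Finset.Ico 1 q, (β i : ℝ) * ((ζ ^ i).re + 1) = 0 := by
    have hle : ∑ i ∈ Finset.Ico 1 q, (β i : ℝ) * ((ζ ^ i).re + 1) ≤ 0 := by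
      have : ∑ i ∈ Finset.Ico 1 q, (β i : ℝ) * ((ζ ^ i).re + 1)
          = (∑ i ∈ Finset.Ico 1 q, (β i : ℝ) * (ζ ^ i).re)
            + ∑ i ∈ Finset.Ico 1 q, (β i : ℝ) := by
        rw [← Finset.sum_add_distrib]; apply Finset.sum_congr rfl; intro i _; ring
      rw [this]; linarith
    exact le_antisymm hle (Finset.sum_nonneg hterm)
  have hall := (Finset.sum_eq_zero_iff_of_nonneg hterm).mp hzero
  -- also need ∑ β i = β 0 > 0, so some β i > 0
  have hex : ∃ i ∈ Finset.Ico 1 q, (0:ℝ) < (β i : ℝ) := by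
    by_contra hcon
    push_neg at hcon
    have hz : ∑ i ∈ Finset.Ico 1 q, (β i : ℝ) = 0 := by
      apply Finset.sum_eq_zero
      intro i hi
      have h1 : (0:ℝ) ≤ (β i : ℝ) := by
        rw [Finset.mem_Ico] at hi; exact_mod_cast hnn i hi.2
      linarith [hcon i hi]
    have hz2 : ∑ i ∈ Finset.Ico 1 q, (β i : ℝ) * (ζ ^ i).re = 0 := by
      apply Finset.sum_eq_zero
      intro i hi
      have h1 : (0:ℝ) ≤ (β i : ℝ) := by
        rw [Finset.mem_Ico] at hi; exact_mod_cast hnn i hi.2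
      have : (β i : ℝ) = 0 := le_antisymm (hcon i hi) h1
      rw [this, zero_mul]
    rw [hz2] at hre
    have : (0:ℝ) < (β 0 : ℝ) := by exact_mod_cast h0
    linarith
  obtain ⟨i, hi, hβi⟩ := hex
  have hrei : (ζ ^ i).re = -1 := by
    have := hall i hi
    have := mul_eq_zero.mp this
    rcases this with h | h
    · linarith
    · linarith
  -- then ζ^i = -1
  have himz : (ζ ^ i).im = 0 := by
    have h1 := Complex.sq_norm (ζ ^ i)
    rw [habsi i, Complex.normSq_apply, hrei] at h1
    nlinarith
  have hzi : ζ ^ i = -1 := by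
    apply Complex.ext
    · simpa using hrei
    · simpa using himz
  -- contradiction with odd q
  have : ((-1 : ℂ)) ^ q = 1 := by
    rw [← hzi, ← pow_mul, mul_comm, pow_mul, hζ, one_pow]
  rw [hq.neg_one_pow] at this
  norm_num at this
end

section
/- Let G be a finite abelian group and λ : G × G → ℚ/ℤ a non-degenerate symmetric bilinear pairing. If M is a subgroup of G with M = M^⊥ := {x ∈ G : λ(x,y) = 0 for all y ∈ M}, then the quotient group G/M is isomorphic to M. -/
open Function

private noncomputable def zmodChar (n : ℕ) [NeZero n] : ZMod n →+ AddCircle (1 : ℚ) :=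
  ZMod.lift n ⟨CharacterModule.int.divByNat n, CharacterModule.int.divByNat_self n⟩

private lemma zmodChar_intCast (n : ℕ) [NeZero n] (m : ℤ) :
    zmodChar n ((m : ZMod n)) = (((m : ℚ) * (n : ℚ)⁻¹ : ℚ) : AddCircle (1 : ℚ)) := by
  rw [zmodChar, ZMod.lift_coe]
  show (m • (((n : ℚ)⁻¹ : ℚ) : AddCircle (1 : ℚ))) = _
  rw [← AddCircle.coe_zsmul]
  congr 1

private noncomputable def zmodCharMap (n : ℕ) [NeZero n] :
    ZMod n →+ (ZMod n →+ AddCircle (1 : ℚ)) :=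
  ZMod.lift n ⟨zmultiplesHom _ (zmodChar n), by
    ext y
    show (n : ℤ) • zmodChar n y = 0
    rw [← map_zsmul]
    have : ((n : ℤ) • y : ZMod n) = 0 := by
      rw [zsmul_eq_mul]
      push_cast
      simp [ZMod.natCast_self]
    rw [this, map_zero]⟩

private lemma zmodCharMap_intCast (n : ℕ) [NeZero n] (m : ℤ) :
    zmodCharMap n ((m : ZMod n)) = m • zmodChar n := by
  rw [zmodCharMap, ZMod.lift_coe]; rfl

private lemma zmodCharMap_bijective (n : ℕ) [NeZero n] : Bijective (zmodCharMap n) := by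
  have hn : (n : ℚ) ≠ 0 := Nat.cast_ne_zero.mpr (NeZero.ne n)
  constructor
  · rw [injective_iff_map_eq_zero]
    intro x hx
    obtain ⟨m, rfl⟩ := ZMod.intCast_surjective x
    rw [zmodCharMap_intCast] at hx
    have h1 : m • zmodChar n ((1 : ℤ) : ZMod n) = 0 := DFunLike.congr_fun hx ((1 : ℤ) : ZMod n)
    rw [← map_zsmul] at h1
    have e1 : (m • (((1 : ℤ) : ZMod n)) : ZMod n) = ((m : ZMod n)) := by
      rw [zsmul_eq_mul]; push_cast; ring
    rw [e1, zmodChar_intCast, AddCircle.coe_eq_zero_iff] at h1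
    obtain ⟨k, hk⟩ := h1
    rw [ZMod.intCast_zmod_eq_zero_iff_dvd]
    refine ⟨k, ?_⟩
    have hk' : (k : ℚ) * 1 = (m : ℚ) * (n : ℚ)⁻¹ := by
      rw [← hk, zsmul_eq_mul]
    have : (m : ℚ) = n * k := by
      field_simp at hk'
      linarith
    exact_mod_cast this
  · intro c
    obtain ⟨q, hq⟩ := QuotientAddGroup.mk_surjective (c ((1 : ℤ) : ZMod n))
    have h0 : (n : ℤ) • c ((1 : ℤ) : ZMod n) = 0 := by
      rw [← map_zsmul]
      have : (((n : ℤ) • ((1 : ℤ) : ZMod n)) : ZMod n) = 0 := by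
        rw [zsmul_eq_mul]; push_cast; simp [ZMod.natCast_self]
      rw [this, map_zero]
    rw [← hq, ← AddCircle.coe_zsmul, AddCircle.coe_eq_zero_iff] at h0
    obtain ⟨k, hk⟩ := h0
    have hq' : q = (k : ℚ) * (n : ℚ)⁻¹ := by
      have h2 : (k : ℚ) = (n : ℚ) * q := by
        have h3 := hk
        rw [zsmul_eq_mul, zsmul_eq_mul] at h3
        push_cast at h3
        linarith
      field_simp
      linarith
    refine ⟨((k : ZMod n)), ?_⟩
    rw [zmodCharMap_intCast]
    ext x
    obtain ⟨m, rfl⟩ := ZMod.intCast_surjective x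
    have hc : c ((m : ZMod n)) = m • c ((1 : ℤ) : ZMod n) := by
      rw [← map_zsmul]
      congr 1
      rw [zsmul_eq_mul]
      push_cast
      ring
    show k • zmodChar n ((m : ZMod n)) = c ((m : ZMod n))
    rw [← map_zsmul]
    have e2 : (k • ((m : ZMod n)) : ZMod n) = (((k * m : ℤ)) : ZMod n) := by
      rw [zsmul_eq_mul]; push_cast; ring
    rw [e2, zmodChar_intCast, hc, ← hq, ← AddCircle.coe_zsmul]
    congr 1
    rw [zsmul_eq_mul, hq']
    push_cast
    ring

/-- A finite abelian group is isomorphic to its ℚ/ℤ-character group. -/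
private lemma finDualEquiv (A : Type*) [AddCommGroup A] [Finite A] :
    Nonempty (A ≃+ (A →+ AddCircle (1 : ℚ))) := by
  classical
  obtain ⟨ι, _, n, hn, ⟨e⟩⟩ := AddCommGroup.equiv_directSum_zmod_of_finite' A
  have : ∀ i, NeZero (n i) := fun i => ⟨by have := hn i; omega⟩
  let e1 : A ≃+ ∀ i, ZMod (n i) := e.trans (DirectSum.addEquivProd _)
  let e2 : (A →+ AddCircle (1 : ℚ)) ≃+ ((∀ i, ZMod (n i)) →+ AddCircle (1 : ℚ)) :=
    AddEquiv.addMonoidHomCongrLeft e1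
  let e3 := Pi.addMonoidHomAddEquiv (fun i => ZMod (n i)) (AddCircle (1 : ℚ))
  let e4 : (∀ i, ZMod (n i)) ≃+ (∀ i, ZMod (n i) →+ AddCircle (1 : ℚ)) :=
    AddEquiv.piCongrRight (fun i => AddEquiv.ofBijective _ (zmodCharMap_bijective (n i)))
  exact ⟨e1.trans <| e4.trans <| e3.symm.trans e2.symm⟩


/-- If `M` is a metabolizer (`M = M^⊥`) for a non-degenerate symmetric bilinear
pairing `λ : G × G → ℚ/ℤ` on a finite abelian group `G`, then `G/M ≅ M`. -/
theorem stmt_9 (G : Type*) [AddCommGroup G] [Fintype G]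
    (lam : G → G → AddCircle (1 : ℚ))
    (hbl : ∀ x y z : G, lam (x + y) z = lam x z + lam y z)
    (hbr : ∀ x y z : G, lam x (y + z) = lam x y + lam x z)
    (hsymm : ∀ x y : G, lam x y = lam y x)
    (hnd : ∀ x : G, (∀ y : G, lam x y = 0) → x = 0)
    (M : AddSubgroup G)
    (hM : ∀ x : G, x ∈ M ↔ ∀ y ∈ M, lam x y = 0) :
    Nonempty ((G ⧸ M) ≃+ M) := by
  classical
  have hz : ∀ x : G, lam x 0 = 0 := fun x => by
    have := hbr x 0 0
    rw [add_zero] at this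
    exact (left_eq_add.mp this)
  -- the pairing as a hom into the character group
  let g : G →+ (G →+ AddCircle (1 : ℚ)) :=
    AddMonoidHom.mk' (fun x => AddMonoidHom.mk' (lam x) (fun a b => hbr x a b))
      (fun a b => AddMonoidHom.ext fun y => hbl a b y)
  -- restriction to M
  let f : G →+ (↥M →+ AddCircle (1 : ℚ)) :=
    AddMonoidHom.mk' (fun x => AddMonoidHom.mk' (fun m => lam x m)
        (fun a b => hbr x a b))
      (fun a b => AddMonoidHom.ext fun y => hbl a b y)
  obtain ⟨eG⟩ := finDualEquiv G
  obtain ⟨eM⟩ := finDualEquiv ↥M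
  have hFin : Finite (G →+ AddCircle (1 : ℚ)) := Finite.of_equiv G eG.toEquiv
  have hg_inj : Injective g := by
    rw [injective_iff_map_eq_zero]
    intro x hx
    exact hnd x fun y => by
      have := DFunLike.congr_fun hx y; exact this
  have hg_surj : Surjective g := by
    have := (Nat.bijective_iff_injective_and_card g).mpr
      ⟨hg_inj, Nat.card_congr eG.toEquiv⟩
    exact this.2
  -- the restriction map on characters is surjective
  have hres : Surjective (CharacterModule.dual (R := ℤ)
      (AddSubgroup.toIntSubmodule M).subtype) :=
    CharacterModule.dual_surjective_of_injective _ (Submodule.injective_subtype _)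
  have hf_surj : Surjective f := by
    intro c
    obtain ⟨c', hc'⟩ := hres c
    obtain ⟨x, hx⟩ := hg_surj c'
    refine ⟨x, ?_⟩
    ext m
    have h1 : c m = c' (m : G) := by rw [← hc']; rfl
    rw [h1, ← hx]
    rfl
  have hker : f.ker = M := by
    ext x
    rw [AddMonoidHom.mem_ker, hM x]
    constructor
    · intro h y hy
      exact DFunLike.congr_fun h ⟨y, hy⟩
    · intro h
      ext m
      exact h m m.2
  exact ⟨((QuotientAddGroup.quotientAddEquivOfEq hker.symm).trans
    (QuotientAddGroup.quotientKerEquivOfSurjective f hf_surj)).trans eM.symm⟩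
end

section
/- Let G̃ be a finite abelian group with a non-degenerate symmetric bilinear pairing λ : G̃ × G̃ → ℚ/ℤ, and let M̃ be a metabolizer for (G̃, λ). Fix a prime p, let G be the p-primary part (p-Sylow subgroup) of G̃ and M the p-primary part of M̃. Then M is a metabolizer for (G, λ|_{G×G}); that is, the restriction of λ to G × G is non-degenerate and M = {x ∈ G : λ(x,y) = 0 for all y ∈ M}. -/
/-- The `p`-primary part `M` of a metabolizer `M̃` for a non-degenerate symmetric
bilinear pairing `λ` on a finite abelian group `G̃` is a metabolizer for the
restriction of `λ` to the `p`-primary part `G` of `G̃`: the restriction of `λ` to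
`G × G` is non-degenerate, and `M = {x ∈ G : λ(x,y) = 0 for all y ∈ M}`. -/
theorem stmt_10 (G : Type*) [AddCommGroup G] [Fintype G]
    (lam : G → G → AddCircle (1 : ℚ))
    (hbl : ∀ x y z : G, lam (x + y) z = lam x z + lam y z)
    (hbr : ∀ x y z : G, lam x (y + z) = lam x y + lam x z)
    (hsymm : ∀ x y : G, lam x y = lam y x)
    (hnd : ∀ x : G, (∀ y : G, lam x y = 0) → x = 0)
    (M : AddSubgroup G)
    (hM : ∀ x : G, x ∈ M ↔ ∀ y ∈ M, lam x y = 0)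
    (p : ℕ) [Fact p.Prime] :
    (∀ x ∈ AddCommGroup.primaryComponent G p,
      (∀ y ∈ AddCommGroup.primaryComponent G p, lam x y = 0) → x = 0) ∧
    (∀ x ∈ AddCommGroup.primaryComponent G p,
      (x ∈ M ↔ ∀ y ∈ AddCommGroup.primaryComponent G p, y ∈ M → lam x y = 0)) := by
  have hp : p.Prime := Fact.out
  -- basic linearity facts
  have h0r : ∀ x : G, lam x 0 = 0 := by
    intro x
    have := hbr x 0 0
    simpa using this.symm
  have h0l : ∀ x : G, lam 0 x = 0 := fun x => (hsymm 0 x).trans (h0r x)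
  have hnr : ∀ (n : ℕ) (x y : G), lam x (n • y) = n • lam x y := by
    intro n x y
    induction n with
    | zero => simpa using h0r x
    | succ k ih => rw [succ_nsmul, succ_nsmul, hbr, ih]
  have hzr : ∀ (n : ℤ) (x y : G), lam x (n • y) = n • lam x y := by
    have hneg : ∀ x y : G, lam x (-y) = -lam x y := by
      intro x y
      have := hbr x y (-y)
      rw [add_neg_cancel, h0r] at this
      exact eq_neg_of_add_eq_zero_right this.symm
    intro n x y
    cases n with
    | ofNat k => simpa using hnr k x y
    | negSucc k =>
        rw [negSucc_zsmul, negSucc_zsmul, hneg, hnr]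
  have hzl : ∀ (n : ℤ) (x y : G), lam (n • x) y = n • lam x y := by
    intro n x y; rw [hsymm, hzr, hsymm]
  -- coprime killing lemma
  have hkill : ∀ (a b : ℤ) (z : AddCircle (1 : ℚ)), IsCoprime a b →
      a • z = 0 → b • z = 0 → z = 0 := by
    intro a b z ⟨u, v, huv⟩ ha hb
    calc z = (u * a + v * b) • z := by rw [huv, one_zsmul]
    _ = u • (a • z) + v • (b • z) := by rw [add_zsmul, mul_zsmul, mul_zsmul]
    _ = 0 := by rw [ha, hb, smul_zero, smul_zero, add_zero]
  set k := (Fintype.card G).factorization p with hk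
  set m := Fintype.card G / p ^ k with hmdef
  have hcard : Fintype.card G ≠ 0 := Fintype.card_ne_zero
  have hco : Nat.Coprime p m := Nat.coprime_ordCompl hp hcard
  have hcardeq : p ^ k * m = Fintype.card G := Nat.ordProj_mul_ordCompl_eq_self _ p
  -- orthogonality: primary elt vs m-torsion elt
  have horth : ∀ x y : G, x ∈ AddCommGroup.primaryComponent G p → (m : ℤ) • y = 0 →
      lam x y = 0 := by
    intro x y hx hy
    obtain ⟨j, hj⟩ := hx
    have hxord : ((p ^ j : ℕ) : ℤ) • x = 0 := by
      rw [natCast_zsmul, hj]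
    have hcop : IsCoprime ((p ^ j : ℕ) : ℤ) (m : ℤ) := by
      rw [Int.isCoprime_iff_gcd_eq_one]
      exact_mod_cast (Nat.Coprime.pow_left j hco)
    refine hkill _ _ _ hcop ?_ ?_
    · rw [← hzl, hxord, h0l]
    · rw [← hzr, hy, h0r]
  -- decomposition
  have hdec : ∀ g : G, ∃ c d : ℤ, g = c • g + d • g ∧
      c • g ∈ AddCommGroup.primaryComponent G p ∧ (m : ℤ) • (d • g) = 0 := by
    intro g
    have hcop : IsCoprime ((p ^ k : ℕ) : ℤ) (m : ℤ) := by
      rw [Int.isCoprime_iff_gcd_eq_one]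
      exact_mod_cast (Nat.Coprime.pow_left k hco)
    obtain ⟨u, v, huv⟩ := hcop
    refine ⟨v * m, u * (p ^ k : ℕ), ?_, ?_, ?_⟩
    · rw [← add_zsmul]
      rw [show v * (m : ℤ) + u * ((p ^ k : ℕ) : ℤ) = u * ((p ^ k : ℕ) : ℤ) + v * m by ring,
        huv, one_zsmul]
    · have hkz : ((p ^ k : ℕ) : ℤ) • ((v * m : ℤ) • g) = 0 := by
        rw [smul_smul, show ((p ^ k : ℕ) : ℤ) * (v * m) = v * ((p ^ k * m : ℕ) : ℤ) by
          push_cast; ring, ← smul_smul, natCast_zsmul, hcardeq]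
        simp
      have : addOrderOf ((v * m : ℤ) • g) ∣ p ^ k := by
        apply addOrderOf_dvd_of_nsmul_eq_zero
        rw [← natCast_zsmul]; exact hkz
      obtain ⟨j, _, hj⟩ := (Nat.dvd_prime_pow hp).mp this
      exact ⟨j, by rw [← hj, addOrderOf_nsmul_eq_zero]⟩
    · rw [smul_smul, show (m : ℤ) * (u * ((p ^ k : ℕ) : ℤ)) = u * ((p ^ k * m : ℕ) : ℤ) by
        push_cast; ring, ← smul_smul, natCast_zsmul, hcardeq]
      simp
  constructor
  · intro x hx hxy
    apply hnd
    intro y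
    obtain ⟨c, d, hy, hc, hd⟩ := hdec y
    rw [hy, hbr, hxy _ hc, horth x _ hx hd, add_zero]
  · intro x hx
    constructor
    · intro hxM y _ hyM
      exact (hM x).mp hxM y hyM
    · intro h
      rw [hM]
      intro y hyM
      obtain ⟨c, d, hy, hc, hd⟩ := hdec y
      rw [hy, hbr, h _ hc (AddSubgroup.zsmul_mem M hyM c), horth x _ hx hd, add_zero]
end
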